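/- arXiv:2211.10942 — 15 statements merged into one kernel-verified Lean document; each statement's English description precedes it below -/
import Mathlib

section
/- Let (x^k), (y^k) be a DCA sequence for minimizing f = g − h over C with x^0 ∈ C. Then the sequence (f(x^k)) is non-increasing, i.e., f(x^{k+1}) ≤ f(x^k) for every k ≥ 0; consequently, if f is bounded below on C, then the sequence (f(x^k)) converges. -/
open scoped RealInnerProductSpace
open Filter Topology

/-! Adding the subgradient inequality for `h` at `xᵏ`, evaluated at `xᵏ⁺¹`, to the minimality of
`xᵏ⁺¹` for the linearized problem, tested against `xᵏ ∈ C`, gives `f(xᵏ⁺¹) ≤ f(xᵏ)`. A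
non-increasing sequence that is bounded below converges to its infimum. -/

theorem sub_le_sub_of_subgradient_of_linearized_le {E : Type*} [SeminormedAddCommGroup E]
    [InnerProductSpace ℝ E] {g h : E → ℝ} {y u v : E} (hsub : h v ≥ h u + ⟪y, v - u⟫)
    (hmin : g v - ⟪y, v⟫ ≤ g u - ⟪y, u⟫) : g v - h v ≤ g u - h u := by
  rw [inner_sub_right] at hsub
  linarith

theorem stmt_0_general
    {E : Type*} [NormedAddCommGroup E] [InnerProductSpace ℝ E]
    (C : Set E)
    (g h : E → ℝ)
    (f : E → ℝ) (hf : ∀ z, f z = g z - h z)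
    (x y : ℕ → E)
    (hx0 : x 0 ∈ C)
    (hsub : ∀ k, ∀ z, h z ≥ h (x k) + ⟪y k, z - x k⟫)
    (hxC : ∀ k, x (k + 1) ∈ C)
    (hmin : ∀ k, ∀ z ∈ C, g (x (k + 1)) - ⟪y k, x (k + 1)⟫ ≤ g z - ⟪y k, z⟫) :
    (∀ k, f (x (k + 1)) ≤ f (x k)) ∧
      (BddBelow (f '' C) → ∃ l, Tendsto (fun k => f (x k)) atTop (𝓝 l)) := by
  have hx : ∀ k, x k ∈ C
    | 0 => hx0
    | k + 1 => hxC k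
  have hmono : ∀ k, f (x (k + 1)) ≤ f (x k) := fun k => by
    simpa only [hf] using
      sub_le_sub_of_subgradient_of_linearized_le (hsub k (x (k + 1))) (hmin k (x k) (hx k))
  refine ⟨hmono, fun hbdd => ⟨_, tendsto_atTop_ciInf (antitone_nat_of_succ_le hmono) ?_⟩⟩
  exact hbdd.mono (Set.range_subset_iff.2 fun k => Set.mem_image_of_mem f (hx k))

/-- monotonicity and (under lower boundedness) convergence of `f(xᵏ)`
for a DCA sequence minimizing `f = g - h` over `C`. -/
theorem stmt_0
    {E : Type*} [NormedAddCommGroup E] [InnerProductSpace ℝ E] [FiniteDimensional ℝ E]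
    (C : Set E) (hCne : C.Nonempty) (hCclosed : IsClosed C) (hCconv : Convex ℝ C)
    (g h : E → ℝ) (hg : ConvexOn ℝ Set.univ g) (hh : ConvexOn ℝ Set.univ h)
    (f : E → ℝ) (hf : ∀ z, f z = g z - h z)
    (x y : ℕ → E)
    (hx0 : x 0 ∈ C)
    (hsub : ∀ k, ∀ z, h z ≥ h (x k) + ⟪y k, z - x k⟫)
    (hxC : ∀ k, x (k + 1) ∈ C)
    (hmin : ∀ k, ∀ z ∈ C, g (x (k + 1)) - ⟪y k, x (k + 1)⟫ ≤ g z - ⟪y k, z⟫) :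
    (∀ k, f (x (k + 1)) ≤ f (x k)) ∧
      (BddBelow (f '' C) → ∃ l, Tendsto (fun k => f (x k)) atTop (𝓝 l)) :=
  stmt_0_general C g h f hf x y hx0 hsub hxC hmin
end

section
/- Let (x^k), (y^k) be a DCA sequence for minimizing f = g − h over C with x^0 ∈ C. Suppose g is ρ_g-strongly convex on C and h is ρ_h-strongly convex on C with ρ_g + ρ_h > 0. Then the sufficiently descent property holds: f(x^k) − f(x^{k+1}) ≥ ((ρ_g + ρ_h)/2)·‖x^k − x^{k+1}‖² for every k ≥ 1. -/
/-!
Since `y^k ∈ ∂h(x^k)`, the point `x^k` minimises `h - ⟪y^k, ·⟫`, while `x^{k+1}` minimises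
`g - ⟪y^k, ·⟫` over `C`. A `ρ`-strongly convex function exceeds its minimum over `C` at any other
point of `C` by at least `ρ/2` times the squared distance (restrict to the segment joining the two
points and let its parameter tend to `0`). Adding the two resulting inequalities at `x^k` and
`x^{k+1}` gives the descent estimate.
-/

open scoped RealInnerProductSpace
open Filter Topology Set

section

variable {E : Type*} [NormedAddCommGroup E]

theorem UniformConvexOn.add_le_of_isMinOn [NormedSpace ℝ E] {s : Set E} {φ : ℝ → ℝ}
    {f : E → ℝ} {a b : E} (hf : UniformConvexOn s φ f) (ha : a ∈ s) (hb : b ∈ s)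
    (hmin : IsMinOn f s a) : f a + φ ‖a - b‖ ≤ f b := by
  have hsegment : ∀ t ∈ Ioo (0 : ℝ) 1, f a + (1 - t) * φ ‖a - b‖ ≤ f b := by
    rintro t ⟨ht0, ht1⟩
    have hmem := hf.1 ha hb (sub_nonneg.2 ht1.le) ht0.le (sub_add_cancel 1 t)
    have hconv := hf.2 ha hb (sub_nonneg.2 ht1.le) ht0.le (sub_add_cancel 1 t)
    simp only [smul_eq_mul] at hconv
    have : t * (f a + (1 - t) * φ ‖a - b‖) ≤ t * f b := by
      linear_combination isMinOn_iff.1 hmin _ hmem + hconv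
    exact le_of_mul_le_mul_left this ht0
  have hlim : Tendsto (fun t => f a + (1 - t) * φ ‖a - b‖) (𝓝[>] 0) (𝓝 (f a + φ ‖a - b‖)) := by
    have hcont : Continuous fun t : ℝ => f a + (1 - t) * φ ‖a - b‖ := by fun_prop
    simpa using (hcont.tendsto 0).mono_left nhdsWithin_le_nhds
  exact le_of_tendsto hlim <| by
    filter_upwards [Ioo_mem_nhdsGT zero_lt_one] with t ht using hsegment t ht

variable [InnerProductSpace ℝ E]

theorem UniformConvexOn.sub_inner {s : Set E} {φ : ℝ → ℝ} {f : E → ℝ}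
    (hf : UniformConvexOn s φ f) (y : E) : UniformConvexOn s φ fun z => f z - ⟪y, z⟫ := by
  simpa [Pi.sub_def] using hf.sub (uniformConcaveOn_zero.2 ((innerₛₗ ℝ y).concaveOn hf.1))

theorem StrongConvexOn.dca_step_descent {C : Set E} {g h : E → ℝ} {ρg ρh : ℝ}
    (hg : StrongConvexOn C ρg g) (hh : StrongConvexOn C ρh h) {a b y : E} (ha : a ∈ C)
    (hb : b ∈ C) (hy : ∀ z, h a + ⟪y, z - a⟫ ≤ h z)
    (hmin : IsMinOn (fun z => g z - ⟪y, z⟫) C b) :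
    (ρg + ρh) / 2 * ‖a - b‖ ^ 2 ≤ (g a - h a) - (g b - h b) := by
  have hg_growth := (UniformConvexOn.sub_inner hg y).add_le_of_isMinOn hb ha hmin
  have hh_min : IsMinOn (fun z => h z - ⟪y, z⟫) C a := isMinOn_iff.2 fun z _ => by
    linarith [hy z, inner_sub_right (𝕜 := ℝ) y z a]
  have hh_growth := (UniformConvexOn.sub_inner hh y).add_le_of_isMinOn ha hb hh_min
  rw [norm_sub_rev] at hg_growth
  linarith

end

theorem stmt_1_general
    {E : Type*} [NormedAddCommGroup E] [InnerProductSpace ℝ E]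
    (C : Set E)
    (g h : E → ℝ)
    (f : E → ℝ) (hf : ∀ z, f z = g z - h z)
    (ρg ρh : ℝ)
    (hsg : ConvexOn ℝ C (fun z => g z - ρg / 2 * ‖z‖ ^ 2))
    (hsh : ConvexOn ℝ C (fun z => h z - ρh / 2 * ‖z‖ ^ 2))
    (x y : ℕ → E)
    (hsub : ∀ k, ∀ z, h z ≥ h (x k) + ⟪y k, z - x k⟫)
    (hxC : ∀ k, x (k + 1) ∈ C)
    (hmin : ∀ k, ∀ z ∈ C, g (x (k + 1)) - ⟪y k, x (k + 1)⟫ ≤ g z - ⟪y k, z⟫) :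
    ∀ k, 1 ≤ k →
      f (x k) - f (x (k + 1)) ≥ (ρg + ρh) / 2 * ‖x k - x (k + 1)‖ ^ 2 := by
  rintro (_ | k) hk
  · exact absurd hk (by norm_num)
  rw [hf, hf, ge_iff_le]
  exact StrongConvexOn.dca_step_descent (strongConvexOn_iff_convex.2 hsg)
    (strongConvexOn_iff_convex.2 hsh) (hxC k) (hxC (k + 1)) (hsub (k + 1))
    (isMinOn_iff.2 (hmin (k + 1)))

/-- sufficiently descent property of DCA under strong convexity. -/
theorem stmt_1
    {E : Type*} [NormedAddCommGroup E] [InnerProductSpace ℝ E] [FiniteDimensional ℝ E]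
    (C : Set E) (hCne : C.Nonempty) (hCclosed : IsClosed C) (hCconv : Convex ℝ C)
    (g h : E → ℝ) (hg : ConvexOn ℝ Set.univ g) (hh : ConvexOn ℝ Set.univ h)
    (f : E → ℝ) (hf : ∀ z, f z = g z - h z)
    (ρg ρh : ℝ) (hρg0 : 0 ≤ ρg) (hρh0 : 0 ≤ ρh) (hρ : 0 < ρg + ρh)
    (hsg : ConvexOn ℝ C (fun z => g z - ρg / 2 * ‖z‖ ^ 2))
    (hsh : ConvexOn ℝ C (fun z => h z - ρh / 2 * ‖z‖ ^ 2))
    (x y : ℕ → E)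
    (hx0 : x 0 ∈ C)
    (hsub : ∀ k, ∀ z, h z ≥ h (x k) + ⟪y k, z - x k⟫)
    (hxC : ∀ k, x (k + 1) ∈ C)
    (hmin : ∀ k, ∀ z ∈ C, g (x (k + 1)) - ⟪y k, x (k + 1)⟫ ≤ g z - ⟪y k, z⟫) :
    ∀ k, 1 ≤ k →
      f (x k) - f (x (k + 1)) ≥ (ρg + ρh) / 2 * ‖x k - x (k + 1)‖ ^ 2 :=
  stmt_1_general C g h f hf ρg ρh hsg hsh x y hsub hxC hmin
end

section
/- Let (x^k), (y^k) be a DCA sequence for minimizing f = g − h over C with x^0 ∈ C. Suppose g is ρ_g-strongly convex on C and h is ρ_h-strongly convex on C with ρ_g + ρ_h > 0, suppose f is bounded below on C, and let f* denote the limit of the (non-increasing, convergent) sequence (f(x^k)). Then for every N ≥ 0: (1/(N+1)) ∑_{k=0}^{N} ‖x^{k+1} − x^k‖² ≤ 2(f(x^0) − f*)/((ρ_g + ρ_h)(N+1)), and min_{0 ≤ k ≤ N} ‖x^{k+1} − x^k‖ ≤ √(2(f(x^0) − f*)/((ρ_g + ρ_h)(N+1))). -/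
open scoped RealInnerProductSpace
open Filter Topology

set_option maxHeartbeats 1600000 in
/-- Key limit lemma: strong-convexity segment inequality plus a linear lower bound
along the segment yields the strong subgradient-type inequality. -/
private lemma key_lemma {E : Type*} [NormedAddCommGroup E] [NormedSpace ℝ E]
    (φ : E → ℝ) (ρ c : ℝ) (a b : E)
    (hconv : ∀ t : ℝ, t ∈ Set.Ioo (0:ℝ) 1 →
      φ ((1 - t) • a + t • b) ≤ (1 - t) * φ a + t * φ b - (1 - t) * t * (ρ / 2 * ‖a - b‖ ^ 2))
    (hlow : ∀ t : ℝ, t ∈ Set.Ioo (0:ℝ) 1 →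
      φ a + t * c ≤ φ ((1 - t) • a + t • b)) :
    φ a + c + ρ / 2 * ‖a - b‖ ^ 2 ≤ φ b := by
  set M : ℝ := ρ / 2 * ‖a - b‖ ^ 2 with hM
  have step : ∀ t : ℝ, t ∈ Set.Ioo (0:ℝ) 1 → φ a + c + (1 - t) * M ≤ φ b := by
    intro t ht
    have h1 := hconv t ht
    have h2 := hlow t ht
    have ht0 : 0 < t := ht.1
    have key : t * (φ a + c + (1 - t) * M - φ b) ≤ t * 0 := by
      rw [mul_zero]; nlinarith
    have := (mul_le_mul_iff_right₀ ht0).mp key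
    linarith
  -- take t → 0⁺ along t_n = 1/(n+2)
  have h0 : Tendsto (fun n : ℕ => (((n : ℝ) + 2))⁻¹) atTop (𝓝 0) :=
    (tendsto_atTop_add_const_right atTop 2 tendsto_natCast_atTop_atTop).inv_tendsto_atTop
  have htend : Tendsto (fun n : ℕ => φ a + c + (1 - (((n : ℝ) + 2))⁻¹) * M) atTop
      (𝓝 (φ a + c + (1 - 0) * M)) :=
    ((tendsto_const_nhds.sub h0).mul tendsto_const_nhds).const_add _
  have : φ a + c + (1 - 0) * M ≤ φ b := by
    refine le_of_tendsto htend (Filter.Eventually.of_forall fun n => ?_)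
    refine step _ ⟨by positivity, ?_⟩
    rw [inv_lt_one_iff₀]
    right
    have : (0:ℝ) ≤ (n : ℝ) := Nat.cast_nonneg n
    linarith
  linarith

/-- `O(1/√N)` convergence rate of DCA. -/
theorem stmt_3
    {E : Type*} [NormedAddCommGroup E] [InnerProductSpace ℝ E] [FiniteDimensional ℝ E]
    (C : Set E) (hCne : C.Nonempty) (hCclosed : IsClosed C) (hCconv : Convex ℝ C)
    (g h : E → ℝ) (hg : ConvexOn ℝ Set.univ g) (hh : ConvexOn ℝ Set.univ h)
    (f : E → ℝ) (hf : ∀ z, f z = g z - h z)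
    (ρg ρh : ℝ) (hρg0 : 0 ≤ ρg) (hρh0 : 0 ≤ ρh) (hρ : 0 < ρg + ρh)
    (hsg : ConvexOn ℝ C (fun z => g z - ρg / 2 * ‖z‖ ^ 2))
    (hsh : ConvexOn ℝ C (fun z => h z - ρh / 2 * ‖z‖ ^ 2))
    (hbelow : BddBelow (f '' C))
    (x y : ℕ → E)
    (hx0 : x 0 ∈ C)
    (hsub : ∀ k, ∀ z, h z ≥ h (x k) + ⟪y k, z - x k⟫)
    (hxC : ∀ k, x (k + 1) ∈ C)
    (hmin : ∀ k, ∀ z ∈ C, g (x (k + 1)) - ⟪y k, x (k + 1)⟫ ≤ g z - ⟪y k, z⟫)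
    (fstar : ℝ) (hfstar : Tendsto (fun k => f (x k)) atTop (𝓝 fstar)) :
    ∀ N : ℕ,
      (1 / ((N : ℝ) + 1)) * ∑ k ∈ Finset.range (N + 1), ‖x (k + 1) - x k‖ ^ 2 ≤
          2 * (f (x 0) - fstar) / ((ρg + ρh) * ((N : ℝ) + 1)) ∧
        ∃ k ≤ N, ‖x (k + 1) - x k‖ ≤
          Real.sqrt (2 * (f (x 0) - fstar) / ((ρg + ρh) * ((N : ℝ) + 1))) := by
  have hxCall : ∀ k, x k ∈ C := by
    intro k; cases k with
    | zero => exact hx0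
    | succ n => exact hxC n
  -- strong convexity in UniformConvexOn form
  have hsg' : StrongConvexOn C ρg g := strongConvexOn_iff_convex.mpr hsg
  have hsh' : StrongConvexOn C ρh h := strongConvexOn_iff_convex.mpr hsh
  -- descent inequality
  have descent : ∀ k, (ρg + ρh) / 2 * ‖x (k + 1) - x k‖ ^ 2 ≤ f (x k) - f (x (k + 1)) := by
    intro k
    set a := x (k + 1)
    set b := x k
    have ha : a ∈ C := hxC k
    have hb : b ∈ C := hxCall k
    -- h part: a = x k, b = x (k+1)
    have hH : h b + ⟪y k, a - b⟫ + ρh / 2 * ‖b - a‖ ^ 2 ≤ h a := by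
      refine key_lemma h ρh (⟪y k, a - b⟫) b a ?_ ?_
      · intro t ht
        have := hsh'.2 hb ha (by linarith [ht.2] : (0:ℝ) ≤ 1 - t) ht.1.le (by ring)
        simpa [smul_eq_mul] using this
      · intro t ht
        have h2 := hsub k ((1 - t) • b + t • a)
        have heq : (1 - t) • b + t • a - b = t • (a - b) := by
          rw [sub_smul, smul_sub]; module
        rw [heq, real_inner_smul_right] at h2
        linarith
    -- g part: minimizer strong inequality, φ z = g z - ⟪y k, z⟫
    have hG : (g a - ⟪y k, a⟫) + 0 + ρg / 2 * ‖a - b‖ ^ 2 ≤ g b - ⟪y k, b⟫ := by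
      refine key_lemma (fun z => g z - ⟪y k, z⟫) ρg 0 a b ?_ ?_
      · intro t ht
        have hconv := hsg'.2 ha hb (by linarith [ht.2] : (0:ℝ) ≤ 1 - t) ht.1.le (by ring)
        have hin : ⟪y k, (1 - t) • a + t • b⟫ = (1 - t) * ⟪y k, a⟫ + t * ⟪y k, b⟫ := by
          rw [inner_add_right, real_inner_smul_right, real_inner_smul_right]
        show g ((1 - t) • a + t • b) - ⟪y k, (1 - t) • a + t • b⟫ ≤
          (1 - t) * (g a - ⟪y k, a⟫) + t * (g b - ⟪y k, b⟫) -
            (1 - t) * t * (ρg / 2 * ‖a - b‖ ^ 2)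
        simp only [smul_eq_mul] at hconv
        rw [hin]; nlinarith
      · intro t ht
        have hmem : (1 - t) • a + t • b ∈ C :=
          hCconv ha hb (by linarith [ht.2]) ht.1.le (by ring)
        have := hmin k _ hmem
        show g a - ⟪y k, a⟫ + t * 0 ≤
          g ((1 - t) • a + t • b) - ⟪y k, (1 - t) • a + t • b⟫
        linarith
    have hnorm : ‖b - a‖ = ‖a - b‖ := norm_sub_rev _ _
    have hinner : ⟪y k, a - b⟫ = ⟪y k, a⟫ - ⟪y k, b⟫ := inner_sub_right _ _ _
    rw [hf, hf]
    rw [hnorm] at hH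
    show (ρg + ρh) / 2 * ‖a - b‖ ^ 2 ≤ (g b - h b) - (g a - h a)
    linarith
  have hd2 : ∀ k, (0:ℝ) ≤ ‖x (k + 1) - x k‖ ^ 2 := fun k => by positivity
  -- monotone decreasing
  have mono : ∀ m n, m ≤ n → f (x n) ≤ f (x m) := by
    intro m n hmn
    induction n, hmn using Nat.le_induction with
    | base => exact le_rfl
    | succ n hmn ih =>
      have h1 := descent n
      have h2 := hd2 n
      have h4 : 0 ≤ (ρg + ρh) / 2 * ‖x (n + 1) - x n‖ ^ 2 := by positivity
      linarith
  -- fstar ≤ f (x m)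
  have hfs : ∀ m, fstar ≤ f (x m) := by
    intro m
    refine le_of_tendsto hfstar (eventually_atTop.mpr ⟨m, fun n hn => mono m n hn⟩)
  intro N
  set S := ∑ k ∈ Finset.range (N + 1), ‖x (k + 1) - x k‖ ^ 2 with hS
  have hSnn : 0 ≤ S := Finset.sum_nonneg fun k _ => hd2 k
  have hN1 : (0:ℝ) < (N : ℝ) + 1 := by positivity
  -- telescoping bound
  have hsum : (ρg + ρh) / 2 * S ≤ f (x 0) - fstar := by
    have htel : ∑ k ∈ Finset.range (N + 1), (f (x k) - f (x (k + 1))) =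
        f (x 0) - f (x (N + 1)) := Finset.sum_range_sub' (fun k => f (x k)) (N + 1)
    calc (ρg + ρh) / 2 * S = ∑ k ∈ Finset.range (N + 1),
            (ρg + ρh) / 2 * ‖x (k + 1) - x k‖ ^ 2 := by rw [hS, Finset.mul_sum]
      _ ≤ ∑ k ∈ Finset.range (N + 1), (f (x k) - f (x (k + 1))) :=
          Finset.sum_le_sum fun k _ => descent k
      _ = f (x 0) - f (x (N + 1)) := htel
      _ ≤ f (x 0) - fstar := by linarith [hfs (N + 1)]
  have hB : S / ((N : ℝ) + 1) ≤ 2 * (f (x 0) - fstar) / ((ρg + ρh) * ((N : ℝ) + 1)) := by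
    rw [div_le_div_iff₀ hN1 (by positivity)]
    nlinarith
  constructor
  · rw [one_div, inv_mul_eq_div]
    exact hB
  · obtain ⟨k, hk, hkmin⟩ := Finset.exists_min_image (Finset.range (N + 1))
      (fun k => ‖x (k + 1) - x k‖ ^ 2) ⟨0, Finset.mem_range.mpr (Nat.succ_pos N)⟩
    refine ⟨k, Nat.lt_succ_iff.mp (Finset.mem_range.mp hk), ?_⟩
    have hcard : ((N : ℝ) + 1) * ‖x (k + 1) - x k‖ ^ 2 ≤ S := by
      calc ((N : ℝ) + 1) * ‖x (k + 1) - x k‖ ^ 2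
          = ∑ _j ∈ Finset.range (N + 1), ‖x (k + 1) - x k‖ ^ 2 := by
            rw [Finset.sum_const, Finset.card_range]; push_cast; ring
        _ ≤ S := Finset.sum_le_sum fun j hj => hkmin j hj
    have h1 : ‖x (k + 1) - x k‖ ^ 2 ≤ 2 * (f (x 0) - fstar) / ((ρg + ρh) * ((N : ℝ) + 1)) := by
      refine le_trans ?_ hB
      rw [le_div_iff₀ hN1]; linarith
    calc ‖x (k + 1) - x k‖ = Real.sqrt (‖x (k + 1) - x k‖ ^ 2) :=
          (Real.sqrt_sq (norm_nonneg _)).symm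
      _ ≤ Real.sqrt _ := Real.sqrt_le_sqrt h1
end

section
/- Let (x^k), (y^k) be a DCA sequence for minimizing f = g − h over C with x^0 ∈ C, and suppose both sequences (x^k) and (y^k) are bounded, f is bounded below on C, g is ρ_g-strongly convex on C and h is ρ_h-strongly convex on C with ρ_g + ρ_h > 0. Then every cluster point x* of the sequence (x^k) is a DC critical point of the constrained problem: there exists y* ∈ E such that y* ∈ ∂h(x*) and g(x) ≥ g(x*) + ⟨y*, x − x*⟩ for all x ∈ C (i.e., y* is a subgradient at x* of g plus the indicator function of C). -/
open scoped RealInnerProductSpace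
open Filter Topology

/-- every cluster point of a bounded DCA sequence is a DC critical point
of the convex constrained DC program. -/
theorem stmt_4
    {E : Type*} [NormedAddCommGroup E] [InnerProductSpace ℝ E] [FiniteDimensional ℝ E]
    (C : Set E) (hCne : C.Nonempty) (hCclosed : IsClosed C) (hCconv : Convex ℝ C)
    (g h : E → ℝ) (hg : ConvexOn ℝ Set.univ g) (hh : ConvexOn ℝ Set.univ h)
    (f : E → ℝ) (hf : ∀ z, f z = g z - h z)
    (ρg ρh : ℝ) (hρg0 : 0 ≤ ρg) (hρh0 : 0 ≤ ρh) (hρ : 0 < ρg + ρh)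
    (hsg : ConvexOn ℝ C (fun z => g z - ρg / 2 * ‖z‖ ^ 2))
    (hsh : ConvexOn ℝ C (fun z => h z - ρh / 2 * ‖z‖ ^ 2))
    (hbelow : BddBelow (f '' C))
    (x y : ℕ → E)
    (hx0 : x 0 ∈ C)
    (hsub : ∀ k, ∀ z, h z ≥ h (x k) + ⟪y k, z - x k⟫)
    (hxC : ∀ k, x (k + 1) ∈ C)
    (hmin : ∀ k, ∀ z ∈ C, g (x (k + 1)) - ⟪y k, x (k + 1)⟫ ≤ g z - ⟪y k, z⟫)
    (hbx : ∃ R, ∀ k, ‖x k‖ ≤ R) (hby : ∃ R, ∀ k, ‖y k‖ ≤ R)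
    (xstar : E)
    (hclust : ∃ σ : ℕ → ℕ, StrictMono σ ∧ Tendsto (fun j => x (σ j)) atTop (𝓝 xstar)) :
    ∃ ystar : E,
      (∀ z, h z ≥ h xstar + ⟪ystar, z - xstar⟫) ∧
        (∀ z ∈ C, g z ≥ g xstar + ⟪ystar, z - xstar⟫) := by
  obtain ⟨σ, hσmono, hσlim⟩ := hclust
  have hxC' : ∀ k, x k ∈ C := by
    intro k
    cases k with
    | zero => exact hx0
    | succ n => exact hxC n
  have hpar : ∀ a b : E, ‖(1/2:ℝ) • a + (1/2:ℝ) • b‖^2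
      = 1/2*‖a‖^2 + 1/2*‖b‖^2 - 1/4*‖b - a‖^2 := by
    intro a b
    have h1 : (1/2:ℝ) • a + (1/2:ℝ) • b = (1/2:ℝ) • (a + b) := by module
    have h2 := norm_add_sq_real a b
    have h3 := norm_sub_sq_real b a
    have h4 : ⟪b, a⟫ = ⟪a, b⟫ := real_inner_comm a b
    rw [h1, norm_smul]
    simp only [norm_div, Real.norm_ofNat, norm_one]
    nlinarith [norm_nonneg (a+b)]
  set c := (ρg + ρh)/4 with hc
  have hcpos : 0 < c := by positivity
  have key : ∀ k, f (x (k+1)) + c * ‖x (k+1) - x k‖^2 ≤ f (x k) := by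
    intro k
    have haC := hxC' k
    have hbC := hxC k
    set a := x k with ha
    set b := x (k+1) with hb
    have hmidC : (1/2:ℝ) • a + (1/2:ℝ) • b ∈ C :=
      hCconv haC hbC (by norm_num) (by norm_num) (by norm_num)
    have hG := hsg.2 haC hbC (by norm_num : (0:ℝ) ≤ 1/2) (by norm_num : (0:ℝ) ≤ 1/2)
      (by norm_num)
    have hH := hsh.2 haC hbC (by norm_num : (0:ℝ) ≤ 1/2) (by norm_num : (0:ℝ) ≤ 1/2)
      (by norm_num)
    simp only [] at hG hH
    rw [hpar a b] at hG hH
    have hsub' := hsub k ((1/2:ℝ) • a + (1/2:ℝ) • b)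
    have hmin' := hmin k _ hmidC
    have e1 : ⟪y k, (1/2:ℝ) • a + (1/2:ℝ) • b - a⟫ = 1/2 * ⟪y k, b - a⟫ := by
      have : (1/2:ℝ) • a + (1/2:ℝ) • b - a = (1/2:ℝ) • (b - a) := by module
      rw [this, real_inner_smul_right]
    have e2 : ⟪y k, (1/2:ℝ) • a + (1/2:ℝ) • b⟫ = 1/2 * ⟪y k, a⟫ + 1/2 * ⟪y k, b⟫ := by
      rw [inner_add_right, real_inner_smul_right, real_inner_smul_right]
    have e3 : ⟪y k, b - a⟫ = ⟪y k, b⟫ - ⟪y k, a⟫ := inner_sub_right _ _ _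
    rw [e1, e3] at hsub'
    rw [e2, ← hb] at hmin'
    simp only [smul_eq_mul] at hG hH
    rw [hf, hf, hc]
    nlinarith [sq_nonneg ‖b - a‖]
  obtain ⟨m, hm⟩ := hbelow
  have hmlb : ∀ k, m ≤ f (x k) := fun k => hm (Set.mem_image_of_mem f (hxC' k))
  have hanti : Antitone fun k => f (x k) := antitone_nat_of_succ_le fun k => by
    nlinarith [key k, sq_nonneg ‖x (k+1) - x k‖]
  have hFlim : Tendsto (fun k => f (x k)) atTop (𝓝 (⨅ k, f (x k))) :=
    tendsto_atTop_ciInf hanti ⟨m, by rintro v ⟨k, rfl⟩; exact hmlb k⟩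
  have hdiff : Tendsto (fun k => f (x k) - f (x (k+1))) atTop (𝓝 0) := by
    have := hFlim.sub (hFlim.comp (tendsto_add_atTop_nat 1))
    simpa using this
  have h3 : Tendsto (fun k => c * ‖x (k+1) - x k‖^2) atTop (𝓝 0) := by
    refine tendsto_of_tendsto_of_tendsto_of_le_of_le tendsto_const_nhds hdiff
      (fun k => by positivity) (fun k => by linarith [key k])
  have h4 : Tendsto (fun k => ‖x (k+1) - x k‖^2) atTop (𝓝 0) := by
    have := h3.const_mul c⁻¹
    simpa [inv_mul_cancel_left₀ hcpos.ne'] using this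
  have h5 : Tendsto (fun k => ‖x (k+1) - x k‖) atTop (𝓝 0) := by
    have h6 := (Real.continuous_sqrt.tendsto 0).comp h4
    rw [Real.sqrt_zero] at h6
    refine h6.congr fun k => ?_
    simp only [Function.comp_apply]
    exact Real.sqrt_sq (norm_nonneg _)
  have hΔ : Tendsto (fun k => x (k+1) - x k) atTop (𝓝 0) :=
    tendsto_zero_iff_norm_tendsto_zero.mpr h5
  have hσ1 : Tendsto (fun j => x (σ j + 1)) atTop (𝓝 xstar) := by
    have heq : (fun j => x (σ j + 1))
        = fun j => x (σ j) + (x (σ j + 1) - x (σ j)) := by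
      funext j; abel
    rw [heq]
    simpa using hσlim.add (hΔ.comp hσmono.tendsto_atTop)
  obtain ⟨R, hR⟩ := hby
  have hyb : ∀ j, y (σ j) ∈ Metric.closedBall (0:E) R := fun j => by
    simpa [Metric.mem_closedBall, dist_zero_right] using hR (σ j)
  obtain ⟨ystar, -, τ, hτmono, hτlim⟩ :=
    tendsto_subseq_of_bounded Metric.isBounded_closedBall hyb
  have hxs : Tendsto (fun j => x (σ (τ j))) atTop (𝓝 xstar) :=
    hσlim.comp hτmono.tendsto_atTop
  have hxs1 : Tendsto (fun j => x (σ (τ j) + 1)) atTop (𝓝 xstar) :=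
    hσ1.comp hτmono.tendsto_atTop
  have hys : Tendsto (fun j => y (σ (τ j))) atTop (𝓝 ystar) := hτlim
  have hgc : Continuous g := by
    have := hg.continuousOn isOpen_univ
    rwa [continuousOn_univ] at this
  have hhc : Continuous h := by
    have := hh.continuousOn isOpen_univ
    rwa [continuousOn_univ] at this
  refine ⟨ystar, ?_, ?_⟩
  · intro z
    have hlim : Tendsto (fun j => h (x (σ (τ j))) + ⟪y (σ (τ j)), z - x (σ (τ j))⟫)
        atTop (𝓝 (h xstar + ⟪ystar, z - xstar⟫)) :=
      (((hhc.tendsto xstar).comp hxs)).add (hys.inner (tendsto_const_nhds.sub hxs))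
    exact le_of_tendsto hlim (Eventually.of_forall fun j => hsub (σ (τ j)) z)
  · intro z hz
    have hA : Tendsto (fun j => g (x (σ (τ j) + 1)) - ⟪y (σ (τ j)), x (σ (τ j) + 1)⟫)
        atTop (𝓝 (g xstar - ⟪ystar, xstar⟫)) :=
      ((hgc.tendsto xstar).comp hxs1).sub (hys.inner hxs1)
    have hB : Tendsto (fun j => g z - ⟪y (σ (τ j)), z⟫) atTop (𝓝 (g z - ⟪ystar, z⟫)) :=
      tendsto_const_nhds.sub (hys.inner tendsto_const_nhds)
    have hle := le_of_tendsto_of_tendsto' hA hB fun j => hmin (σ (τ j)) z hz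
    have e : ⟪ystar, z - xstar⟫ = ⟪ystar, z⟫ - ⟪ystar, xstar⟫ := inner_sub_right _ _ _
    linarith
end

section
/- Let (x^k) be a bounded sequence in E with x^k ≠ x^{k+1} for all k ∈ ℕ, and let Ψ : E → ℝ. Suppose: (H1) Ψ(x^k) ≥ 0 for all k and Ψ(x^k) → 0 as k → ∞; (H2) there exist D > 0 and N₁ such that Ψ(x^k) − Ψ(x^{k+1}) ≥ D‖x^k − x^{k+1}‖² for all k ≥ N₁; (H3) there exist N₂ ≥ N₁ + 1, η ∈ (0, ∞] with Ψ(x^k) < η for all k ≥ N₂, a function φ : [0, η) → [0, ∞) that is concave and continuous on [0, η), differentiable with derivative φ′ > 0 on (0, η), with φ(0) = 0, and constants C₁ ≥ 0, C₂ ≥ 0 with C₁ + C₂ > 0 such that φ′(Ψ(x^k))·(C₁‖x^k − x^{k+1}‖ + C₂‖x^{k−1} − x^k‖) ≥ 1 for all k ≥ N₂. Then for all k ≥ N₂ one has (3/4)‖x^k − x^{k+1}‖ ≤ (1/4)‖x^{k−1} − x^k‖ + (max{C₁, C₂}/D)·(φ(Ψ(x^k)) − φ(Ψ(x^{k+1}))),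 and moreover ∑_{k≥0} ‖x^k − x^{k+1}‖ < ∞, so the sequence (x^k) converges. -/
open scoped RealInnerProductSpace ENNReal
open Filter Topology

private lemma stmt_5_aux {a b s : ℝ} (ha : 0 ≤ a) (hb : 0 ≤ b) (hs : 0 ≤ s)
    (h : a ^ 2 ≤ s * (a + b)) : 3 / 4 * a ≤ 1 / 4 * b + s := by
  nlinarith [sq_nonneg ((a + b) / 4 - s), sq_nonneg (a - (a + b) / 4 - s)]

set_option maxHeartbeats 1000000 in
/-- general theorem for global convergence of a sequence under the
Lyapunov assumption (H1), sufficiently descent assumption (H2) and regularity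
assumption (H3). -/
theorem stmt_5
    {E : Type*} [NormedAddCommGroup E] [InnerProductSpace ℝ E] [FiniteDimensional ℝ E]
    (x : ℕ → E) (hbx : ∃ R, ∀ k, ‖x k‖ ≤ R)
    (hne : ∀ k : ℕ, x k ≠ x (k + 1))
    (Ψ : E → ℝ)
    -- (H1)
    (hΨnonneg : ∀ k, 0 ≤ Ψ (x k))
    (hΨto0 : Tendsto (fun k => Ψ (x k)) atTop (𝓝 0))
    -- (H2)
    (D : ℝ) (hD : 0 < D) (N₁ : ℕ)
    (hH2 : ∀ k, N₁ ≤ k → Ψ (x k) - Ψ (x (k + 1)) ≥ D * ‖x k - x (k + 1)‖ ^ 2)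
    -- (H3)
    (N₂ : ℕ) (hN₂ : N₁ + 1 ≤ N₂)
    (η : ℝ≥0∞) (hη : 0 < η)
    (hΨη : ∀ k, N₂ ≤ k → ENNReal.ofReal (Ψ (x k)) < η)
    (φ φ' : ℝ → ℝ)
    (hφ0 : φ 0 = 0)
    (hφnonneg : ∀ t, 0 ≤ t → ENNReal.ofReal t < η → 0 ≤ φ t)
    (hφconc : ConcaveOn ℝ {t : ℝ | 0 ≤ t ∧ ENNReal.ofReal t < η} φ)
    (hφcont : ContinuousOn φ {t : ℝ | 0 ≤ t ∧ ENNReal.ofReal t < η})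
    (hφderiv : ∀ t, 0 < t → ENNReal.ofReal t < η → HasDerivAt φ (φ' t) t)
    (hφ'pos : ∀ t, 0 < t → ENNReal.ofReal t < η → 0 < φ' t)
    (C₁ C₂ : ℝ) (hC₁ : 0 ≤ C₁) (hC₂ : 0 ≤ C₂) (hC : 0 < C₁ + C₂)
    (hH3 : ∀ k, N₂ ≤ k →
      φ' (Ψ (x k)) * (C₁ * ‖x k - x (k + 1)‖ + C₂ * ‖x (k - 1) - x k‖) ≥ 1) :
    (∀ k, N₂ ≤ k →
      (3 / 4 : ℝ) * ‖x k - x (k + 1)‖ ≤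
        (1 / 4 : ℝ) * ‖x (k - 1) - x k‖ +
          max C₁ C₂ / D * (φ (Ψ (x k)) - φ (Ψ (x (k + 1))))) ∧
      Summable (fun k => ‖x k - x (k + 1)‖) ∧
      ∃ l, Tendsto x atTop (𝓝 l) := by
  set a : ℕ → ℝ := fun k => ‖x k - x (k + 1)‖ with ha
  have hapos : ∀ k, 0 < a k := fun k =>
    norm_pos_iff.mpr (sub_ne_zero.mpr (hne k))
  have hanonneg : ∀ k, 0 ≤ a k := fun k => (hapos k).le
  have hH2' : ∀ k, N₁ ≤ k → Ψ (x k) - Ψ (x (k + 1)) ≥ D * a k ^ 2 := hH2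
  -- Ψ decreasing strictly past N₁
  have hdec : ∀ k, N₁ ≤ k → Ψ (x (k + 1)) < Ψ (x k) := by
    intro k hk
    have h2 := hH2' k hk
    have h0 : 0 < D * a k ^ 2 := mul_pos hD (pow_pos (hapos k) 2)
    linarith
  -- Ψ positive past N₁
  have hΨpos : ∀ k, N₁ ≤ k → 0 < Ψ (x k) :=
    fun k hk => lt_of_le_of_lt (hΨnonneg (k + 1)) (hdec k hk)
  have hN₁ : ∀ k, N₂ ≤ k → N₁ ≤ k := fun k hk => le_trans (Nat.le_of_succ_le hN₂) hk
  set S : Set ℝ := {t : ℝ | 0 ≤ t ∧ ENNReal.ofReal t < η} with hS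
  have hmem : ∀ k, N₂ ≤ k → Ψ (x k) ∈ S := fun k hk => ⟨hΨnonneg k, hΨη k hk⟩
  have hmem' : ∀ k, N₂ ≤ k → Ψ (x (k + 1)) ∈ S := by
    intro k hk
    exact ⟨hΨnonneg (k + 1),
      lt_of_le_of_lt (ENNReal.ofReal_le_ofReal (hdec k (hN₁ k hk)).le) (hΨη k hk)⟩
  set M : ℝ := max C₁ C₂ with hM
  have hMnonneg : 0 ≤ M := le_trans hC₁ (le_max_left _ _)
  -- key inequality (first part of the statement)
  have key : ∀ k, N₂ ≤ k →
      (3 / 4 : ℝ) * a k ≤ (1 / 4 : ℝ) * ‖x (k - 1) - x k‖ +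
        M / D * (φ (Ψ (x k)) - φ (Ψ (x (k + 1)))) := by
    intro k hk
    have hlt : Ψ (x (k + 1)) < Ψ (x k) := hdec k (hN₁ k hk)
    have hd : HasDerivAt φ (φ' (Ψ (x k))) (Ψ (x k)) :=
      hφderiv _ (hΨpos k (hN₁ k hk)) (hΨη k hk)
    have hslope := hφconc.le_slope_of_hasDerivAt (hmem' k hk) (hmem k hk) hlt hd
    rw [slope_def_field] at hslope
    have hΔ : φ' (Ψ (x k)) * (Ψ (x k) - Ψ (x (k + 1))) ≤
        φ (Ψ (x k)) - φ (Ψ (x (k + 1))) := by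
      have := (le_div_iff₀ (sub_pos.mpr hlt)).1 hslope
      linarith
    have h2 := hH2' k (hN₁ k hk)
    set b : ℝ := ‖x (k - 1) - x k‖ with hb
    have h3 : φ' (Ψ (x k)) * (C₁ * a k + C₂ * b) ≥ 1 := hH3 k hk
    have hφ'p : 0 < φ' (Ψ (x k)) := hφ'pos _ (hΨpos k (hN₁ k hk)) (hΨη k hk)
    have hbnn : 0 ≤ b := norm_nonneg _
    set Δ : ℝ := φ (Ψ (x k)) - φ (Ψ (x (k + 1))) with hΔdef
    have hA : φ' (Ψ (x k)) * (D * a k ^ 2) ≤ Δ := by nlinarith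
    have hΔnn : 0 ≤ Δ := le_trans (by positivity) hA
    have hcb : 0 ≤ C₁ * a k + C₂ * b := by positivity
    have e1 : φ' (Ψ (x k)) * (D * a k ^ 2) * (C₁ * a k + C₂ * b) ≤
        Δ * (C₁ * a k + C₂ * b) := mul_le_mul_of_nonneg_right hA hcb
    have e2 : D * a k ^ 2 * 1 ≤ D * a k ^ 2 *
        (φ' (Ψ (x k)) * (C₁ * a k + C₂ * b)) :=
      mul_le_mul_of_nonneg_left h3 (by positivity)
    have h4 : D * a k ^ 2 ≤ Δ * (C₁ * a k + C₂ * b) := by nlinarith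
    have h6 : C₁ * a k + C₂ * b ≤ M * (a k + b) := by
      have h61 : C₁ ≤ M := le_max_left _ _
      have h62 : C₂ ≤ M := le_max_right _ _
      nlinarith [hanonneg k]
    have h5 : D * a k ^ 2 ≤ Δ * (M * (a k + b)) :=
      h4.trans (mul_le_mul_of_nonneg_left h6 hΔnn)
    set s : ℝ := M / D * Δ with hsdef
    have hsnn : 0 ≤ s := mul_nonneg (div_nonneg hMnonneg hD.le) hΔnn
    have hDs : D * s = M * Δ := by rw [hsdef]; field_simp
    have h7 : a k ^ 2 ≤ s * (a k + b) := by
      have heq : D * (s * (a k + b)) = Δ * (M * (a k + b)) := by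
        rw [show D * (s * (a k + b)) = (D * s) * (a k + b) by ring, hDs]; ring
      have : D * (a k ^ 2) ≤ D * (s * (a k + b)) := by rw [heq]; linarith
      exact (mul_le_mul_iff_right₀ hD).1 this
    exact stmt_5_aux (hanonneg k) hbnn hsnn h7
  -- summability via bounded partial sums
  have hN₂pos : 1 ≤ N₂ := le_trans (Nat.le_add_left 1 N₁) hN₂
  have hφnn : ∀ n, N₂ ≤ n → 0 ≤ φ (Ψ (x n)) := fun n hn =>
    hφnonneg _ (hΨnonneg n) (hΨη n hn)
  have inv : ∀ n, N₂ ≤ n →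
      (1 / 2 : ℝ) * (∑ k ∈ Finset.Ico N₂ n, a k) + (1 / 4) * a (n - 1) +
        M / D * φ (Ψ (x n)) ≤
      (1 / 4 : ℝ) * a (N₂ - 1) + M / D * φ (Ψ (x N₂)) := by
    intro n hn
    induction n, hn using Nat.le_induction with
    | base => simp [Finset.Ico_self]
    | succ n hn ih =>
      have hk := key n hn
      have hn1 : n - 1 + 1 = n := Nat.succ_pred_eq_of_pos (lt_of_lt_of_le hN₂pos hn)
      have hbn : ‖x (n - 1) - x n‖ = a (n - 1) := by
        rw [ha]; simp only [hn1]
      rw [hbn] at hk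
      rw [Finset.sum_Ico_succ_top hn]
      have hsimp : (n + 1) - 1 = n := rfl
      rw [hsimp]
      linarith
  have hbd : ∀ n, (∑ k ∈ Finset.range n, a k) ≤
      (∑ k ∈ Finset.range N₂, a k) + ((1 / 2 : ℝ) * a (N₂ - 1) +
        2 * (M / D) * φ (Ψ (x N₂))) := by
    intro n
    have hφN : 0 ≤ φ (Ψ (x N₂)) := hφnn N₂ le_rfl
    have hMD : 0 ≤ M / D := div_nonneg hMnonneg hD.le
    rcases le_total n N₂ with h | h
    · have hsub : ∑ k ∈ Finset.range n, a k ≤ ∑ k ∈ Finset.range N₂, a k :=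
        Finset.sum_le_sum_of_subset_of_nonneg (Finset.range_subset_range.mpr h)
          (fun i _ _ => hanonneg i)
      nlinarith [hanonneg (N₂ - 1)]
    · have hsplit : (∑ k ∈ Finset.range N₂, a k) + ∑ k ∈ Finset.Ico N₂ n, a k =
          ∑ k ∈ Finset.range n, a k := Finset.sum_range_add_sum_Ico a h
      have := inv n h
      have h1 : 0 ≤ a (n - 1) := hanonneg _
      have h2 : 0 ≤ M / D * φ (Ψ (x n)) := mul_nonneg hMD (hφnn n h)
      linarith
  have hsum : Summable a := summable_of_sum_range_le (fun n => hanonneg n) hbd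
  refine ⟨key, hsum, ?_⟩
  have hcs : CauchySeq x := by
    apply cauchySeq_of_summable_dist
    simpa [dist_eq_norm] using hsum
  exact cauchySeq_tendsto_of_complete hcs
end

section
/- Let g, h : E → ℝ be convex with g ρ_g-strongly convex on E and h ρ_h-strongly convex on E, ρ_g + ρ_h > 0, h differentiable on E with locally Lipschitz gradient ∇h, and f = g − h bounded below. Let (x^k) be a bounded DCA sequence: for every k ≥ 0, x^{k+1} minimizes x ↦ g(x) − ⟨∇h(x^k), x⟩ over E. Let f* = lim_{k→∞} f(x^k) (which exists since (f(x^k)) is non-increasing and bounded below). Suppose the Łojasiewicz subgradient inequality holds at cluster points of (x^k) along ∂g − ∇h: there exist θ ∈ [0, 1), M > 0 and ε > 0 such that for every cluster point z of (x^k), every x with ‖x − z‖ < ε, and every y ∈ ∂g(x), one has |f(x) − f*|^θ ≤ M‖y − ∇h(x)‖ (with the convention 0⁰ = 1). Then the sequence (x^k) converges. -/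
open scoped RealInnerProductSpace
open Filter Topology

section Helpers

variable {E : Type*} [NormedAddCommGroup E] [InnerProductSpace ℝ E]


lemma convexOn_neg_inner (c : E) : ConvexOn ℝ Set.univ (fun z : E => -⟪c, z⟫) := by
  refine ⟨convex_univ, fun u _ v _ a b ha hb hab => le_of_eq ?_⟩
  simp [inner_add_right, real_inner_smul_right]
  ring

lemma quad_id (a b : E) (t : ℝ) :
    ‖(1 - t) • a + t • b‖ ^ 2
      = (1 - t) * ‖a‖ ^ 2 + t * ‖b‖ ^ 2 - t * (1 - t) * ‖b - a‖ ^ 2 := by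
  have h1 : ∀ u : E, ‖u‖ ^ 2 = ⟪u, u⟫ := fun u => (real_inner_self_eq_norm_sq u).symm
  simp only [h1, inner_add_add_self, inner_sub_sub_self, real_inner_smul_left,
    real_inner_smul_right]
  ring

lemma convex_fderiv_ineq {φ : E → ℝ} (hφ : ConvexOn ℝ Set.univ φ) {v : E}
    {D : E →L[ℝ] ℝ} (hD : HasFDerivAt φ D v) (d : E) : φ v + D d ≤ φ (v + d) := by
  -- derivative of t ↦ φ (v + t • d) at 0 is D d
  have hc : HasDerivAt (fun t : ℝ => v + t • d) d 0 := by
    simpa using ((hasDerivAt_id (0 : ℝ)).smul_const d).const_add v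
  have hψ : HasDerivAt (fun t : ℝ => φ (v + t • d)) (D d) 0 := by
    have h0 : HasFDerivAt φ D (v + (0 : ℝ) • d) := by simpa using hD
    exact h0.comp_hasDerivAt 0 hc
  have hslope : Tendsto (slope (fun t : ℝ => φ (v + t • d)) 0) (𝓝[>] 0) (𝓝 (D d)) :=
    (hasDerivAt_iff_tendsto_slope.1 hψ).mono_left
      (nhdsWithin_mono 0 (fun t ht => ne_of_gt ht))
  have hub : ∀ᶠ t in 𝓝[>] (0 : ℝ), slope (fun t : ℝ => φ (v + t • d)) 0 t ≤ φ (v + d) - φ v := by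
    filter_upwards [Ioc_mem_nhdsGT_of_mem (by norm_num : (0:ℝ) ∈ Set.Ico (0:ℝ) 1)] with t ht
    obtain ⟨ht0, ht1⟩ := ht
    have hconv := hφ.2 (Set.mem_univ v) (Set.mem_univ (v + d))
      (sub_nonneg.2 ht1) ht0.le (by ring)
    have hpt : (1 - t) • v + t • (v + d) = v + t • d := by module
    rw [hpt] at hconv
    have : slope (fun t : ℝ => φ (v + t • d)) 0 t = (φ (v + t • d) - φ v) / t := by
      simp [slope_def_field]
    rw [this, div_le_iff₀ ht0]
    simp only [smul_eq_mul] at hconv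
    nlinarith
  have := le_of_tendsto hslope hub
  linarith

set_option maxHeartbeats 1000000 in
lemma min_quad_growth {φ : E → ℝ} {ρ : ℝ}
    (hc : ConvexOn ℝ Set.univ (fun z => φ z - ρ / 2 * ‖z‖ ^ 2)) {xs : E}
    (hmin : ∀ z, φ xs ≤ φ z) (z : E) : φ xs + ρ / 2 * ‖z - xs‖ ^ 2 ≤ φ z := by
  have key : ∀ t : ℝ, 0 < t → t < 1 → ρ / 2 * ((1 - t) * ‖z - xs‖ ^ 2) ≤ φ z - φ xs := by
    intro t ht0 ht1
    have hconv := hc.2 (Set.mem_univ xs) (Set.mem_univ z) (sub_nonneg.2 ht1.le) ht0.le (by ring)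
    simp only [smul_eq_mul] at hconv
    have hq := quad_id xs z t
    have hm := hmin ((1 - t) • xs + t • z)
    have := hconv
    rw [hq] at this
    -- this : φ ((1-t)•xs + t•z) - ρ/2 * ((1-t)‖xs‖² + t‖z‖² - t(1-t)‖z-xs‖²)
    --          ≤ (1-t)(φ xs - ρ/2‖xs‖²) + t (φ z - ρ/2‖z‖²)
    have h2 : t * (φ z - φ xs) ≥ ρ / 2 * (t * (1 - t) * ‖z - xs‖ ^ 2) := by
      ring_nf at this ⊢
      linarith
    have h3 : ρ / 2 * (t * (1 - t) * ‖z - xs‖ ^ 2) = t * (ρ / 2 * ((1 - t) * ‖z - xs‖ ^ 2)) := by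
      ring
    rw [h3] at h2
    exact (mul_le_mul_iff_right₀ ht0).1 (by linarith)
  have hlim : Tendsto (fun n : ℕ => ρ / 2 * ((1 - 1 / (n + 2)) * ‖z - xs‖ ^ 2)) atTop
      (𝓝 (ρ / 2 * ((1 - 0) * ‖z - xs‖ ^ 2))) := by
    refine tendsto_const_nhds.mul (Tendsto.mul (tendsto_const_nhds.sub ?_) tendsto_const_nhds)
    have h2 : Tendsto (fun n : ℕ => (n : ℝ) + 2) atTop atTop :=
      tendsto_natCast_atTop_atTop.atTop_add tendsto_const_nhds
    have h3 : Tendsto (fun n : ℕ => ((n:ℝ) + 2)⁻¹) atTop (𝓝 0) := h2.inv_tendsto_atTop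
    simpa only [one_div] using h3
  have hle := le_of_tendsto hlim (Filter.Eventually.of_forall (fun n => by
    refine key (1 / (n + 2)) (by positivity) ?_
    rw [div_lt_one (by positivity)]
    have : (0:ℝ) ≤ n := Nat.cast_nonneg n
    linarith))
  simp only [sub_zero, one_mul] at hle
  linarith

lemma strong_smooth_lower [CompleteSpace E] {h : E → ℝ} {h' : E → E} {ρh : ℝ}
    (hsh : ConvexOn ℝ Set.univ (fun z => h z - ρh / 2 * ‖z‖ ^ 2))
    (hdiff : ∀ z, HasGradientAt h (h' z) z) (v d : E) :
    h v + ⟪h' v, d⟫ + ρh / 2 * ‖d‖ ^ 2 ≤ h (v + d) := by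
  have hq : HasFDerivAt (fun z : E => ρh / 2 * ‖z‖ ^ 2) ((ρh / 2) • (2 • (innerSL ℝ v))) v :=
    (hasStrictFDerivAt_norm_sq v).hasFDerivAt.const_mul (ρh / 2)
  have hD : HasFDerivAt (fun z => h z - ρh / 2 * ‖z‖ ^ 2)
      ((InnerProductSpace.toDual ℝ E (h' v)) - (ρh / 2) • (2 • (innerSL ℝ v))) v :=
    ((hdiff v).hasFDerivAt).sub hq
  have key := convex_fderiv_ineq hsh hD d
  simp only [ContinuousLinearMap.sub_apply, ContinuousLinearMap.smul_apply,
    ContinuousLinearMap.coe_smul', Pi.smul_apply, innerSL_apply_apply, smul_eq_mul, nsmul_eq_mul, Nat.cast_ofNat,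
    InnerProductSpace.toDual_apply_apply] at key
  have hexp : ‖v + d‖ ^ 2 = ‖v‖ ^ 2 + 2 * ⟪v, d⟫ + ‖d‖ ^ 2 := norm_add_sq_real v d
  rw [hexp] at key
  linarith

-- concavity step for rpow
lemma rpow_concave_step {A B θ : ℝ} (hA : 0 < A) (hB : 0 ≤ B) (hBA : B ≤ A)
    (hθ0 : 0 ≤ θ) (hθ1 : θ < 1) :
    (1 - θ) * (A - B) / A ^ θ ≤ A ^ (1 - θ) - B ^ (1 - θ) := by
  set p := 1 - θ with hp
  have hp0 : 0 < p := by simp [hp]; linarith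
  have hs : (-1 : ℝ) ≤ B / A - 1 := by
    have : 0 ≤ B / A := div_nonneg hB hA.le
    linarith
  have h1 : (B / A) ^ p ≤ 1 + p * (B / A - 1) := by
    have := rpow_one_add_le_one_add_mul_self hs hp0.le (by simp [hp]; linarith)
    simpa using this
  have hAp : 0 < A ^ p := Real.rpow_pos_of_pos hA p
  have hAθ : 0 < A ^ θ := Real.rpow_pos_of_pos hA θ
  have h2 : B ^ p = A ^ p * (B / A) ^ p := by
    rw [Real.div_rpow hB hA.le]
    field_simp
  have h3 : A ^ p = A / A ^ θ := by
    rw [hp, Real.rpow_sub hA, Real.rpow_one]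
  have h4 : B ^ p ≤ A ^ p + p * (A ^ p / A) * (B - A) := by
    rw [h2]
    have := mul_le_mul_of_nonneg_left h1 hAp.le
    calc A ^ p * (B / A) ^ p ≤ A ^ p * (1 + p * (B / A - 1)) := this
      _ = A ^ p + p * (A ^ p / A) * (B - A) := by field_simp
  have h5 : A ^ p / A = 1 / A ^ θ := by rw [h3]; field_simp
  rw [h5] at h4
  have : p * (1 / A ^ θ) * (A - B) ≤ A ^ p - B ^ p := by linarith
  calc p * (A - B) / A ^ θ = p * (1 / A ^ θ) * (A - B) := by ring
    _ ≤ A ^ p - B ^ p := this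


-- uniform Lipschitz bound at small scales on a compact set
lemma locally_lipschitz_small_scale {h' : E → E} (hlip : LocallyLipschitz h')
    {s : Set E} (hs : IsCompact s) :
    ∃ δ > (0:ℝ), ∃ L : ℝ, 1 ≤ L ∧ ∀ u ∈ s, ∀ v ∈ s, dist u v < δ →
      dist (h' u) (h' v) ≤ L * dist u v := by
  choose K t ht hK using hlip
  obtain ⟨F, -, hF⟩ := hs.elim_nhds_subcover (fun p => interior (t p))
    (fun p _ => interior_mem_nhds.2 (ht p))
  obtain ⟨δ, hδ0, hδ⟩ := lebesgue_number_lemma_of_metric (c := fun i : F => interior (t i)) hs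
    (fun i => isOpen_interior) (by
      intro u hu
      obtain ⟨p, hp, hup⟩ := Set.mem_iUnion₂.1 (hF hu)
      exact Set.mem_iUnion.2 ⟨⟨p, hp⟩, hup⟩)
  refine ⟨δ, hδ0, max 1 ((F.sup K : NNReal) : ℝ), le_max_left _ _, ?_⟩
  intro u hu v hv hd
  obtain ⟨i, hi⟩ := hδ u hu
  have hui : u ∈ t i := interior_subset (hi (Metric.mem_ball_self hδ0))
  have hvi : v ∈ t i := interior_subset (hi (by rwa [Metric.mem_ball, dist_comm]))
  have := (hK i).dist_le_mul u hui v hvi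
  refine this.trans (mul_le_mul_of_nonneg_right ?_ dist_nonneg)
  calc ((K i : NNReal) : ℝ) ≤ ((F.sup K : NNReal) : ℝ) := by
        exact_mod_cast Finset.le_sup i.2
    _ ≤ max 1 ((F.sup K : NNReal) : ℝ) := le_max_right _ _

end Helpers

set_option maxHeartbeats 1000000 in
/-- global convergence of DCA for the standard DC program under the
Łojasiewicz subgradient inequality. -/
theorem stmt_6
    {E : Type*} [NormedAddCommGroup E] [InnerProductSpace ℝ E] [FiniteDimensional ℝ E]
    (g h : E → ℝ) (hg : ConvexOn ℝ Set.univ g) (hh : ConvexOn ℝ Set.univ h)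
    (ρg ρh : ℝ) (hρg0 : 0 ≤ ρg) (hρh0 : 0 ≤ ρh) (hρ : 0 < ρg + ρh)
    (hsg : ConvexOn ℝ Set.univ (fun z => g z - ρg / 2 * ‖z‖ ^ 2))
    (hsh : ConvexOn ℝ Set.univ (fun z => h z - ρh / 2 * ‖z‖ ^ 2))
    (h' : E → E) (hdiff : ∀ z, HasGradientAt h (h' z) z)
    (hlip : LocallyLipschitz h')
    (f : E → ℝ) (hf : ∀ z, f z = g z - h z)
    (hbelow : BddBelow (Set.range f))
    (x : ℕ → E) (hbx : ∃ R, ∀ k, ‖x k‖ ≤ R)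
    (hdca : ∀ k, ∀ z, g (x (k + 1)) - ⟪h' (x k), x (k + 1)⟫ ≤ g z - ⟪h' (x k), z⟫)
    (fstar : ℝ) (hfstar : Tendsto (fun k => f (x k)) atTop (𝓝 fstar))
    (θ M ε : ℝ) (hθ : θ ∈ Set.Ico (0 : ℝ) 1) (hM : 0 < M) (hε : 0 < ε)
    (hLoja : ∀ z : E,
      (∃ σ : ℕ → ℕ, StrictMono σ ∧ Tendsto (fun j => x (σ j)) atTop (𝓝 z)) →
        ∀ w : E, ‖w - z‖ < ε →
          ∀ y : E, (∀ u, g u ≥ g w + ⟪y, u - w⟫) →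
            |f w - fstar| ^ θ ≤ M * ‖y - h' w‖) :
    ∃ l, Tendsto x atTop (𝓝 l) := by
  obtain ⟨hθ0, hθ1⟩ := hθ
  set ρ : ℝ := ρg + ρh with hρdef
  set p : ℝ := 1 - θ with hpdef
  have hp0 : 0 < p := by simp [hpdef]; linarith
  -- subgradient property of DCA iterates
  have hsub : ∀ k u, g u ≥ g (x (k + 1)) + ⟪h' (x k), u - x (k + 1)⟫ := by
    intro k u
    have := hdca k u
    rw [inner_sub_right]
    linarith
  -- sufficient decrease
  set b : ℕ → ℝ := fun k => ‖x (k + 1) - x k‖ with hbdef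
  have hb0 : ∀ k, 0 ≤ b k := fun k => norm_nonneg _
  have sd : ∀ k, ρ / 2 * (b k) ^ 2 ≤ f (x k) - f (x (k + 1)) := by
    intro k
    set c := h' (x k) with hc
    -- g part
    have hgconv : ConvexOn ℝ Set.univ (fun z => (g z - ⟪c, z⟫) - ρg / 2 * ‖z‖ ^ 2) := by
      have heq : (fun z : E => (g z - ⟪c, z⟫) - ρg / 2 * ‖z‖ ^ 2)
          = fun z => (g z - ρg / 2 * ‖z‖ ^ 2) + -⟪c, z⟫ := by funext z; ring
      rw [heq]
      exact hsg.add (convexOn_neg_inner c)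
    have hgmin : ∀ z, (g (x (k+1)) - ⟪c, x (k+1)⟫) ≤ g z - ⟪c, z⟫ := hdca k
    have hgq := min_quad_growth hgconv hgmin (x k)
    -- h part
    have hhq := strong_smooth_lower hsh hdiff (x k) (x (k + 1) - x k)
    rw [add_sub_cancel] at hhq
    have hns : ‖x k - x (k + 1)‖ = b k := norm_sub_rev _ _
    rw [hns] at hgq
    have hir : ⟪c, x k⟫ - ⟪c, x (k+1)⟫ = -⟪c, x (k+1) - x k⟫ := by
      rw [inner_sub_right]; ring
    have hf1 := hf (x k); have hf2 := hf (x (k + 1))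
    simp only [hρdef]
    have : ρg / 2 * b k ^ 2 + ρh / 2 * b k ^ 2 ≤ f (x k) - f (x (k+1)) := by
      rw [hf1, hf2]
      have e1 : g (x (k+1)) - ⟪c, x (k+1)⟫ + ρg / 2 * b k ^ 2 ≤ g (x k) - ⟪c, x k⟫ := hgq
      have e2 : h (x k) + ⟪c, x (k+1) - x k⟫ + ρh / 2 * b k ^ 2 ≤ h (x (k+1)) := hhq
      have e3 : ⟪c, x k⟫ - ⟪c, x (k+1)⟫ = -⟪c, x (k+1) - x k⟫ := hir
      linarith
    linarith
  -- monotonicity and positivity of a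
  set a : ℕ → ℝ := fun k => f (x k) - fstar with hadef
  have hρ2 : 0 < ρ / 2 := by positivity
  have hdec : ∀ k, a (k + 1) ≤ a k := by
    intro k
    have := sd k
    have h2 : 0 ≤ ρ / 2 * (b k) ^ 2 := by positivity
    simp only [hadef]
    linarith
  have hmono : ∀ k m, k ≤ m → a m ≤ a k := by
    intro k m hkm
    induction m, hkm using Nat.le_induction with
    | base => exact le_rfl
    | succ n hn ih => exact (hdec n).trans ih
  have halim : Tendsto a atTop (𝓝 0) := by
    have := hfstar.sub_const fstar
    simpa using this
  have ha0 : ∀ k, 0 ≤ a k := by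
    intro k
    have : Tendsto (fun m => a (m + k)) atTop (𝓝 0) := halim.comp (tendsto_add_atTop_nat k)
    exact le_of_tendsto this (Filter.Eventually.of_forall fun m => hmono k (m + k) (by omega))
  have hsd' : ∀ k, ρ / 2 * (b k) ^ 2 ≤ a k - a (k + 1) := by
    intro k; have := sd k; simp only [hadef]; linarith
  -- b tends to zero
  have hbtend : Tendsto b atTop (𝓝 0) := by
    have hsq : Tendsto (fun k => (b k) ^ 2) atTop (𝓝 0) := by
      have hub : Tendsto (fun k => (2 / ρ) * (a k - a (k + 1))) atTop (𝓝 0) := by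
        have h1 : Tendsto (fun k => a (k + 1)) atTop (𝓝 0) :=
          halim.comp (tendsto_add_atTop_nat 1)
        have := (halim.sub h1).const_mul (2 / ρ)
        simpa using this
      refine tendsto_of_tendsto_of_tendsto_of_le_of_le tendsto_const_nhds hub
        (fun k => by positivity) (fun k => ?_)
      have h1 := hsd' k
      rw [show (2:ℝ) / ρ * (a k - a (k + 1)) = (a k - a (k + 1)) / (ρ / 2) by
        field_simp, le_div_iff₀ hρ2]
      nlinarith
    have := (Real.continuous_sqrt.tendsto 0).comp hsq
    simp only [Function.comp_def, Real.sqrt_zero] at this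
    exact this.congr fun k => Real.sqrt_sq (hb0 k)
  -- bounded in a compact ball
  obtain ⟨R, hR⟩ := hbx
  set s : Set E := Metric.closedBall (0 : E) R with hsdef
  have hscomp : IsCompact s := isCompact_closedBall 0 R
  have hxs : ∀ k, x k ∈ s := by
    intro k
    simp only [hsdef, Metric.mem_closedBall, dist_zero_right]
    exact hR k
  obtain ⟨δ, hδ0, L, hL1, hL⟩ := locally_lipschitz_small_scale hlip hscomp
  have hL0 : 0 < L := lt_of_lt_of_le one_pos hL1
  -- cluster point proximity
  have hNear : ∀ᶠ k in atTop, ∃ z : E,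
      (∃ σ : ℕ → ℕ, StrictMono σ ∧ Tendsto (fun j => x (σ j)) atTop (𝓝 z))
        ∧ ‖x k - z‖ < ε := by
    by_contra hcon
    rw [Filter.not_eventually] at hcon
    obtain ⟨σ, hσmono, hσ⟩ := Filter.extraction_of_frequently_atTop hcon
    obtain ⟨z, hzs, τ, hτmono, hτ⟩ := hscomp.tendsto_subseq (fun n => hxs (σ n))
    have hcluster : ∃ σ' : ℕ → ℕ, StrictMono σ' ∧ Tendsto (fun j => x (σ' j)) atTop (𝓝 z) :=
      ⟨σ ∘ τ, hσmono.comp hτmono, hτ⟩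
    obtain ⟨N, hN⟩ := Metric.tendsto_atTop.1 hτ ε hε
    exact hσ (τ N) ⟨z, hcluster, by simpa [dist_eq_norm] using hN N le_rfl⟩
  -- KL inequality along the sequence
  have hKL : ∀ᶠ k in atTop, (a (k+1)) ^ θ ≤ M * L * b k := by
    have hbsmall : ∀ᶠ k in atTop, b k < δ := hbtend.eventually_lt_const hδ0
    have hNear' : ∀ᶠ k in atTop, ∃ z : E,
        (∃ σ' : ℕ → ℕ, StrictMono σ' ∧ Tendsto (fun j => x (σ' j)) atTop (𝓝 z))
          ∧ ‖x (k+1) - z‖ < ε := by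
      obtain ⟨N, hN⟩ := eventually_atTop.1 hNear
      exact eventually_atTop.2 ⟨N, fun k hk => hN (k+1) (by omega)⟩
    filter_upwards [hbsmall, hNear'] with k hbk ⟨z, hzc, hznear⟩
    have hKL1 := hLoja z hzc (x (k+1)) hznear (h' (x k)) (hsub k)
    have habs : |f (x (k+1)) - fstar| = a (k+1) := abs_of_nonneg (ha0 (k+1))
    rw [habs] at hKL1
    refine hKL1.trans ?_
    have hd : dist (x k) (x (k+1)) = b k := by rw [dist_eq_norm, norm_sub_rev]
    have := hL (x k) (hxs k) (x (k+1)) (hxs (k+1)) (by rwa [hd])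
    rw [hd, dist_eq_norm] at this
    have h2 : ‖h' (x k) - h' (x (k+1))‖ ≤ L * b k := this
    calc M * ‖h' (x k) - h' (x (k+1))‖ ≤ M * (L * b k) :=
          mul_le_mul_of_nonneg_left h2 hM.le
      _ = M * L * b k := by ring
  -- choose starting index
  obtain ⟨N, hN⟩ := eventually_atTop.1 hKL
  set Λ : ℕ → ℝ := fun k => a k ^ p with hΛdef
  have hΛ0 : ∀ k, 0 ≤ Λ k := fun k => Real.rpow_nonneg (ha0 k) p
  set C : ℝ := 2 * M * L / (p * ρ) with hCdef
  have hC0 : 0 < C := div_pos (by positivity) (by positivity)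
  have key : ∀ k, N ≤ k → b (k+1) ≤ 1/2 * b k + C/2 * (Λ (k+1) - Λ (k+2)) := by
    intro k hk
    rcases eq_or_lt_of_le (ha0 (k+1)) with hA | hA
    · have hA1 : a (k+1) = 0 := hA.symm
      have hA2 : a (k+2) = 0 := le_antisymm (by have := hdec (k+1); linarith) (ha0 _)
      have hb1 : b (k+1) = 0 := by
        have h1 := hsd' (k+1)
        rw [hA1, hA2] at h1
        have hsq : b (k+1)^2 = 0 := le_antisymm (by nlinarith) (sq_nonneg _)
        exact pow_eq_zero_iff two_ne_zero |>.1 hsq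
      have hΛ1 : Λ (k+1) = 0 := by simp [hΛdef, hA1, Real.zero_rpow hp0.ne']
      have hΛ2 : Λ (k+2) = 0 := by simp [hΛdef, hA2, Real.zero_rpow hp0.ne']
      rw [hb1, hΛ1, hΛ2]
      have := hb0 k
      simp only [sub_zero, sub_self, mul_zero, add_zero]
      linarith
    · have hKLk := hN k hk
      have hT0 : 0 < a (k+1) ^ θ := Real.rpow_pos_of_pos hA θ
      have hbk0 : 0 < b k := by
        rcases lt_or_eq_of_le (hb0 k) with h | h
        · exact h
        · exfalso; rw [← h, mul_zero] at hKLk; linarith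
      have hcav := rpow_concave_step hA (ha0 (k+2)) (hdec (k+1)) hθ0 hθ1
      have hdiff0 : 0 ≤ a (k+1) - a (k+2) := by have := hdec (k+1); linarith
      have hD0 : 0 ≤ Λ (k+1) - Λ (k+2) :=
        le_trans (by positivity) hcav
      have hstep : b (k+1)^2 ≤ C * (Λ (k+1) - Λ (k+2)) * b k := by
        have h1 : ρ/2 * b (k+1)^2 ≤ a (k+1) - a (k+2) := hsd' (k+1)
        have hcav' : p * (a (k+1) - a (k+2)) / a (k+1) ^ θ ≤ Λ (k+1) - Λ (k+2) := hcav
        have h2 : p * (ρ/2 * b (k+1)^2) / (a (k+1) ^ θ) ≤ Λ (k+1) - Λ (k+2) := by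
          refine le_trans ?_ hcav'
          gcongr
        have h2' : p * (ρ/2 * b (k+1)^2) ≤ (Λ (k+1) - Λ (k+2)) * a (k+1)^θ :=
          (div_le_iff₀ hT0).1 h2
        have h3 : (Λ (k+1) - Λ (k+2)) * a (k+1)^θ ≤ (Λ (k+1) - Λ (k+2)) * (M*L*b k) :=
          mul_le_mul_of_nonneg_left hKLk hD0
        have h4 : p * (ρ/2 * b (k+1)^2) ≤ (Λ (k+1) - Λ (k+2)) * (M*L*b k) := le_trans h2' h3
        rw [hCdef, div_mul_eq_mul_div, div_mul_eq_mul_div, le_div_iff₀ (by positivity)]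
        clear_value p ρ a b Λ
        nlinarith [h4]
      nlinarith [sq_nonneg (C * (Λ (k+1) - Λ (k+2)) - b k), hstep, hb0 (k+1), hb0 k,
        mul_nonneg hC0.le hD0]
  -- summability
  have hterm : ∀ j, b (N+1+j) ≤ 1/2 * b (N+j) + C/2 * (Λ (N+1+j) - Λ (N+1+(j+1))) := by
    intro j
    have := key (N+j) (Nat.le_add_right N j)
    simpa [show N+j+1 = N+1+j from by omega, show N+j+2 = N+1+(j+1) from by omega] using this
  have hsumbound : ∀ m, (∑ j ∈ Finset.range m, b (N+1+j)) ≤ b N + C * Λ (N+1) := by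
    intro m
    have h1 : (∑ j ∈ Finset.range m, b (N+1+j))
        ≤ 1/2 * (∑ j ∈ Finset.range m, b (N+j)) + C/2 * (Λ (N+1) - Λ (N+1+m)) := by
      calc (∑ j ∈ Finset.range m, b (N+1+j)) ≤ ∑ j ∈ Finset.range m,
            (1/2 * b (N+j) + C/2 * (Λ (N+1+j) - Λ (N+1+(j+1)))) :=
            Finset.sum_le_sum (fun j _ => hterm j)
        _ = 1/2 * (∑ j ∈ Finset.range m, b (N+j))
              + C/2 * ((fun j => Λ (N+1+j)) 0 - (fun j => Λ (N+1+j)) m) := by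
            rw [Finset.sum_add_distrib, ← Finset.mul_sum, ← Finset.mul_sum,
              Finset.sum_range_sub' (fun j => Λ (N+1+j))]
        _ = 1/2 * (∑ j ∈ Finset.range m, b (N+j)) + C/2 * (Λ (N+1) - Λ (N+1+m)) := by
            simp
    have h2 : (∑ j ∈ Finset.range m, b (N+j))
        ≤ b N + ∑ j ∈ Finset.range m, b (N+1+j) := by
      cases m with
      | zero => simpa using hb0 N
      | succ m' =>
        rw [Finset.sum_range_succ']
        have e : ∀ j, b (N+(j+1)) = b (N+1+j) := fun j => by congr 1; omega
        have hs2 : (∑ j ∈ Finset.range m', b (N+(j+1)))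
            = ∑ j ∈ Finset.range m', b (N+1+j) :=
          Finset.sum_congr rfl (fun j _ => e j)
        rw [hs2]
        have eN : b (N+0) = b N := by norm_num
        have hmono2 : (∑ j ∈ Finset.range m', b (N+1+j))
            ≤ ∑ j ∈ Finset.range (m'+1), b (N+1+j) :=
          Finset.sum_le_sum_of_subset_of_nonneg
            (Finset.range_subset_range.2 (Nat.le_succ m')) (fun j _ _ => hb0 _)
        linarith [hmono2, eN]
    have h3 : 0 ≤ Λ (N+1+m) := hΛ0 _
    nlinarith [mul_nonneg hC0.le h3]
  have hsummable : Summable (fun j => b (N + 1 + j)) :=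
    summable_of_sum_range_le (fun n => hb0 _) hsumbound
  have hsummable2 : Summable (fun n => dist (x n) (x (n+1))) := by
    have h1 : Summable (fun j => b (j + (N+1))) :=
      hsummable.congr (fun j => by rw [add_comm])
    have h2 : Summable b := (summable_nat_add_iff (N+1)).1 h1
    exact h2.congr (fun n => by rw [hbdef, dist_eq_norm, norm_sub_rev])
  exact cauchySeq_tendsto_of_complete (cauchySeq_of_summable_dist hsummable2)
end

section
/- Let C ⊆ E be a nonempty closed convex set, g, h : E → ℝ convex with g ρ_g-strongly convex on C and h ρ_h-strongly convex on C, ρ_g + ρ_h > 0, h differentiable on E with locally Lipschitz gradient ∇h, and f = g − h bounded below on C. Let (x^k) be a bounded DCA sequence for the constrained problem: x^0 ∈ C and for every k ≥ 0, x^{k+1} ∈ C minimizes x ↦ g(x) − ⟨∇h(x^k), x⟩ over C. Let f* = lim_{k→∞} f(x^k). Suppose the Łojasiewicz subgradient inequality holds at cluster points of (x^k): there exist θ ∈ [0, 1), M > 0 and ε > 0 such that for every cluster point z of (x^k), every x ∈ C with ‖x − z‖ < ε, and every y ∈ E satisfying g(w) ≥ g(x) + ⟨y, w − x⟩ for all w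 ∈ C, one has |f(x) − f*|^θ ≤ M‖y − ∇h(x)‖ (with the convention 0⁰ = 1). Then the sequence (x^k) converges. -/
open scoped RealInnerProductSpace
open Filter Topology
open Set

section Helpers
variable {E : Type*} [NormedAddCommGroup E] [InnerProductSpace ℝ E]

lemma aux_norm_combo (a b : E) (t : ℝ) :
    (1-t)*‖a‖^2 + t*‖b‖^2 - ‖(1-t)•a + t•b‖^2 = t*(1-t)*‖a-b‖^2 := by
  have h1 : ‖(1-t)•a + t•b‖^2 = ⟪(1-t)•a + t•b, (1-t)•a + t•b⟫ :=
    (real_inner_self_eq_norm_sq _).symm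
  have h2 : ‖a-b‖^2 = ⟪a-b, a-b⟫ := (real_inner_self_eq_norm_sq _).symm
  have h3 : ‖a‖^2 = ⟪a, a⟫ := (real_inner_self_eq_norm_sq _).symm
  have h4 : ‖b‖^2 = ⟪b, b⟫ := (real_inner_self_eq_norm_sq _).symm
  rw [h1, h2, h3, h4]
  simp only [inner_add_left, inner_add_right, inner_sub_left, inner_sub_right,
    real_inner_smul_left, real_inner_smul_right, real_inner_comm a b]
  ring

lemma aux_strong_min {C : Set E} (hCconv : Convex ℝ C) {φ : E → ℝ} {ρ : ℝ}
    (hψ : ConvexOn ℝ C (fun z => φ z - ρ/2*‖z‖^2)) {xs : E} (hxs : xs ∈ C)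
    (hmin : ∀ z ∈ C, φ xs ≤ φ z) :
    ∀ z ∈ C, φ xs + ρ/2*‖z - xs‖^2 ≤ φ z := by
  intro z hz
  have key : ∀ t : ℝ, t ∈ Ioo (0:ℝ) 1 → φ xs + ρ/2*(1-t)*‖z - xs‖^2 ≤ φ z := by
    intro t ht
    have ht0 : (0:ℝ) < t := ht.1
    have ht1 : t < 1 := ht.2
    have hmem : (1-t)•xs + t•z ∈ C := hCconv hxs hz (by linarith) (le_of_lt ht0) (by ring)
    have hconv := hψ.2 hxs hz (by linarith : (0:ℝ) ≤ 1 - t) (le_of_lt ht0) (by ring)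
    simp only [smul_eq_mul] at hconv
    have hm := hmin _ hmem
    have hcombo := aux_norm_combo xs z t
    have hns : ‖xs - z‖^2 = ‖z - xs‖^2 := by rw [norm_sub_rev]
    rw [hns] at hcombo
    have hc2 : ρ/2*((1-t)*‖xs‖^2 + t*‖z‖^2 - ‖(1-t)•xs + t•z‖^2)
        = ρ/2*(t*(1-t)*‖z - xs‖^2) := by rw [hcombo]
    have ht' : t * (φ xs + ρ/2*(1-t)*‖z - xs‖^2) ≤ t * φ z := by linarith
    exact le_of_mul_le_mul_left ht' ht0
  have htend : Tendsto (fun t : ℝ => φ xs + ρ/2*(1-t)*‖z - xs‖^2) (𝓝[>] (0:ℝ))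
      (𝓝 (φ xs + ρ/2*(1-0)*‖z - xs‖^2)) := by
    apply Tendsto.mono_left _ nhdsWithin_le_nhds
    exact (Continuous.tendsto (by continuity) 0)
  have hev : ∀ᶠ t in 𝓝[>] (0:ℝ), (fun t : ℝ => φ xs + ρ/2*(1-t)*‖z - xs‖^2) t ≤ φ z := by
    filter_upwards [Ioo_mem_nhdsGT (zero_lt_one)] using key
  have := le_of_tendsto htend hev
  simpa using this

end Helpers

section Helpers2
variable {E : Type*} [NormedAddCommGroup E] [InnerProductSpace ℝ E] [CompleteSpace E]

lemma aux_grad_ineq {C : Set E} (hCconv : Convex ℝ C) {φ : E → ℝ} {ρ : ℝ}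
    (hψ : ConvexOn ℝ C (fun z => φ z - ρ/2*‖z‖^2)) {φ' a b : E}
    (ha : a ∈ C) (hb : b ∈ C) (hd : HasGradientAt φ φ' a) :
    φ a + ⟪φ', b - a⟫ + ρ/2*‖b - a‖^2 ≤ φ b := by
  set v := b - a with hv
  set q : ℝ → ℝ := fun t => φ (a + t • v) - ρ/2*‖a + t • v‖^2 with hq
  -- q is convex on [0,1]
  have hqc : ConvexOn ℝ (Icc (0:ℝ) 1) q := by
    have h1 := hψ.comp_affineMap (AffineMap.lineMap a b)
    have h2 : Icc (0:ℝ) 1 ⊆ (AffineMap.lineMap a b) ⁻¹' C := by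
      intro t ht
      exact hCconv.lineMap_mem ha hb ht
    have h3 := h1.subset h2 (convex_Icc 0 1)
    have heq : q = ((fun z => φ z - ρ/2*‖z‖^2) ∘ (AffineMap.lineMap a b)) := by
      funext t
      simp only [hq, Function.comp_apply, AffineMap.lineMap_apply_module, hv]
      have harg : a + t • (b - a) = (1 - t) • a + t • b := by module
      rw [harg]
    rw [heq]; exact h3
  -- derivative of q at 0
  have hcurve : HasDerivAt (fun t : ℝ => a + t • v) v 0 := by
    simpa using ((hasDerivAt_id (0:ℝ)).smul_const v).const_add a
  have hφpart : HasDerivAt (fun t : ℝ => φ (a + t • v)) ⟪φ', v⟫ 0 := by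
    have hfd : HasFDerivAt φ (InnerProductSpace.toDual ℝ E φ') (a + (0:ℝ) • v) := by
      simp only [zero_smul, add_zero]; exact hd.hasFDerivAt
    have := hfd.comp_hasDerivAt 0 hcurve
    simpa [InnerProductSpace.toDual_apply_apply, Function.comp_def] using this
  have hnpart : HasDerivAt (fun t : ℝ => ‖a + t • v‖^2) (2*⟪a, v⟫) 0 := by
    have h1 : HasDerivAt (fun t : ℝ => ⟪(fun s : ℝ => a + s • v) t, (fun s : ℝ => a + s • v) t⟫)
        (⟪a + (0:ℝ) • v, v⟫ + ⟪v, a + (0:ℝ) • v⟫) 0 := HasDerivAt.inner ℝ hcurve hcurve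
    have h2 : (fun t : ℝ => ⟪a + t • v, a + t • v⟫) = fun t : ℝ => ‖a + t • v‖^2 := by
      funext t; exact real_inner_self_eq_norm_sq _
    rw [h2] at h1
    convert h1 using 1
    simp [real_inner_comm]
    ring
  have hq' : HasDerivAt q (⟪φ', v⟫ - ρ/2*(2*⟪a, v⟫)) 0 := hφpart.sub (hnpart.const_mul (ρ/2))
  -- slope bound
  have hslope : ∀ t ∈ Ioo (0:ℝ) 1, slope q 0 t ≤ q 1 - q 0 := by
    intro t ht
    have := hqc.secant_mono (a := 0) (x := t) (y := 1)
      (by simp) ⟨le_of_lt ht.1, le_of_lt ht.2⟩ (by simp)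
      (ne_of_gt ht.1) one_ne_zero (le_of_lt ht.2)
    rw [slope_def_field]
    simpa using this
  have htend : Tendsto (slope q 0) (𝓝[>] (0:ℝ)) (𝓝 (⟪φ', v⟫ - ρ/2*(2*⟪a, v⟫))) :=
    (hasDerivAt_iff_tendsto_slope.mp hq').mono_left
      (nhdsWithin_mono 0 (fun x hx => ne_of_gt hx))
  have hle : ⟪φ', v⟫ - ρ/2*(2*⟪a, v⟫) ≤ q 1 - q 0 := by
    apply le_of_tendsto htend
    filter_upwards [Ioo_mem_nhdsGT (zero_lt_one)] using hslope
  -- unpack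
  have hq0 : q 0 = φ a - ρ/2*‖a‖^2 := by simp [q]
  have hq1 : q 1 = φ b - ρ/2*‖b‖^2 := by simp [q, hv]
  have hbb : ‖b‖^2 = ‖a‖^2 + 2*⟪a, v⟫ + ‖v‖^2 := by
    have : b = a + v := by rw [hv]; abel
    rw [this, norm_add_sq_real]
  rw [hq0, hq1] at hle
  have hc2 : ρ/2*‖b‖^2 = ρ/2*(‖a‖^2 + 2*⟪a, v⟫ + ‖v‖^2) := by rw [hbb]
  linarith

end Helpers2

lemma aux_concave {θ a b : ℝ} (hθ0 : 0 ≤ θ) (hθ1 : θ < 1) (hb : 0 < b) (hba : b ≤ a) :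
    a ^ (-θ) * (a - b) ≤ (a ^ (1-θ) - b ^ (1-θ)) / (1-θ) := by
  have ha : 0 < a := lt_of_lt_of_le hb hba
  have h1 : (b/a) ^ (1-θ) * 1 ^ θ ≤ (1-θ)*(b/a) + θ*1 :=
    Real.geom_mean_le_arith_mean2_weighted (by linarith) hθ0 (by positivity) zero_le_one
      (by ring)
  rw [Real.one_rpow, mul_one, mul_one, Real.div_rpow hb.le ha.le] at h1
  have hA : (0:ℝ) < a ^ (1-θ) := Real.rpow_pos_of_pos ha _
  have key : b ^ (1-θ) ≤ a ^ (1-θ) * ((1-θ)*(b/a) + θ) := by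
    calc b ^ (1-θ) = a ^ (1-θ) * (b ^ (1-θ) / a ^ (1-θ)) := by field_simp
    _ ≤ a ^ (1-θ) * ((1-θ)*(b/a) + θ) := by
        exact mul_le_mul_of_nonneg_left h1 hA.le
  have h3 : a ^ (1-θ) = a ^ (-θ) * a := by
    rw [show (1:ℝ)-θ = -θ + 1 by ring, Real.rpow_add ha, Real.rpow_one]
  rw [le_div_iff₀ (by linarith : (0:ℝ) < 1-θ)]
  have hexp : a ^ (1-θ) * ((1-θ)*(b/a) + θ) = a ^ (1-θ) * θ + a ^ (-θ) * (1-θ) * b := by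
    rw [h3]; field_simp; ring
  rw [hexp] at key
  nlinarith [key, h3]

lemma aux_summable {u v : ℕ → ℝ} (hu : ∀ n, 0 ≤ u n) (hrec : ∀ n, u (n+1) ≤ u n / 2 + v n)
    {V : ℝ} (hv : ∀ n, ∑ i ∈ Finset.range n, v i ≤ V) : Summable u := by
  have hV : 0 ≤ V := by simpa using hv 0
  apply summable_of_sum_range_le (c := 2*(u 0 + V)) hu
  intro n
  have h1 : ∑ i ∈ Finset.range n, u i ≤ ∑ i ∈ Finset.range (n+1), u i := by
    apply Finset.sum_le_sum_of_subset_of_nonneg (Finset.range_subset_range.2 (Nat.le_succ n))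
    intro i _ _; exact hu i
  have h2 : ∑ i ∈ Finset.range (n+1), u i = (∑ i ∈ Finset.range n, u (i+1)) + u 0 :=
    Finset.sum_range_succ' u n
  have h3 : ∑ i ∈ Finset.range n, u (i+1) ≤ ∑ i ∈ Finset.range n, (u i / 2 + v i) :=
    Finset.sum_le_sum (fun i _ => hrec i)
  have h4 : ∑ i ∈ Finset.range n, (u i / 2 + v i)
      = (∑ i ∈ Finset.range n, u i)/2 + ∑ i ∈ Finset.range n, v i := by
    rw [Finset.sum_add_distrib, Finset.sum_div]
  have h5 := hv n
  linarith

lemma aux_lip_compact {E : Type*} [NormedAddCommGroup E] {f : E → E}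
    (hf : LocallyLipschitz f) {s : Set E} (hs : IsCompact s) :
    ∃ L : ℝ, 0 < L ∧ ∀ a ∈ s, ∀ b ∈ s, ‖f a - f b‖ ≤ L * ‖a - b‖ := by
  by_contra hcon
  push_neg at hcon
  choose a ha b hb hab using fun n : ℕ => hcon ((n:ℝ)+1) (by positivity)
  obtain ⟨B, hB⟩ : ∃ B, ∀ y ∈ s, ‖f y‖ ≤ B :=
    hs.exists_bound_of_continuousOn hf.continuous.continuousOn
  have hB0 : 0 ≤ B := le_trans (norm_nonneg _) (hB _ (ha 0))
  obtain ⟨p, hps, φ, hφ, hφtend⟩ := hs.tendsto_subseq ha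
  have hdist : ∀ j : ℕ, ‖a (φ j) - b (φ j)‖ ≤ 2*B/((j:ℝ)+1) := by
    intro j
    have h1 : ((φ j : ℝ)+1) * ‖a (φ j) - b (φ j)‖ < ‖f (a (φ j)) - f (b (φ j))‖ := hab (φ j)
    have h2 : ‖f (a (φ j)) - f (b (φ j))‖ ≤ 2*B := by
      calc ‖f (a (φ j)) - f (b (φ j))‖ ≤ ‖f (a (φ j))‖ + ‖f (b (φ j))‖ := norm_sub_le _ _
      _ ≤ 2*B := by have := hB _ (ha (φ j)); have := hB _ (hb (φ j)); linarith
    have h3n : j ≤ φ j := hφ.le_apply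
    have h3 : ((j:ℝ)+1) ≤ ((φ j : ℝ)+1) := by
      have : (j:ℝ) ≤ (φ j : ℝ) := by exact_mod_cast h3n
      linarith
    have h4 : ((j:ℝ)+1) * ‖a (φ j) - b (φ j)‖ ≤ 2*B := by
      calc ((j:ℝ)+1) * ‖a (φ j) - b (φ j)‖ ≤ ((φ j:ℝ)+1) * ‖a (φ j) - b (φ j)‖ :=
            mul_le_mul_of_nonneg_right h3 (norm_nonneg _)
      _ ≤ 2*B := le_of_lt (lt_of_lt_of_le h1 h2)
    rw [le_div_iff₀ (by positivity : (0:ℝ) < (j:ℝ)+1)]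
    linarith [h4]
  have hd0 : Tendsto (fun j => ‖a (φ j) - b (φ j)‖) atTop (𝓝 0) := by
    apply squeeze_zero (fun j => norm_nonneg _) hdist
    have : Tendsto (fun j : ℕ => ((j:ℝ)+1)) atTop atTop :=
      tendsto_atTop_add_const_right _ 1 tendsto_natCast_atTop_atTop
    simpa using Tendsto.div_atTop tendsto_const_nhds this
  have hbtend : Tendsto (fun j => b (φ j)) atTop (𝓝 p) := by
    have h1 : Tendsto (fun j => a (φ j) - b (φ j)) atTop (𝓝 0) :=
      tendsto_zero_iff_norm_tendsto_zero.2 hd0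
    have h2 := (hφtend.sub h1)
    simpa using h2
  obtain ⟨K, t, ht, hK⟩ := hf p
  have hat : ∀ᶠ j in atTop, a (φ j) ∈ t := hφtend.eventually_mem ht
  have hbt : ∀ᶠ j in atTop, b (φ j) ∈ t := hbtend.eventually_mem ht
  obtain ⟨N, hN⟩ := exists_nat_ge (K:ℝ)
  have hjN : ∀ᶠ j in atTop, (N:ℕ) ≤ φ j := (hφ.tendsto_atTop).eventually_ge_atTop N
  obtain ⟨j, ⟨⟨hj1, hj2⟩, hj3⟩⟩ := ((hat.and hbt).and hjN).exists
  have hlip : ‖f (a (φ j)) - f (b (φ j))‖ ≤ (K:ℝ) * ‖a (φ j) - b (φ j)‖ := by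
    have := (lipschitzOnWith_iff_dist_le_mul.mp hK) _ hj1 _ hj2
    rwa [dist_eq_norm, dist_eq_norm] at this
  have h1 : ((φ j : ℝ)+1) * ‖a (φ j) - b (φ j)‖ < ‖f (a (φ j)) - f (b (φ j))‖ := hab (φ j)
  have hc : (0:ℝ) < ‖a (φ j) - b (φ j)‖ := by
    by_contra hc'
    push_neg at hc'
    have : ‖a (φ j) - b (φ j)‖ = 0 := le_antisymm hc' (norm_nonneg _)
    rw [this] at h1 hlip
    simp at h1 hlip
    exact h1 hlip
  have hKj : (K:ℝ) ≤ ((φ j : ℝ)) := le_trans hN (by exact_mod_cast hj3)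
  nlinarith [h1, hlip, hc, hKj]


lemma aux_amgm {s A B : ℝ} (hs : 0 ≤ s) (hA : 0 ≤ A) (hB : 0 ≤ B) (h : s^2 ≤ A*B) :
    s ≤ A/2 + B/2 := by
  nlinarith [sq_nonneg (A-B)]

/-- global convergence of DCA for the convex constrained DC program
under the Łojasiewicz subgradient inequality. -/
theorem stmt_7
    {E : Type*} [NormedAddCommGroup E] [InnerProductSpace ℝ E] [FiniteDimensional ℝ E]
    (C : Set E) (hCne : C.Nonempty) (hCclosed : IsClosed C) (hCconv : Convex ℝ C)
    (g h : E → ℝ) (hg : ConvexOn ℝ Set.univ g) (hh : ConvexOn ℝ Set.univ h)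
    (ρg ρh : ℝ) (hρg0 : 0 ≤ ρg) (hρh0 : 0 ≤ ρh) (hρ : 0 < ρg + ρh)
    (hsg : ConvexOn ℝ C (fun z => g z - ρg / 2 * ‖z‖ ^ 2))
    (hsh : ConvexOn ℝ C (fun z => h z - ρh / 2 * ‖z‖ ^ 2))
    (h' : E → E) (hdiff : ∀ z, HasGradientAt h (h' z) z)
    (hlip : LocallyLipschitz h')
    (f : E → ℝ) (hf : ∀ z, f z = g z - h z)
    (hbelow : BddBelow (f '' C))
    (x : ℕ → E) (hbx : ∃ R, ∀ k, ‖x k‖ ≤ R)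
    (hx0 : x 0 ∈ C) (hxC : ∀ k, x (k + 1) ∈ C)
    (hdca : ∀ k, ∀ z ∈ C, g (x (k + 1)) - ⟪h' (x k), x (k + 1)⟫ ≤ g z - ⟪h' (x k), z⟫)
    (fstar : ℝ) (hfstar : Tendsto (fun k => f (x k)) atTop (𝓝 fstar))
    (θ M ε : ℝ) (hθ : θ ∈ Set.Ico (0 : ℝ) 1) (hM : 0 < M) (hε : 0 < ε)
    (hLoja : ∀ z : E,
      (∃ σ : ℕ → ℕ, StrictMono σ ∧ Tendsto (fun j => x (σ j)) atTop (𝓝 z)) →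
        ∀ w ∈ C, ‖w - z‖ < ε →
          ∀ y : E, (∀ u ∈ C, g u ≥ g w + ⟪y, u - w⟫) →
            |f w - fstar| ^ θ ≤ M * ‖y - h' w‖) :
    ∃ l, Tendsto x atTop (𝓝 l) := by
  obtain ⟨R, hR⟩ := hbx
  obtain ⟨hθ0, hθ1⟩ := hθ
  have hxCk : ∀ k, x k ∈ C := by
    intro k
    cases k with
    | zero => exact hx0
    | succ n => exact hxC n
  -- subgradient property of the iterates
  have hsub : ∀ k, ∀ u ∈ C, g u ≥ g (x (k+1)) + ⟪h' (x k), u - x (k+1)⟫ := by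
    intro k u hu
    have h1 := hdca k u hu
    have hi : ⟪h' (x k), u - x (k+1)⟫ = ⟪h' (x k), u⟫ - ⟪h' (x k), x (k+1)⟫ :=
      inner_sub_right _ _ _
    rw [ge_iff_le, hi]
    linarith
  -- sufficient decrease
  have hdec : ∀ k, f (x (k+1)) + (ρg+ρh)/2 * ‖x (k+1) - x k‖^2 ≤ f (x k) := by
    intro k
    set p := h' (x k) with hp
    have hlin : ConvexOn ℝ C (fun z => -⟪p, z⟫) := by
      refine ⟨hCconv, fun u hu w hw s t hs ht hst => le_of_eq ?_⟩
      simp only [inner_add_right, real_inner_smul_right, smul_eq_mul]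
      ring
    have hφconv : ConvexOn ℝ C (fun z => (g z - ⟪p, z⟫) - ρg/2*‖z‖^2) := by
      have heq : (fun z => (g z - ⟪p, z⟫) - ρg/2*‖z‖^2)
          = (fun z => (g z - ρg/2*‖z‖^2) + (-⟪p, z⟫)) := by
        funext z; ring
      rw [heq]
      exact hsg.add hlin
    have hmin : ∀ z ∈ C, (g (x (k+1)) - ⟪p, x (k+1)⟫) ≤ (g z - ⟪p, z⟫) :=
      fun z hz => hdca k z hz
    have hsm := aux_strong_min hCconv hφconv (hxC k) hmin (x k) (hxCk k)
    have hgi := aux_grad_ineq hCconv hsh (hxCk k) (hxC k) (hdiff (x k))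
    have hi : ⟪p, x (k+1) - x k⟫ = ⟪p, x (k+1)⟫ - ⟪p, x k⟫ := inner_sub_right _ _ _
    have hnorm : ‖x k - x (k+1)‖^2 = ‖x (k+1) - x k‖^2 := by rw [norm_sub_rev]
    rw [hnorm] at hsm
    rw [hi] at hgi
    rw [hf (x k), hf (x (k+1))]
    linarith
  have hstep : ∀ k, f (x (k+1)) ≤ f (x k) := by
    intro k
    have := hdec k
    nlinarith [sq_nonneg ‖x (k+1) - x k‖]
  have hanti : ∀ k l, k ≤ l → f (x l) ≤ f (x k) := by
    intro k l hkl
    induction l, hkl using Nat.le_induction with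
    | base => exact le_refl _
    | succ n hn ih => exact le_trans (hstep n) ih
  have hfk_ge : ∀ k, fstar ≤ f (x k) := by
    intro k
    apply le_of_tendsto hfstar
    filter_upwards [eventually_ge_atTop k] with m hm using hanti k m hm
  -- compactness / Lipschitz setup
  have hRball : ∀ k, x k ∈ Metric.closedBall (0:E) R := by
    intro k
    simpa [Metric.mem_closedBall, dist_zero_right] using hR k
  have hcomp : IsCompact (Metric.closedBall (0:E) R) := isCompact_closedBall _ _
  obtain ⟨L, hL0, hLip⟩ := aux_lip_compact hlip hcomp
  have hLd : ∀ k, ‖h' (x k) - h' (x (k+1))‖ ≤ L * ‖x (k+1) - x k‖ := by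
    intro k
    have h1 := hLip _ (hRball k) _ (hRball (k+1))
    rwa [norm_sub_rev (x k)] at h1
  -- points eventually close to some cluster point
  have hclose : ∀ᶠ k in atTop, ∃ z : E,
      (∃ σ : ℕ → ℕ, StrictMono σ ∧ Tendsto (fun j => x (σ j)) atTop (𝓝 z))
        ∧ ‖x k - z‖ < ε := by
    by_contra hcon
    rw [Filter.not_eventually] at hcon
    obtain ⟨φ, hφmono, hφprop⟩ := Filter.extraction_of_frequently_atTop hcon
    obtain ⟨z0, hz0mem, ψ, hψ, hψtend⟩ :=
      hcomp.tendsto_subseq (x := fun n => x (φ n)) (fun n => hRball _)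
    have hcl : ∃ σ : ℕ → ℕ, StrictMono σ ∧ Tendsto (fun j => x (σ j)) atTop (𝓝 z0) :=
      ⟨φ ∘ ψ, hφmono.comp hψ, by simpa [Function.comp_def] using hψtend⟩
    have hev : ∀ᶠ j in atTop, ‖x (φ (ψ j)) - z0‖ < ε := by
      have h1 : Tendsto (fun j => ‖x (φ (ψ j)) - z0‖) atTop (𝓝 0) := by
        have h2 : Tendsto (fun j => x (φ (ψ j))) atTop (𝓝 z0) := by
          simpa [Function.comp_def] using hψtend
        exact tendsto_iff_norm_sub_tendsto_zero.mp h2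
      exact h1.eventually_lt_const hε
    obtain ⟨j, hj⟩ := hev.exists
    exact hφprop (ψ j) ⟨z0, hcl, hj⟩
  -- KL inequality along the sequence
  have hKL : ∃ N : ℕ, ∀ k ≥ N, |f (x (k+1)) - fstar| ^ θ ≤ M * (L * ‖x (k+1) - x k‖) := by
    obtain ⟨N, hN⟩ := eventually_atTop.mp hclose
    refine ⟨N, fun k hk => ?_⟩
    obtain ⟨z, hzc, hzd⟩ := hN (k+1) (le_trans hk (Nat.le_succ k))
    have hy := hLoja z hzc (x (k+1)) (hxC k) hzd (h' (x k)) (hsub k)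
    calc |f (x (k+1)) - fstar| ^ θ ≤ M * ‖h' (x k) - h' (x (k+1))‖ := hy
    _ ≤ M * (L * ‖x (k+1) - x k‖) := mul_le_mul_of_nonneg_left (hLd k) hM.le
  by_cases hA : ∃ K, f (x K) ≤ fstar
  · -- finite termination case
    obtain ⟨K, hKle⟩ := hA
    have hKeq : ∀ k ≥ K, f (x k) = fstar :=
      fun k hk => le_antisymm (le_trans (hanti K k hk) hKle) (hfk_ge k)
    have hconst : ∀ k ≥ K, x k = x K := by
      intro k hk
      induction k, hk using Nat.le_induction with
      | base => rfl
      | succ n hn ih =>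
        have h1 := hdec n
        have e1 : f (x n) = fstar := hKeq n hn
        have e2 : f (x (n+1)) = fstar := hKeq (n+1) (le_trans hn (Nat.le_succ n))
        have hsq : ‖x (n+1) - x n‖^2 ≤ 0 := by nlinarith
        have hnz : ‖x (n+1) - x n‖ = 0 := by
          nlinarith [sq_nonneg ‖x (n+1) - x n‖, norm_nonneg (x (n+1) - x n)]
        have : x (n+1) = x n := by
          have := norm_sub_eq_zero_iff.mp hnz
          exact this
        rw [this, ih]
    exact ⟨x K, tendsto_atTop_of_eventually_const hconst⟩
  · -- KL case
    push_neg at hA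
    obtain ⟨N, hNkl⟩ := hKL
    have hFpos : ∀ k, 0 < f (x k) - fstar := fun k => sub_pos.2 (hA k)
    set ρ : ℝ := ρg + ρh with hρdef
    set Φ : ℕ → ℝ := fun k => (f (x k) - fstar) ^ (1-θ) / (1-θ) with hΦdef
    have h1θ : (0:ℝ) < 1 - θ := by linarith
    have hFanti : ∀ k, f (x (k+1)) - fstar ≤ f (x k) - fstar := by
      intro k; linarith [hstep k]
    have hΦanti : ∀ k, Φ (k+1) ≤ Φ k := by
      intro k
      exact div_le_div_of_nonneg_right
        (Real.rpow_le_rpow (hFpos (k+1)).le (hFanti k) h1θ.le) h1θ.le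
    have hΦ0 : ∀ k, 0 ≤ Φ k :=
      fun k => div_nonneg (Real.rpow_nonneg (hFpos k).le _) h1θ.le
    -- key recursion
    have hrec : ∀ k ≥ N, ‖x (k+2) - x (k+1)‖
        ≤ ‖x (k+1) - x k‖/2 + (M*L/ρ) * (Φ (k+1) - Φ (k+2)) := by
      intro k hk
      set a : ℝ := f (x (k+1)) - fstar with ha
      set b : ℝ := f (x (k+2)) - fstar with hb
      have hapos : 0 < a := hFpos (k+1)
      have hbpos : 0 < b := hFpos (k+2)
      have hba : b ≤ a := hFanti (k+1)
      have hconc : a ^ (-θ) * (a - b) ≤ Φ (k+1) - Φ (k+2) := by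
        have hcc := aux_concave hθ0 hθ1 hbpos hba
        calc a ^ (-θ) * (a - b) ≤ (a ^ (1-θ) - b ^ (1-θ)) / (1-θ) := hcc
        _ = Φ (k+1) - Φ (k+2) := by
            simp only [hΦdef, ← ha, ← hb]
            rw [div_sub_div_same]
      have hkl : a ^ θ ≤ M * (L * ‖x (k+1) - x k‖) := by
        have h1 := hNkl k hk
        rwa [abs_of_pos (hFpos (k+1)), ← ha] at h1
      have hρpos : (0:ℝ) < ρ := hρ
      have hdkpos : 0 < ‖x (k+1) - x k‖ := by
        by_contra hdc
        push_neg at hdc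
        have h0 : ‖x (k+1) - x k‖ = 0 := le_antisymm hdc (norm_nonneg _)
        have hapow : 0 < a ^ θ := Real.rpow_pos_of_pos hapos θ
        rw [h0] at hkl
        simp at hkl
        linarith
      have hDpos : 0 < M * (L * ‖x (k+1) - x k‖) := by positivity
      have hainv : (M * (L * ‖x (k+1) - x k‖))⁻¹ ≤ a ^ (-θ) := by
        rw [Real.rpow_neg hapos.le]
        exact inv_anti₀ (Real.rpow_pos_of_pos hapos θ) hkl
      have hdecr : ρ/2 * ‖x (k+2) - x (k+1)‖^2 ≤ a - b := by
        have hd2 := hdec (k+1)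
        have e1 : k+1+1 = k+2 := rfl
        rw [e1] at hd2
        rw [ha, hb]
        linarith
      have hchain : (M * (L * ‖x (k+1) - x k‖))⁻¹ * (ρ/2 * ‖x (k+2) - x (k+1)‖^2)
          ≤ Φ (k+1) - Φ (k+2) := by
        calc (M * (L * ‖x (k+1) - x k‖))⁻¹ * (ρ/2 * ‖x (k+2) - x (k+1)‖^2)
            ≤ a ^ (-θ) * (a - b) :=
              mul_le_mul hainv hdecr (by positivity) (Real.rpow_nonneg hapos.le _)
        _ ≤ Φ (k+1) - Φ (k+2) := hconc
      have hchain2 : ρ/2 * ‖x (k+2) - x (k+1)‖^2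
          ≤ (M * (L * ‖x (k+1) - x k‖)) * (Φ (k+1) - Φ (k+2)) := by
        rwa [inv_mul_le_iff₀ hDpos] at hchain
      have hsq : ‖x (k+2) - x (k+1)‖^2
          ≤ ‖x (k+1) - x k‖ * ((2*M*L/ρ) * (Φ (k+1) - Φ (k+2))) := by
        have hρne : ρ ≠ 0 := ne_of_gt hρpos
        have hEq : ‖x (k+1) - x k‖ * ((2*M*L/ρ) * (Φ (k+1) - Φ (k+2)))
            = (2/ρ) * ((M * (L * ‖x (k+1) - x k‖)) * (Φ (k+1) - Φ (k+2))) := by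
          field_simp
        rw [hEq]
        calc ‖x (k+2) - x (k+1)‖^2 = (2/ρ) * (ρ/2 * ‖x (k+2) - x (k+1)‖^2) := by
              field_simp
        _ ≤ (2/ρ) * ((M * (L * ‖x (k+1) - x k‖)) * (Φ (k+1) - Φ (k+2))) :=
              mul_le_mul_of_nonneg_left hchain2 (by positivity)
      have hΔΦ0 : 0 ≤ Φ (k+1) - Φ (k+2) := by
        have := hΦanti (k+1)
        have e1 : k+1+1 = k+2 := rfl
        rw [e1] at this
        linarith
      have hBnn : 0 ≤ (2*M*L/ρ) * (Φ (k+1) - Φ (k+2)) :=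
        mul_nonneg (by positivity) hΔΦ0
      have hfin := aux_amgm (norm_nonneg (x (k+2) - x (k+1)))
        (norm_nonneg (x (k+1) - x k)) hBnn hsq
      calc ‖x (k+2) - x (k+1)‖
          ≤ ‖x (k+1) - x k‖/2 + ((2*M*L/ρ) * (Φ (k+1) - Φ (k+2)))/2 := hfin
      _ = ‖x (k+1) - x k‖/2 + (M*L/ρ) * (Φ (k+1) - Φ (k+2)) := by ring
    -- summability
    have hρpos : (0:ℝ) < ρ := hρ
    have hcML : (0:ℝ) ≤ M*L/ρ := by positivity
    have hsummable : Summable (fun n : ℕ => ‖x (n+N+1) - x (n+N)‖) := by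
      apply aux_summable (v := fun i => (M*L/ρ) * (Φ (i+N+1) - Φ (i+N+2)))
        (V := (M*L/ρ) * Φ (N+1)) (fun n => norm_nonneg _)
      · intro n
        have hr := hrec (n+N) (Nat.le_add_left N n)
        have e1 : n+N+2 = n+N+1+1 := rfl
        have e2 : n+1+N = n+N+1 := by omega
        have e3 : n+N+1+1 = n+N+2 := rfl
        rw [e2]
        calc ‖x (n+N+1+1) - x (n+N+1)‖ = ‖x (n+N+2) - x (n+N+1)‖ := by rw [e3]
        _ ≤ ‖x (n+N+1) - x (n+N)‖/2 + (M*L/ρ) * (Φ (n+N+1) - Φ (n+N+2)) := hr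
      · intro n
        have hts : ∑ i ∈ Finset.range n, (M*L/ρ) * (Φ (i+N+1) - Φ (i+N+2))
            = (M*L/ρ) * (Φ (N+1) - Φ (n+N+1)) := by
          rw [← Finset.mul_sum]
          congr 1
          calc ∑ i ∈ Finset.range n, (Φ (i+N+1) - Φ (i+N+2))
              = ∑ i ∈ Finset.range n,
                  ((fun j => Φ (j+N+1)) i - (fun j => Φ (j+N+1)) (i+1)) := by
                refine Finset.sum_congr rfl (fun i _ => ?_)
                simp only
                congr 2
                omega
          _ = (fun j => Φ (j+N+1)) 0 - (fun j => Φ (j+N+1)) n := Finset.sum_range_sub' _ n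
          _ = Φ (N+1) - Φ (n+N+1) := by norm_num
        rw [hts]
        have hnn : Φ (N+1) - Φ (n+N+1) ≤ Φ (N+1) := by linarith [hΦ0 (n+N+1)]
        exact mul_le_mul_of_nonneg_left hnn hcML
    have hsum2 : Summable (fun n : ℕ => dist (x n) (x (n+1))) := by
      rw [← summable_nat_add_iff N]
      refine hsummable.congr (fun n => ?_)
      exact (dist_eq_norm' _ _).symm
    have hcauchy : CauchySeq x := cauchySeq_of_summable_dist (by simpa using hsum2)
    exact cauchySeq_tendsto_of_complete hcauchy
end

section
/- Let g, h : E → ℝ be convex with g ρ_g-strongly convex on E and h ρ_h-strongly convex on E, ρ_g + ρ_h > 0, h differentiable on E with locally Lipschitz gradient ∇h, and f = g − h bounded below. Let (x^k) be a bounded DCA sequence: for every k ≥ 0, x^{k+1} minimizes x ↦ g(x) − ⟨∇h(x^k), x⟩ over E. Let f* = lim_{k→∞} f(x^k). Suppose the Kurdyka–Łojasiewicz property holds at cluster points of (x^k) along ∂g − ∇h: there exist η ∈ (0, ∞], ε > 0, and a function φ : [0, η) → [0, ∞) that is concave and continuous on [0, η), continuously differentiable with φ′ > 0 on (0, η), with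 φ(0) = 0, such that for every cluster point z of (x^k), every x with ‖x − z‖ < ε and f(x) − f* ∈ (0, η), and every y ∈ ∂g(x), one has φ′(f(x) − f*)·‖y − ∇h(x)‖ ≥ 1. Then the sequence (x^k) converges. -/
open scoped RealInnerProductSpace ENNReal
open Filter Topology Set


open scoped RealInnerProductSpace

lemma aux_le {Q c : ℝ} (h : ∀ t ∈ Set.Ioo (0:ℝ) 1, (1 - t) * Q ≤ c) : Q ≤ c := by
  rcases le_or_gt Q 0 with hQ | hQ
  · have := h (1/2) (by norm_num); linarith
  · by_contra hc
    push_neg at hc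
    have hQc : 0 < Q - c := by linarith
    set t := min (1/2) ((Q - c)/(2*Q)) with ht
    have ht0 : 0 < t := lt_min (by norm_num) (by positivity)
    have ht1 : t < 1 := lt_of_le_of_lt (min_le_left _ _) (by norm_num)
    have h1 := h t ⟨ht0, ht1⟩
    have h2 : t * Q ≤ (Q - c)/2 := by
      have h3 : t ≤ (Q - c)/(2*Q) := min_le_right _ _
      have := mul_le_mul_of_nonneg_right h3 hQ.le
      calc t * Q ≤ (Q - c)/(2*Q) * Q := this
        _ = (Q - c)/2 := by field_simp
    nlinarith

lemma deriv_ge_aux {F : ℝ → ℝ} {d c : ℝ} (hF : HasDerivAt F d 0)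
    (h : ∀ r ∈ Set.Ioo (0:ℝ) 1, c ≤ (F r - F 0) / r) : c ≤ d := by
  have h1 : Tendsto (slope F 0) (𝓝[>] 0) (𝓝 d) :=
    (hasDerivAt_iff_tendsto_slope.mp hF).mono_left
      (nhdsWithin_mono 0 fun x hx => ne_of_gt hx)
  refine ge_of_tendsto h1 ?_
  filter_upwards [Ioo_mem_nhdsGT_of_mem (by norm_num : (0:ℝ) ∈ Set.Ico (0:ℝ) 1)] with r hr
  simpa [slope_def_field, sub_zero] using h r hr

lemma deriv_le_aux {F : ℝ → ℝ} {d c : ℝ} (hF : HasDerivAt F d 0)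
    (h : ∀ r ∈ Set.Ioo (0:ℝ) 1, (F r - F 0) / r ≤ c) : d ≤ c := by
  have h1 : Tendsto (slope F 0) (𝓝[>] 0) (𝓝 d) :=
    (hasDerivAt_iff_tendsto_slope.mp hF).mono_left
      (nhdsWithin_mono 0 fun x hx => ne_of_gt hx)
  refine le_of_tendsto h1 ?_
  filter_upwards [Ioo_mem_nhdsGT_of_mem (by norm_num : (0:ℝ) ∈ Set.Ico (0:ℝ) 1)] with r hr
  simpa [slope_def_field, sub_zero] using h r hr

lemma norm_combo {E : Type*} [NormedAddCommGroup E] [InnerProductSpace ℝ E] (a b : E) (t : ℝ) :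
    ‖(1 - t) • a + t • b‖ ^ 2
      = (1 - t) * ‖a‖ ^ 2 + t * ‖b‖ ^ 2 - t * (1 - t) * ‖b - a‖ ^ 2 := by
  rw [← real_inner_self_eq_norm_sq, ← real_inner_self_eq_norm_sq, ← real_inner_self_eq_norm_sq,
    ← real_inner_self_eq_norm_sq]
  simp only [inner_add_left, inner_add_right, inner_sub_left, inner_sub_right,
    inner_smul_left, inner_smul_right, RCLike.ofReal_real_eq_id, id_eq, conj_trivial]
  rw [real_inner_comm b a]
  ring

lemma strong_min {E : Type*} [NormedAddCommGroup E] [InnerProductSpace ℝ E]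
    (g : E → ℝ) (ρg : ℝ)
    (hsg : ConvexOn ℝ Set.univ (fun z => g z - ρg / 2 * ‖z‖ ^ 2)) (v m : E)
    (hmin : ∀ z, g m - ⟪v, m⟫ ≤ g z - ⟪v, z⟫) (z : E) :
    g m - ⟪v, m⟫ + ρg / 2 * ‖z - m‖ ^ 2 ≤ g z - ⟪v, z⟫ := by
  have hlin : ConvexOn ℝ Set.univ (fun u : E => -⟪v, u⟫) := by
    refine ⟨convex_univ, fun p _ q _ a b _ _ _ => le_of_eq ?_⟩
    simp only [inner_add_right, inner_smul_right, smul_eq_mul]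
    ring
  have hc : ConvexOn ℝ Set.univ (fun u => (g u - ρg / 2 * ‖u‖ ^ 2) + -⟪v, u⟫) := hsg.add hlin
  have key : ∀ t ∈ Set.Ioo (0:ℝ) 1,
      (1 - t) * (ρg / 2 * ‖z - m‖ ^ 2) ≤ (g z - ⟪v, z⟫) - (g m - ⟪v, m⟫) := by
    intro t ht
    set w := (1 - t) • m + t • z with hw
    have h1 := hmin w
    have h2 := hc.2 (Set.mem_univ m) (Set.mem_univ z) (by linarith [ht.2] : (0:ℝ) ≤ 1 - t)
      ht.1.le (by ring)
    simp only [smul_eq_mul] at h2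
    have h3 := norm_combo m z t
    rw [← hw] at h2 h3
    rw [h3] at h2
    nlinarith [h1, h2, ht.1, ht.2]
  have := aux_le key
  linarith

lemma grad_ineq {E : Type*} [NormedAddCommGroup E] [InnerProductSpace ℝ E] [CompleteSpace E]
    (h : E → ℝ) (ρh : ℝ)
    (hsh : ConvexOn ℝ Set.univ (fun z => h z - ρh / 2 * ‖z‖ ^ 2))
    (h' : E → E) (hdiff : ∀ z, HasGradientAt h (h' z) z) (w u : E) :
    h w + ⟪h' w, u - w⟫ + ρh / 2 * ‖u - w‖ ^ 2 ≤ h u := by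
  set v := u - w with hv
  -- derivative of F r = h (w + r • v) - ρh/2 * r^2 * ‖v‖^2 at 0
  have hline : HasDerivAt (fun r : ℝ => w + r • v) v 0 := by
    simpa using ((hasDerivAt_id (0:ℝ)).smul_const v).const_add w
  have hcomp : HasDerivAt (fun r : ℝ => h (w + r • v)) ⟪h' w, v⟫ 0 := by
    have hg : HasFDerivAt h (InnerProductSpace.toDual ℝ E (h' w)) (w + (0:ℝ) • v) := by
      simpa using (hdiff w).hasFDerivAt
    have := hg.comp_hasDerivAt (0:ℝ) hline
    simpa [InnerProductSpace.toDual_apply_apply, Function.comp_def] using this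
  have hquad : HasDerivAt (fun r : ℝ => ρh / 2 * ‖v‖ ^ 2 * r ^ 2) 0 0 := by
    simpa using ((hasDerivAt_pow 2 (0:ℝ)).const_mul (ρh / 2 * ‖v‖ ^ 2))
  have hF : HasDerivAt (fun r : ℝ => h (w + r • v) - ρh / 2 * ‖v‖ ^ 2 * r ^ 2) ⟪h' w, v⟫ 0 := by
    simpa [Pi.sub_def] using hcomp.sub hquad
  have key : ⟪h' w, v⟫ ≤ h u - h w - ρh / 2 * ‖v‖ ^ 2 := by
    refine deriv_le_aux hF ?_
    intro r hr
    have hcvx := hsh.2 (Set.mem_univ w) (Set.mem_univ u) (by linarith [hr.2] : (0:ℝ) ≤ 1 - r)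
      hr.1.le (by ring)
    simp only [smul_eq_mul] at hcvx
    have hcombo : (1 - r) • w + r • u = w + r • v := by
      rw [hv, smul_sub, sub_smul, one_smul]; abel
    rw [hcombo] at hcvx
    have h3 : ‖w + r • v‖ ^ 2
        = (1 - r) * ‖w‖ ^ 2 + r * ‖u‖ ^ 2 - r * (1 - r) * ‖u - w‖ ^ 2 := by
      rw [← hcombo]; exact norm_combo w u r
    rw [h3] at hcvx
    rw [div_le_iff₀ hr.1, show w + (0:ℝ) • v = w by simp]
    nlinarith [hcvx, hr.1, hr.2]
  have : ⟪h' w, u - w⟫ ≤ h u - h w - ρh / 2 * ‖u - w‖ ^ 2 := by rw [hv] at key; exact key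
  linarith

lemma concave_tangent {η : ℝ≥0∞} {φ φ' : ℝ → ℝ}
    (hφconc : ConcaveOn ℝ {t : ℝ | 0 ≤ t ∧ ENNReal.ofReal t < η} φ)
    (hφderiv : ∀ t, 0 < t → ENNReal.ofReal t < η → HasDerivAt φ (φ' t) t)
    {s t : ℝ} (hs : 0 < s) (hsη : ENNReal.ofReal s < η) (ht : 0 ≤ t) (hts : t ≤ s) :
    φ t ≤ φ s + φ' s * (t - s) := by
  rcases eq_or_lt_of_le hts with rfl | hlt
  · simp
  have hF : HasDerivAt (fun r : ℝ => φ (s + r * (t - s))) (φ' s * (t - s)) 0 := by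
    have hline : HasDerivAt (fun r : ℝ => s + r * (t - s)) (t - s) 0 := by
      simpa using (hasDerivAt_mul_const (t - s)).const_add s
    have hφ : HasDerivAt φ (φ' s) (s + 0 * (t - s)) := by simpa using hφderiv s hs hsη
    simpa [Function.comp_def] using hφ.comp (0:ℝ) hline
  have key : φ t - φ s ≤ φ' s * (t - s) := by
    refine deriv_ge_aux hF ?_
    intro r hr
    have hmem_s : s ∈ {t : ℝ | 0 ≤ t ∧ ENNReal.ofReal t < η} := ⟨hs.le, hsη⟩
    have hmem_t : t ∈ {t : ℝ | 0 ≤ t ∧ ENNReal.ofReal t < η} :=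
      ⟨ht, lt_of_le_of_lt (ENNReal.ofReal_le_ofReal hts) hsη⟩
    have hcvx := hφconc.2 hmem_s hmem_t (by linarith [hr.2] : (0:ℝ) ≤ 1 - r) hr.1.le (by ring)
    simp only [smul_eq_mul] at hcvx
    have hcombo : (1 - r) * s + r * t = s + r * (t - s) := by ring
    rw [hcombo] at hcvx
    rw [le_div_iff₀ hr.1, show s + 0 * (t - s) = s by ring]
    nlinarith [hcvx, hr.1, hr.2]
  linarith

lemma lip_consec {E : Type*} [NormedAddCommGroup E] [NormedSpace ℝ E] [FiniteDimensional ℝ E]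
    (h' : E → E) (hlip : LocallyLipschitz h') (x : ℕ → E) (R : ℝ) (hR : ∀ k, ‖x k‖ ≤ R) :
    ∃ L : ℝ, 1 ≤ L ∧ ∀ k, ‖h' (x (k + 1)) - h' (x k)‖ ≤ L * ‖x (k + 1) - x k‖ := by
  have hcomp : IsCompact (Metric.closedBall (0:E) R) := isCompact_closedBall _ _
  have hmem : ∀ k, x k ∈ Metric.closedBall (0:E) R := fun k => by
    simpa [Metric.mem_closedBall, dist_zero_right] using hR k
  obtain ⟨M, hM⟩ := hcomp.exists_bound_of_continuousOn hlip.continuous.continuousOn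
  have hM0 : 0 ≤ M := le_trans (norm_nonneg _) (hM (x 0) (hmem 0))
  by_contra hcon
  push_neg at hcon
  have hcon' : ∀ n : ℕ, ∃ k, (n : ℝ) * ‖x (k + 1) - x k‖ < ‖h' (x (k + 1)) - h' (x k)‖ := by
    intro n
    obtain ⟨k, hk⟩ := hcon (max (n : ℝ) 1) (le_max_right _ _)
    exact ⟨k, lt_of_le_of_lt (mul_le_mul_of_nonneg_right (le_max_left _ _) (norm_nonneg _)) hk⟩
  choose K hK using hcon'
  -- bound on the step norms
  have hbound : ∀ n : ℕ, (n : ℝ) * ‖x (K n + 1) - x (K n)‖ ≤ 2 * M := by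
    intro n
    refine le_trans (hK n).le ?_
    calc ‖h' (x (K n + 1)) - h' (x (K n))‖
        ≤ ‖h' (x (K n + 1))‖ + ‖h' (x (K n))‖ := norm_sub_le _ _
      _ ≤ M + M := add_le_add (hM _ (hmem _)) (hM _ (hmem _))
      _ = 2 * M := by ring
  -- convergent subsequence
  obtain ⟨z, _, τ, hτ, hconv⟩ := hcomp.tendsto_subseq (fun n => hmem (K n))
  obtain ⟨K₀, t, ht, hlipt⟩ := hlip z
  obtain ⟨r, hr0, hball⟩ := Metric.mem_nhds_iff.mp ht
  -- pick a large index
  have hdist : ∀ᶠ j in atTop, dist (x (K (τ j))) z < r / 2 := by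
    have := Metric.tendsto_atTop.mp hconv
    obtain ⟨j₀, hj₀⟩ := this (r / 2) (by linarith)
    exact eventually_atTop.2 ⟨j₀, fun j hj => hj₀ j hj⟩
  have hsmall : ∀ᶠ j in atTop, ‖x (K (τ j) + 1) - x (K (τ j))‖ < r / 2 := by
    have hj1 : ∀ᶠ j : ℕ in atTop, 4 * M / r < (j : ℝ) := by
      obtain ⟨j₁, hj₁⟩ := exists_nat_gt (4 * M / r)
      exact eventually_atTop.2 ⟨j₁, fun j hj => lt_of_lt_of_le hj₁ (by exact_mod_cast hj)⟩
    filter_upwards [hj1] with j hj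
    have hτj : (j : ℝ) ≤ (τ j : ℝ) := by exact_mod_cast hτ.le_apply
    have hj0 : (0:ℝ) < (τ j : ℝ) := lt_of_le_of_lt (by positivity) (lt_of_lt_of_le hj hτj)
    have hb := hbound (τ j)
    have h4 : 4 * M / r < (τ j : ℝ) := lt_of_lt_of_le hj hτj
    -- from (τ j) * a ≤ 2M and τ j > 4M/r follows a < r/2  (need a ≥ 0 and handle M = 0)
    by_contra hcontra
    push_neg at hcontra
    have : (τ j : ℝ) * (r / 2) ≤ (τ j : ℝ) * ‖x (K (τ j) + 1) - x (K (τ j))‖ :=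
      mul_le_mul_of_nonneg_left hcontra hj0.le
    have h5 : (4 * M / r) * (r / 2) < (τ j : ℝ) * (r / 2) :=
      mul_lt_mul_of_pos_right h4 (by linarith)
    rw [div_mul_eq_mul_div, mul_comm] at h5
    have h6 : (4 * M / r) * (r / 2) = 2 * M := by field_simp; ring
    nlinarith
  have hK₀ : ∀ᶠ j : ℕ in atTop, (K₀ : ℝ) < (j : ℝ) := by
    obtain ⟨j₂, hj₂⟩ := exists_nat_gt (K₀ : ℝ)
    exact eventually_atTop.2 ⟨j₂, fun j hj => lt_of_lt_of_le hj₂ (by exact_mod_cast hj)⟩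
  obtain ⟨j, hd, hs, hKj⟩ := (hdist.and (hsmall.and hK₀)).exists
  set p := x (K (τ j) + 1)
  set q := x (K (τ j))
  have hq : q ∈ t := hball (by simpa [Metric.mem_ball] using lt_of_lt_of_le hd (by linarith))
  have hp : p ∈ t := by
    apply hball
    rw [Metric.mem_ball]
    have : dist p q < r / 2 := by simpa [dist_eq_norm] using hs
    calc dist p z ≤ dist p q + dist q z := dist_triangle _ _ _
      _ < r / 2 + r / 2 := add_lt_add this hd
      _ = r := by ring
  have hlips : ‖h' p - h' q‖ ≤ (K₀ : ℝ) * ‖p - q‖ := by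
    have := hlipt.dist_le_mul p hp q hq
    simpa [dist_eq_norm] using this
  have hKτ := hK (τ j)
  have hτjK : (K₀ : ℝ) < (τ j : ℝ) :=
    lt_of_lt_of_le hKj (by exact_mod_cast hτ.le_apply)
  have hpq0 : 0 ≤ ‖p - q‖ := norm_nonneg _
  nlinarith [hKτ, hlips, hτjK, hpq0]

set_option maxHeartbeats 1000000 in
/-- global convergence of DCA for the standard DC program under the
Kurdyka–Łojasiewicz property. -/
theorem stmt_8
    {E : Type*} [NormedAddCommGroup E] [InnerProductSpace ℝ E] [FiniteDimensional ℝ E]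
    (g h : E → ℝ) (hg : ConvexOn ℝ Set.univ g) (hh : ConvexOn ℝ Set.univ h)
    (ρg ρh : ℝ) (hρg0 : 0 ≤ ρg) (hρh0 : 0 ≤ ρh) (hρ : 0 < ρg + ρh)
    (hsg : ConvexOn ℝ Set.univ (fun z => g z - ρg / 2 * ‖z‖ ^ 2))
    (hsh : ConvexOn ℝ Set.univ (fun z => h z - ρh / 2 * ‖z‖ ^ 2))
    (h' : E → E) (hdiff : ∀ z, HasGradientAt h (h' z) z)
    (hlip : LocallyLipschitz h')
    (f : E → ℝ) (hf : ∀ z, f z = g z - h z)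
    (hbelow : BddBelow (Set.range f))
    (x : ℕ → E) (hbx : ∃ R, ∀ k, ‖x k‖ ≤ R)
    (hdca : ∀ k, ∀ z, g (x (k + 1)) - ⟪h' (x k), x (k + 1)⟫ ≤ g z - ⟪h' (x k), z⟫)
    (fstar : ℝ) (hfstar : Tendsto (fun k => f (x k)) atTop (𝓝 fstar))
    (η : ℝ≥0∞) (hη : 0 < η) (ε : ℝ) (hε : 0 < ε)
    (φ φ' : ℝ → ℝ)
    (hφ0 : φ 0 = 0)
    (hφnonneg : ∀ t, 0 ≤ t → ENNReal.ofReal t < η → 0 ≤ φ t)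
    (hφconc : ConcaveOn ℝ {t : ℝ | 0 ≤ t ∧ ENNReal.ofReal t < η} φ)
    (hφcont : ContinuousOn φ {t : ℝ | 0 ≤ t ∧ ENNReal.ofReal t < η})
    (hφderiv : ∀ t, 0 < t → ENNReal.ofReal t < η → HasDerivAt φ (φ' t) t)
    (hφ'cont : ContinuousOn φ' {t : ℝ | 0 < t ∧ ENNReal.ofReal t < η})
    (hφ'pos : ∀ t, 0 < t → ENNReal.ofReal t < η → 0 < φ' t)
    (hKL : ∀ z : E,
      (∃ σ : ℕ → ℕ, StrictMono σ ∧ Tendsto (fun j => x (σ j)) atTop (𝓝 z)) →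
        ∀ w : E, ‖w - z‖ < ε → 0 < f w - fstar → ENNReal.ofReal (f w - fstar) < η →
          ∀ y : E, (∀ u, g u ≥ g w + ⟪y, u - w⟫) →
            φ' (f w - fstar) * ‖y - h' w‖ ≥ 1) :
    ∃ l, Tendsto x atTop (𝓝 l) := by
  classical
  obtain ⟨R, hR⟩ := hbx
  have hA : ∀ k z, g (x (k+1)) - ⟪h' (x k), x (k+1)⟫ + ρg / 2 * ‖z - x (k+1)‖ ^ 2
      ≤ g z - ⟪h' (x k), z⟫ := fun k z => strong_min g ρg hsg _ _ (hdca k) z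
  have hB : ∀ w u : E, h w + ⟪h' w, u - w⟫ + ρh / 2 * ‖u - w‖ ^ 2 ≤ h u :=
    grad_ineq h ρh hsh h' hdiff
  have key_dec : ∀ k, (ρg + ρh) / 2 * ‖x (k+1) - x k‖ ^ 2 ≤ f (x k) - f (x (k+1)) := by
    intro k
    have h1 := hA k (x k)
    have h2 := hB (x k) (x (k+1))
    rw [inner_sub_right] at h2
    rw [hf, hf]
    rw [norm_sub_rev (x k) (x (k+1))] at h1
    linarith
  have hmono : Antitone fun k => f (x k) := antitone_nat_of_succ_le fun k => by
    have := key_dec k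
    nlinarith [sq_nonneg ‖x (k+1) - x k‖]
  have hfge : ∀ k, fstar ≤ f (x k) := fun k =>
    le_of_tendsto hfstar (eventually_atTop.2 ⟨k, fun m hm => hmono hm⟩)
  obtain ⟨L, hL1, hLip⟩ := lip_consec h' hlip x R hR
  by_cases hzero : ∃ K, f (x K) = fstar
  · -- Case I: the objective value is attained; the sequence is eventually constant
    obtain ⟨K, hKf⟩ := hzero
    have hconst : ∀ m, K ≤ m → x m = x K := by
      intro m hm
      induction m, hm using Nat.le_induction with
      | base => rfl
      | succ m hm ih =>
        have hfm : f (x m) = fstar := le_antisymm (hKf ▸ hmono hm) (hfge m)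
        have hfm1 : fstar ≤ f (x (m+1)) := hfge (m+1)
        have hd := key_dec m
        have hsq : ‖x (m+1) - x m‖ ^ 2 ≤ 0 := by nlinarith
        have hnz : x (m+1) - x m = 0 := by
          have h0 : ‖x (m+1) - x m‖ = 0 := by nlinarith [norm_nonneg (x (m+1) - x m)]
          exact norm_eq_zero.mp h0
        rw [sub_eq_zero] at hnz
        rw [hnz, ih]
    exact ⟨x K, tendsto_atTop_of_eventually_const hconst⟩
  · -- Case II
    push_neg at hzero
    have hpos : ∀ k, 0 < f (x k) - fstar := fun k =>
      sub_pos.mpr (lt_of_le_of_ne (hfge k) (Ne.symm (hzero k)))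
    have htend0 : Tendsto (fun k => f (x k) - fstar) atTop (𝓝 0) := by
      simpa using hfstar.sub (tendsto_const_nhds (x := fstar))
    have hη' : ∀ᶠ k in atTop, ENNReal.ofReal (f (x k) - fstar) < η := by
      have h1 : Tendsto (fun k => ENNReal.ofReal (f (x k) - fstar)) atTop (𝓝 0) := by
        have := (ENNReal.continuous_ofReal.tendsto 0).comp htend0
        simpa [Function.comp_def] using this
      exact h1.eventually_lt_const hη
    have hcomp : IsCompact (Metric.closedBall (0:E) R) := isCompact_closedBall _ _
    have hmem : ∀ k, x k ∈ Metric.closedBall (0:E) R := fun k => by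
      simpa [Metric.mem_closedBall, dist_zero_right] using hR k
    have hprox : ∀ᶠ k in atTop, ∃ z : E,
        (∃ σ : ℕ → ℕ, StrictMono σ ∧ Tendsto (fun j => x (σ j)) atTop (𝓝 z))
          ∧ ‖x k - z‖ < ε := by
      by_contra hcon
      rw [Filter.not_eventually] at hcon
      obtain ⟨σ, hσmono, hσ⟩ := Filter.extraction_of_frequently_atTop hcon
      obtain ⟨z, _, τ, hτ, hconv⟩ := hcomp.tendsto_subseq (fun n => hmem (σ n))
      have hcl : ∃ σ' : ℕ → ℕ, StrictMono σ' ∧ Tendsto (fun j => x (σ' j)) atTop (𝓝 z) :=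
        ⟨σ ∘ τ, hσmono.comp hτ, hconv⟩
      have hev : ∀ᶠ j in atTop, dist (x (σ (τ j))) z < ε := by
        have h2 := Metric.tendsto_atTop.mp hconv
        obtain ⟨j₀, hj₀⟩ := h2 ε hε
        exact eventually_atTop.2 ⟨j₀, fun j hj => hj₀ j hj⟩
      obtain ⟨j, hj⟩ := hev.exists
      exact (hσ (τ j)) ⟨z, hcl, by simpa [dist_eq_norm] using hj⟩
    obtain ⟨N₀, hN₀⟩ := eventually_atTop.1 (hη'.and hprox)
    -- one step estimate
    have hstep : ∀ m, N₀ ≤ m →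
        ‖x (m+1+1) - x (m+1)‖ ≤ 1/2 * ‖x (m+1) - x m‖
          + L / (ρg + ρh) * (φ (f (x (m+1)) - fstar) - φ (f (x (m+1+1)) - fstar))
        ∧ 0 ≤ φ (f (x (m+1)) - fstar) - φ (f (x (m+1+1)) - fstar) := by
      intro m hm
      obtain ⟨hηk, hpr⟩ := hN₀ (m+1) (by omega)
      obtain ⟨hηk1, -⟩ := hN₀ (m+1+1) (by omega)
      have hskpos : 0 < f (x (m+1)) - fstar := hpos (m+1)
      have hsk1pos : 0 < f (x (m+1+1)) - fstar := hpos (m+1+1)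
      have hsk1le : f (x (m+1+1)) - fstar ≤ f (x (m+1)) - fstar := by
        have := hmono (Nat.le_succ (m+1)); simpa using this
      obtain ⟨z, hcl, hzlt⟩ := hpr
      have hy : ∀ u, g u ≥ g (x (m+1)) + ⟪h' (x m), u - x (m+1)⟫ := by
        intro u
        have hd := hdca m u
        rw [inner_sub_right]
        linarith
      have hKL1 := hKL z hcl (x (m+1)) hzlt hskpos hηk (h' (x m)) hy
      have hlipk : ‖h' (x m) - h' (x (m+1))‖ ≤ L * ‖x (m+1) - x m‖ := by
        rw [norm_sub_rev]; exact hLip m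
      have hφ'k : 0 < φ' (f (x (m+1)) - fstar) := hφ'pos _ hskpos hηk
      have ham : 0 < ‖x (m+1) - x m‖ := by
        by_contra hc
        push_neg at hc
        have h0 : ‖x (m+1) - x m‖ = 0 := le_antisymm hc (norm_nonneg _)
        rw [h0, mul_zero] at hlipk
        have h1 : ‖h' (x m) - h' (x (m+1))‖ = 0 := le_antisymm hlipk (norm_nonneg _)
        rw [h1, mul_zero] at hKL1
        linarith
      have hconc := concave_tangent hφconc hφderiv hskpos hηk hsk1pos.le hsk1le
      have hdec := key_dec (m+1)
      have hff : f (x (m+1)) - f (x (m+1+1))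
          = (f (x (m+1)) - fstar) - (f (x (m+1+1)) - fstar) := by ring
      rw [hff] at hdec
      -- abbreviations
      set A := ‖x (m+1+1) - x (m+1)‖ with hA'
      set B := ‖x (m+1) - x m‖ with hB'
      set P := φ' (f (x (m+1)) - fstar) with hP'
      set D := φ (f (x (m+1)) - fstar) - φ (f (x (m+1+1)) - fstar) with hD'
      have hPD : P * ((f (x (m+1)) - fstar) - (f (x (m+1+1)) - fstar)) ≤ D := by
        nlinarith [hconc]
      have hD0 : 0 ≤ D := le_trans (mul_nonneg hφ'k.le (by linarith)) hPD
      have hDA : P * ((ρg + ρh) / 2 * A ^ 2) ≤ D :=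
        le_trans (mul_le_mul_of_nonneg_left hdec hφ'k.le) hPD
      have h1PLB : 1 ≤ P * (L * B) := by
        have h2 : P * ‖h' (x m) - h' (x (m+1))‖ ≤ P * (L * B) :=
          mul_le_mul_of_nonneg_left hlipk hφ'k.le
        linarith
      have hA0 : 0 ≤ A := norm_nonneg _
      have hL0 : 0 < L := lt_of_lt_of_le one_pos hL1
      have hA2 : A ^ 2 ≤ 2 * L / (ρg + ρh) * D * B := by
        have e1 : (ρg + ρh) / 2 * A ^ 2 * 1 ≤ (ρg + ρh) / 2 * A ^ 2 * (P * (L * B)) :=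
          mul_le_mul_of_nonneg_left h1PLB (by positivity)
        have e2 : (P * ((ρg + ρh) / 2 * A ^ 2)) * (L * B) ≤ D * (L * B) :=
          mul_le_mul_of_nonneg_right hDA (by positivity)
        have e3 : (ρg + ρh) / 2 * A ^ 2 ≤ D * (L * B) := by nlinarith
        have e4 := mul_le_mul_of_nonneg_left e3 (le_of_lt (by positivity : (0:ℝ) < 2 / (ρg + ρh)))
        calc A ^ 2 = 2 / (ρg + ρh) * ((ρg + ρh) / 2 * A ^ 2) := by field_simp
          _ ≤ 2 / (ρg + ρh) * (D * (L * B)) := e4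
          _ = 2 * L / (ρg + ρh) * D * B := by field_simp
      refine ⟨?_, hD0⟩
      set V := 2 * L / (ρg + ρh) * D with hV
      have hv0 : 0 ≤ V := by rw [hV]; positivity
      have hB0 : 0 ≤ B := norm_nonneg _
      have hgoal : A ≤ 1/2 * B + V / 2 := by
        have hS : 0 ≤ B + V := by linarith
        nlinarith [hA2, sq_nonneg (B - V), hS]
      have hVeq : L / (ρg + ρh) * D = V / 2 := by rw [hV]; ring
      rw [hVeq]
      exact hgoal
    -- summability
    set b : ℕ → ℝ := fun j => ‖x (N₀ + j + 1) - x (N₀ + j)‖ with hb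
    set D' : ℕ → ℝ := fun j => φ (f (x (N₀ + j)) - fstar) with hD'
    have hb0 : ∀ j, 0 ≤ b j := fun j => by rw [hb]; exact norm_nonneg _
    have hstep' : ∀ j, b (j+1) ≤ 1/2 * b j + L / (ρg + ρh) * (D' (j+1) - D' (j+2))
        ∧ 0 ≤ D' (j+1) - D' (j+2) := by
      intro j
      have := hstep (N₀ + j) (Nat.le_add_right _ _)
      exact this
    have hD'0 : ∀ j, 0 ≤ D' j := fun j => by
      rw [hD']; exact hφnonneg _ (hpos _).le (hN₀ _ (Nat.le_add_right _ _)).1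
    have hclaim : ∀ M : ℕ, ∑ j ∈ Finset.range M, b (j+1)
        ≤ b 0 + 2 * (L / (ρg + ρh)) * D' 1 := by
      intro M
      have h1 : ∑ j ∈ Finset.range M, b (j+1)
          ≤ ∑ j ∈ Finset.range M, (1/2 * b j + L / (ρg + ρh) * (D' (j+1) - D' (j+2))) :=
        Finset.sum_le_sum fun j _ => (hstep' j).1
      have htel : ∑ j ∈ Finset.range M, (D' (j+1) - D' (j+2)) = D' 1 - D' (M+1) :=
        Finset.sum_range_sub' (fun j => D' (j+1)) M
      have h2 : ∑ j ∈ Finset.range M, b j ≤ b 0 + ∑ j ∈ Finset.range M, b (j+1) := by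
        cases M with
        | zero => simpa using hb0 0
        | succ M' =>
          rw [Finset.sum_range_succ' (fun j => b j) M']
          have : ∑ j ∈ Finset.range M', b (j+1) ≤ ∑ j ∈ Finset.range (M'+1), b (j+1) :=
            Finset.sum_le_sum_of_subset_of_nonneg
              (Finset.range_subset_range.2 (Nat.le_succ _)) (fun i _ _ => hb0 _)
          linarith
      rw [Finset.sum_add_distrib, ← Finset.mul_sum, ← Finset.mul_sum, htel] at h1
      have h3 := hD'0 (M+1)
      have hL0 : 0 < L := lt_of_lt_of_le one_pos hL1
      have h4 : 0 ≤ L / (ρg + ρh) := by positivity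
      nlinarith [h1, h2, h3, h4, mul_le_mul_of_nonneg_left h2 (by norm_num : (0:ℝ) ≤ 1/2)]
    have hsum1 : Summable (fun j => b (j+1)) :=
      summable_of_sum_range_le (fun n => hb0 _) hclaim
    have hsumb : Summable b := (summable_nat_add_iff 1).mp hsum1
    have hsuma : Summable (fun k => ‖x (k+1) - x k‖) := by
      refine (summable_nat_add_iff N₀).mp ?_
      have he : (fun j => ‖x (j + N₀ + 1) - x (j + N₀)‖) = b := by
        funext j
        rw [hb]
        rw [show j + N₀ + 1 = N₀ + j + 1 from by omega, show j + N₀ = N₀ + j from by omega]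
      rw [he]
      exact hsumb
    have hcauchy : CauchySeq x := by
      refine cauchySeq_of_dist_le_of_summable (fun k => ‖x (k+1) - x k‖) ?_ hsuma
      intro n
      rw [dist_eq_norm, norm_sub_rev]
    obtain ⟨l, hl⟩ := cauchySeq_tendsto_of_complete hcauchy
    exact ⟨l, hl⟩
end

section
/- Let (r_k) be a non-increasing sequence of positive real numbers converging to 0, let α ∈ (0, 1] and β > 0, and suppose there exists N ∈ ℕ such that r_{k+1}^α ≤ β(r_k − r_{k+1}) for all k ≥ N. Then (r_k) converges linearly to 0 with rate β/(1+β): there exists a constant c > 0 such that r_k ≤ c·(β/(1+β))^k for all k ∈ ℕ. -/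
/-!
Once `r k ≤ 1`, the hypothesis `α ≤ 1` gives `r (k+1) ≤ r (k+1) ^ α ≤ β (r k - r (k+1))`, which
rearranges to the contraction `r (k+1) ≤ β / (1 + β) * r k`. An eventually contracting sequence
decays geometrically, the finitely many initial terms being absorbed into the constant.
-/

open Filter Topology

lemma le_div_one_add_mul_of_le_mul_sub {x y β : ℝ} (hβ : 0 < 1 + β) (h : x ≤ β * (y - x)) :
    x ≤ β / (1 + β) * y := by
  rw [div_mul_eq_mul_div, le_div_iff₀ hβ]
  linarith

lemma exists_le_mul_pow_of_eventually_le_mul {u : ℕ → ℝ} {q : ℝ} (hq : 0 < q)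
    (h : ∀ᶠ k in atTop, u (k + 1) ≤ q * u k) : ∃ c > 0, ∀ k, u k ≤ c * q ^ k := by
  obtain ⟨M, hM⟩ := h.exists_forall_of_atTop
  obtain ⟨C, hC⟩ := ((Set.finite_Iic M).image fun k => u k / q ^ k).bddAbove
  have hinit : ∀ k ≤ M, u k ≤ max C 1 * q ^ k := fun k hk => by
    rw [← div_le_iff₀ (pow_pos hq k)]
    exact (hC ⟨k, hk, rfl⟩).trans (le_max_left _ _)
  have htail : ∀ n, u (M + n) ≤ q ^ n * u M := fun n =>
    le_geom (u := fun n => u (M + n)) hq.le n fun i _ => hM (M + i) le_self_add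
  refine ⟨max C 1, by positivity, fun k => ?_⟩
  rcases le_total k M with hk | hk
  · exact hinit k hk
  · obtain ⟨n, rfl⟩ := Nat.exists_eq_add_of_le hk
    calc u (M + n) ≤ q ^ n * u M := htail n
      _ ≤ q ^ n * (max C 1 * q ^ M) := by gcongr; exact hinit M le_rfl
      _ = max C 1 * q ^ (M + n) := by ring

theorem stmt_10_general
    (r : ℕ → ℝ) (hpos : ∀ k, 0 < r k)
    (hto0 : Tendsto r atTop (𝓝 0))
    (α β : ℝ) (hα : α ∈ Set.Ioc (0 : ℝ) 1) (hβ : 0 < β)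
    (N : ℕ) (hrec : ∀ k, N ≤ k → r (k + 1) ^ α ≤ β * (r k - r (k + 1))) :
    ∃ c > 0, ∀ k : ℕ, r k ≤ c * (β / (1 + β)) ^ k := by
  have hsmall : ∀ᶠ k in atTop, r (k + 1) ≤ 1 :=
    (tendsto_add_atTop_iff_nat 1).2 hto0 |>.eventually (ge_mem_nhds one_pos)
  refine exists_le_mul_pow_of_eventually_le_mul (by positivity) ?_
  filter_upwards [hsmall, eventually_ge_atTop N] with k hk hNk
  refine le_div_one_add_mul_of_le_mul_sub (by positivity) ?_
  exact (Real.self_le_rpow_of_le_one (hpos _).le hk hα.2).trans (hrec k hNk)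

/-- Lemma on convergence rates (`r_{k+1}^α ≤ β(r_k − r_{k+1})`),
case `α ∈ (0,1]`: linear convergence with rate `β/(1+β)`. -/
theorem stmt_10
    (r : ℕ → ℝ) (hmono : ∀ k, r (k + 1) ≤ r k) (hpos : ∀ k, 0 < r k)
    (hto0 : Tendsto r atTop (𝓝 0))
    (α β : ℝ) (hα : α ∈ Set.Ioc (0 : ℝ) 1) (hβ : 0 < β)
    (N : ℕ) (hrec : ∀ k, N ≤ k → r (k + 1) ^ α ≤ β * (r k - r (k + 1))) :
    ∃ c > 0, ∀ k : ℕ, r k ≤ c * (β / (1 + β)) ^ k :=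
  stmt_10_general r hpos hto0 α β hα hβ N hrec
end

section
/- Let (r_k) be a non-increasing sequence of positive real numbers converging to 0, let α > 1 and β > 0, and suppose there exists N ∈ ℕ such that r_{k+1}^α ≤ β(r_k − r_{k+1}) for all k ≥ N. Then (r_k) converges sublinearly to 0 with rate O(k^{1/(1−α)}): there exist a constant c > 0 and N′ ∈ ℕ such that r_k ≤ c·k^{1/(1−α)} for all k ≥ N′. -/
/-!
For `φ(x) = x ^ (1 - α)` the quantity `φ(r k)` grows by at least a fixed `γ > 0` per step once
`k ≥ N`. If `r (k + 1) ≥ r k / 2`, the tangent line of the convex function `φ` at `r k` and the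
recursion give `φ(r (k + 1)) - φ(r k) ≥ (α - 1) (r (k + 1) / r k) ^ α / β ≥ (α - 1) 2 ^ (-α) / β`;
otherwise `φ(r (k + 1)) ≥ 2 ^ (α - 1) φ(r k)`, and `φ(r k) ≥ φ(r N)`. Hence `φ(r k) ≳ γ k`, and
applying the decreasing map `y ↦ y ^ (1 / (1 - α))` gives `r k ≲ k ^ (1 / (1 - α))`.
-/

open Filter Topology Real

lemma one_add_mul_one_sub_le_rpow_one_sub {x α : ℝ} (hx : 0 < x) (hα : 1 ≤ α) :
    1 + (α - 1) * (1 - x) ≤ x ^ (1 - α) := by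
  have hlog : log x ≤ x - 1 := log_le_sub_one_of_pos hx
  rw [rpow_def_of_pos hx]
  calc 1 + (α - 1) * (1 - x) ≤ log x * (1 - α) + 1 := by nlinarith
    _ ≤ exp (log x * (1 - α)) := add_one_le_exp _

lemma mul_rpow_neg_mul_sub_le_rpow_one_sub_sub {a b α : ℝ} (ha : 0 < a) (hb : 0 < b)
    (hα : 1 ≤ α) :
    (α - 1) * b ^ (-α) * (b - a) ≤ a ^ (1 - α) - b ^ (1 - α) := by
  have hbern := one_add_mul_one_sub_le_rpow_one_sub (div_pos ha hb) hα
  rw [div_rpow ha.le hb.le, le_div_iff₀ (rpow_pos_of_pos hb _)] at hbern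
  have hsplit : b ^ (1 - α) = b ^ (-α) * b := by
    rw [sub_eq_neg_add, rpow_add hb, rpow_one]
  rw [hsplit] at hbern ⊢
  field_simp at hbern
  linarith

section Step

variable {a b α β : ℝ}

lemma div_le_rpow_one_sub_sub_of_le_two_mul (ha : 0 < a) (hb : 0 < b) (hα : 1 < α)
    (hβ : 0 < β) (hrec : a ^ α ≤ β * (b - a)) (hba : b ≤ 2 * a) :
    (α - 1) * 2 ^ (-α) / β ≤ a ^ (1 - α) - b ^ (1 - α) := by
  have hratio : 2 ^ (-α) ≤ b ^ (-α) * a ^ α := by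
    calc (2 : ℝ) ^ (-α) = (1 / 2) ^ α := by rw [rpow_neg zero_le_two, one_div, inv_rpow zero_le_two]
      _ ≤ (a / b) ^ α := by
        refine rpow_le_rpow (by norm_num) ?_ (by linarith)
        rw [div_le_div_iff₀ two_pos hb]
        linarith
      _ = b ^ (-α) * a ^ α := by rw [div_rpow ha.le hb.le, rpow_neg hb.le, div_eq_inv_mul]
  have hb' : 0 ≤ b ^ (-α) := (rpow_pos_of_pos hb _).le
  calc (α - 1) * 2 ^ (-α) / β ≤ (α - 1) * (b ^ (-α) * a ^ α) / β := by gcongr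
    _ ≤ (α - 1) * (b ^ (-α) * (β * (b - a))) / β := by gcongr
    _ = (α - 1) * b ^ (-α) * (b - a) := by field_simp
    _ ≤ a ^ (1 - α) - b ^ (1 - α) := mul_rpow_neg_mul_sub_le_rpow_one_sub_sub ha hb hα.le

lemma mul_rpow_one_sub_le_rpow_one_sub_sub_of_two_mul_le (ha : 0 < a) (hα : 1 ≤ α)
    (hab : 2 * a ≤ b) :
    (2 ^ (α - 1) - 1) * b ^ (1 - α) ≤ a ^ (1 - α) - b ^ (1 - α) := by
  have hb : 0 < b := by linarith
  have hhalf : (b / 2) ^ (1 - α) = 2 ^ (α - 1) * b ^ (1 - α) := by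
    rw [div_rpow hb.le zero_le_two, show α - 1 = -(1 - α) by ring, rpow_neg zero_le_two,
      div_eq_inv_mul]
  have hmono : (b / 2) ^ (1 - α) ≤ a ^ (1 - α) :=
    rpow_le_rpow_of_nonpos ha (by linarith) (by linarith)
  linarith

end Step

lemma add_mul_sub_le_of_add_le_succ {u : ℕ → ℝ} {γ : ℝ} {N : ℕ}
    (h : ∀ k, N ≤ k → u k + γ ≤ u (k + 1)) (k : ℕ) (hk : N ≤ k) :
    u N + γ * ((k : ℝ) - N) ≤ u k := by
  induction k, hk using Nat.le_induction with
  | base => simp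
  | succ n hn ih =>
    push_cast
    linarith [h n hn]

theorem stmt_11_general
    (r : ℕ → ℝ) (hpos : ∀ k, 0 < r k)
    (α β : ℝ) (hα : 1 < α) (hβ : 0 < β)
    (N : ℕ) (hrec : ∀ k, N ≤ k → r (k + 1) ^ α ≤ β * (r k - r (k + 1))) :
    ∃ c > 0, ∃ N' : ℕ, ∀ k, N' ≤ k → r k ≤ c * (k : ℝ) ^ (1 / (1 - α)) := by
  have hdecr : ∀ k, N ≤ k → r (k + 1) ≤ r k := fun k hk => by
    nlinarith [hrec k hk, rpow_pos_of_pos (hpos (k + 1)) α]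
  have hle_rN : ∀ k, N ≤ k → r k ≤ r N := fun k hk =>
    antitoneOn_nat_Ici_of_succ_le hdecr Set.self_mem_Ici hk hk
  set γ := min ((α - 1) * 2 ^ (-α) / β) ((2 ^ (α - 1) - 1) * r N ^ (1 - α))
  have hγ : 0 < γ := by
    have : (1 : ℝ) < 2 ^ (α - 1) := one_lt_rpow one_lt_two (by linarith)
    have := rpow_pos_of_pos (hpos N) (1 - α)
    exact lt_min (by have := sub_pos.2 hα; positivity) (by nlinarith)
  have hstep : ∀ k, N ≤ k → r k ^ (1 - α) + γ ≤ r (k + 1) ^ (1 - α) := fun k hk => by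
    rcases le_total (r k) (2 * r (k + 1)) with hnear | hfar
    · linarith [(min_le_left _ _ : γ ≤ (α - 1) * 2 ^ (-α) / β),
        div_le_rpow_one_sub_sub_of_le_two_mul (hpos _) (hpos k) hα hβ (hrec k hk) hnear]
    · have hfar := mul_rpow_one_sub_le_rpow_one_sub_sub_of_two_mul_le (hpos _) hα.le hfar
      have hrN : r N ^ (1 - α) ≤ r k ^ (1 - α) :=
        rpow_le_rpow_of_nonpos (hpos k) (hle_rN k hk) (by linarith)
      have : 0 ≤ 2 ^ (α - 1) - (1 : ℝ) := sub_nonneg.2 (one_le_rpow one_le_two (by linarith))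
      nlinarith [(min_le_right _ _ : γ ≤ (2 ^ (α - 1) - 1) * r N ^ (1 - α))]
  refine ⟨(γ / 2) ^ (1 / (1 - α)), rpow_pos_of_pos (half_pos hγ) _, 2 * N + 1, fun k hk => ?_⟩
  have hk0 : (0 : ℝ) < k := by exact_mod_cast (show 0 < k by omega)
  have hgrowth : γ / 2 * k ≤ r k ^ (1 - α) := by
    have hkN : (2 * N + 1 : ℝ) ≤ k := by exact_mod_cast hk
    nlinarith [add_mul_sub_le_of_add_le_succ hstep k (by omega), rpow_pos_of_pos (hpos N) (1 - α)]
  rw [← mul_rpow (half_pos hγ).le hk0.le, one_div]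
  exact (le_rpow_inv_iff_of_neg (hpos k) (by positivity) (by linarith)).2 hgrowth

/-- Lemma on convergence rates (`r_{k+1}^α ≤ β(r_k − r_{k+1})`),
case `α > 1`: sublinear convergence `O(k^{1/(1−α)})`. -/
theorem stmt_11
    (r : ℕ → ℝ) (hmono : ∀ k, r (k + 1) ≤ r k) (hpos : ∀ k, 0 < r k)
    (hto0 : Tendsto r atTop (𝓝 0))
    (α β : ℝ) (hα : 1 < α) (hβ : 0 < β)
    (N : ℕ) (hrec : ∀ k, N ≤ k → r (k + 1) ^ α ≤ β * (r k - r (k + 1))) :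
    ∃ c > 0, ∃ N' : ℕ, ∀ k, N' ≤ k → r k ≤ c * (k : ℝ) ^ (1 / (1 - α)) :=
  stmt_11_general r hpos α β hα hβ N hrec
end

section
/- Let (r_k) be a non-increasing sequence of positive real numbers converging to 0, let α ∈ (0, 1] and β > 0, and suppose there exists N ∈ ℕ such that r_k^α ≤ β(r_k − r_{k+1}) for all k ≥ N. Then β > 1 and (r_k) converges linearly to 0 with rate 1 − 1/β: there exists a constant c > 0 such that r_k ≤ c·(1 − 1/β)^k for all k ∈ ℕ. -/
/-!
Once `r k ≤ 1` we have `r k ≤ r k ^ α`, so the hypothesis becomes the linear recursion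
`r k ≤ β (r k - r (k + 1))`, i.e. `β r (k + 1) ≤ (β - 1) r k`. Positivity of the terms forces
`β > 1`, and then `r (k + 1) ≤ (1 - 1/β) r k` eventually, which is linear convergence; the
finitely many earlier terms only affect the constant.
-/

open Filter Topology

theorem one_lt_of_le_mul_sub {a b β : ℝ} (hβ : 0 < β) (ha : 0 ≤ a) (hb : 0 < b)
    (h : a ≤ β * (a - b)) : 1 < β := by
  nlinarith

theorem le_one_sub_div_mul_of_le_mul_sub {a b β : ℝ} (hβ : 0 < β) (h : a ≤ β * (a - b)) :
    b ≤ (1 - 1 / β) * a := by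
  rw [one_sub_div hβ.ne', div_mul_eq_mul_div, le_div_iff₀ hβ]
  linarith

theorem exists_pos_forall_le_mul_pow_of_le_mul {r : ℕ → ℝ} {q : ℝ} {K : ℕ}
    (hr : ∀ k, 0 ≤ r k) (hq : 0 < q) (hstep : ∀ k, K ≤ k → r (k + 1) ≤ q * r k) :
    ∃ c > 0, ∀ k, r k ≤ c * q ^ k := by
  set S := ∑ j ∈ Finset.range (K + 1), r j / q ^ j
  have hterm : ∀ j ≤ K, r j / q ^ j ≤ S := fun j hj =>
    Finset.single_le_sum (fun i _ => div_nonneg (hr i) (pow_nonneg hq.le i))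
      (Finset.mem_range.2 (Nat.lt_succ_of_le hj))
  have hquot : ∀ k, r k / q ^ k ≤ S := by
    intro k
    rcases le_total k K with hk | hk
    · exact hterm k hk
    obtain ⟨n, rfl⟩ := Nat.exists_eq_add_of_le hk
    have hgeom : r (K + n) ≤ q ^ n * r K :=
      le_geom (u := fun n => r (K + n)) hq.le n fun j _ => hstep (K + j) (Nat.le_add_right K j)
    calc r (K + n) / q ^ (K + n) ≤ q ^ n * r K / q ^ (K + n) := by gcongr
      _ = r K / q ^ K := by rw [pow_add]; field_simp
      _ ≤ S := hterm K le_rfl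
  have hS : 0 ≤ S := (div_nonneg (hr K) (pow_nonneg hq.le K)).trans (hterm K le_rfl)
  refine ⟨1 + S, by positivity, fun k => ?_⟩
  have hk := (div_le_iff₀ (pow_pos hq k)).1 (hquot k)
  nlinarith [pow_pos hq k]

theorem stmt_12_general
    (r : ℕ → ℝ) (hpos : ∀ k, 0 < r k)
    (hto0 : Tendsto r atTop (𝓝 0))
    (α β : ℝ) (hα : α ∈ Set.Ioc (0 : ℝ) 1) (hβ : 0 < β)
    (N : ℕ) (hrec : ∀ k, N ≤ k → r k ^ α ≤ β * (r k - r (k + 1))) :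
    1 < β ∧ ∃ c > 0, ∀ k : ℕ, r k ≤ c * (1 - 1 / β) ^ k := by
  obtain ⟨M, hM⟩ := (hto0.eventually (eventually_le_nhds zero_lt_one)).exists_forall_of_atTop
  have hlin : ∀ k, max N M ≤ k → r k ≤ β * (r k - r (k + 1)) := fun k hk =>
    (Real.self_le_rpow_of_le_one (hpos k).le (hM k (le_of_max_le_right hk)) hα.2).trans
      (hrec k (le_of_max_le_left hk))
  have hβ1 : 1 < β := one_lt_of_le_mul_sub hβ (hpos _).le (hpos _) (hlin _ le_rfl)
  refine ⟨hβ1, exists_pos_forall_le_mul_pow_of_le_mul (fun k => (hpos k).le) ?_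
    fun k hk => le_one_sub_div_mul_of_le_mul_sub hβ (hlin k hk)⟩
  exact sub_pos.2 ((div_lt_one hβ).2 hβ1)

/-- Lemma on convergence rates (`r_k^α ≤ β(r_k − r_{k+1})`),
case `α ∈ (0,1]`: `β > 1` and linear convergence with rate `1 − 1/β`. -/
theorem stmt_12
    (r : ℕ → ℝ) (hmono : ∀ k, r (k + 1) ≤ r k) (hpos : ∀ k, 0 < r k)
    (hto0 : Tendsto r atTop (𝓝 0))
    (α β : ℝ) (hα : α ∈ Set.Ioc (0 : ℝ) 1) (hβ : 0 < β)
    (N : ℕ) (hrec : ∀ k, N ≤ k → r k ^ α ≤ β * (r k - r (k + 1))) :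
    1 < β ∧ ∃ c > 0, ∀ k : ℕ, r k ≤ c * (1 - 1 / β) ^ k :=
  stmt_12_general r hpos hto0 α β hα hβ N hrec
end

section
/- Let (r_k) be a non-increasing sequence of positive real numbers converging to 0, let α > 1 and β > 0, and suppose there exists N ∈ ℕ such that r_k^α ≤ β(r_k − r_{k+1}) for all k ≥ N. Then (r_k) converges sublinearly to 0 with rate O(k^{1/(1−α)}): there exist a constant c > 0 and N′ ∈ ℕ such that r_k ≤ c·k^{1/(1−α)} for all k ≥ N′. -/
open Filter Topology

private lemma key_convex (α : ℝ) (hα : 1 < α) {x y : ℝ} (hy : 0 < y) (hxy : y ≤ x) :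
    x ^ (1 - α) + (α - 1) * x ^ (-α) * (x - y) ≤ y ^ (1 - α) := by
  have hx : 0 < x := hy.trans_le hxy
  set u := x / y with hu_def
  have hu : 1 ≤ u := (one_le_div hy).2 hxy
  have hu0 : 0 < u := lt_of_lt_of_le one_pos hu
  have hb : 1 + α * (u - 1) ≤ u ^ α := by
    have h := one_add_mul_self_le_rpow_one_add (s := u - 1) (by linarith) hα.le
    simpa using h
  have e1 : u ^ (1 - α) * u ^ α = u := by
    rw [← Real.rpow_add hu0]; norm_num
  have e2 : u ^ (-α) * u ^ α = 1 := by
    rw [← Real.rpow_add hu0]; norm_num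
  have key' : u ^ (1 - α) + (α - 1) * u ^ (-α) * (u - 1) ≤ 1 := by
    have hua : 0 < u ^ α := Real.rpow_pos_of_pos hu0 α
    rw [← mul_le_mul_iff_of_pos_right hua, one_mul]
    calc (u ^ (1 - α) + (α - 1) * u ^ (-α) * (u - 1)) * u ^ α
        = u ^ (1 - α) * u ^ α + (α - 1) * (u ^ (-α) * u ^ α) * (u - 1) := by ring
      _ = u + (α - 1) * 1 * (u - 1) := by rw [e1, e2]
      _ = 1 + α * (u - 1) := by ring
      _ ≤ u ^ α := hb
  have hxuy : x = u * y := by rw [hu_def, div_mul_cancel₀ x hy.ne']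
  rw [hxuy, Real.mul_rpow hu0.le hy.le, Real.mul_rpow hu0.le hy.le]
  have hy2 : y ^ (1 - α) = y ^ (-α) * y := by
    rw [← Real.rpow_add_one hy.ne' (-α)]; ring_nf
  rw [hy2]
  calc u ^ (1 - α) * (y ^ (-α) * y) + (α - 1) * (u ^ (-α) * y ^ (-α)) * (u * y - y)
      = (y ^ (-α) * y) * (u ^ (1 - α) + (α - 1) * u ^ (-α) * (u - 1)) := by ring
    _ ≤ (y ^ (-α) * y) * 1 := by
        apply mul_le_mul_of_nonneg_left key'
        positivity
    _ = y ^ (-α) * y := mul_one _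

/-- Lemma on convergence rates (`r_k^α ≤ β(r_k − r_{k+1})`),
case `α > 1`: sublinear convergence `O(k^{1/(1−α)})`. -/
theorem stmt_13
    (r : ℕ → ℝ) (hmono : ∀ k, r (k + 1) ≤ r k) (hpos : ∀ k, 0 < r k)
    (hto0 : Tendsto r atTop (𝓝 0))
    (α β : ℝ) (hα : 1 < α) (hβ : 0 < β)
    (N : ℕ) (hrec : ∀ k, N ≤ k → r k ^ α ≤ β * (r k - r (k + 1))) :
    ∃ c > 0, ∃ N' : ℕ, ∀ k, N' ≤ k → r k ≤ c * (k : ℝ) ^ (1 / (1 - α)) := by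
  have h1α : (1 : ℝ) - α < 0 := by linarith
  -- step inequality
  have step : ∀ k, N ≤ k → r k ^ (1 - α) + (α - 1) / β ≤ r (k + 1) ^ (1 - α) := by
    intro k hk
    have hkey := key_convex α hα (hpos (k + 1)) (hmono k)
    have hrpos : 0 < r k := hpos k
    have hna : 0 < r k ^ (-α) := Real.rpow_pos_of_pos hrpos _
    have ecancel : r k ^ (-α) * r k ^ α = 1 := by
      rw [← Real.rpow_add hrpos]; norm_num
    have hdiff : r k ^ α / β ≤ r k - r (k + 1) := by
      rw [div_le_iff₀ hβ]
      linarith [hrec k hk, mul_comm β (r k - r (k + 1))]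
    have h2 : (1 : ℝ) / β ≤ r k ^ (-α) * (r k - r (k + 1)) := by
      calc (1 : ℝ) / β = r k ^ (-α) * (r k ^ α / β) := by
            rw [← mul_div_assoc, ecancel]
        _ ≤ r k ^ (-α) * (r k - r (k + 1)) :=
            mul_le_mul_of_nonneg_left hdiff hna.le
    have h3 : (α - 1) / β ≤ (α - 1) * r k ^ (-α) * (r k - r (k + 1)) := by
      have := mul_le_mul_of_nonneg_left h2 (by linarith : (0:ℝ) ≤ α - 1)
      calc (α - 1) / β = (α - 1) * (1 / β) := by ring
        _ ≤ (α - 1) * (r k ^ (-α) * (r k - r (k + 1))) := this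
        _ = (α - 1) * r k ^ (-α) * (r k - r (k + 1)) := by ring
    linarith
  -- induction
  have hsum : ∀ m : ℕ, (m : ℝ) * ((α - 1) / β) ≤ r (N + m) ^ (1 - α) := by
    intro m
    induction m with
    | zero =>
        simp
        exact (Real.rpow_pos_of_pos (hpos N) _).le
    | succ m ih =>
        have hst := step (N + m) (Nat.le_add_right N m)
        have : N + (m + 1) = (N + m) + 1 := by ring
        rw [this]
        push_cast
        linarith
  set A : ℝ := (α - 1) / (2 * β) with hA_def
  have hA : 0 < A := div_pos (by linarith) (by linarith)
  refine ⟨A ^ (1 / (1 - α)), Real.rpow_pos_of_pos hA _, max (2 * N) 1, ?_⟩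
  intro k hk
  have hk1 : 1 ≤ k := le_trans (le_max_right _ _) hk
  have hk2N : 2 * N ≤ k := le_trans (le_max_left _ _) hk
  have hkpos : (0 : ℝ) < k := by exact_mod_cast hk1
  -- lower bound on r k ^ (1-α)
  have hlow : A * k ≤ r k ^ (1 - α) := by
    have hNk : N ≤ k := by omega
    obtain ⟨m, rfl⟩ := Nat.exists_eq_add_of_le hNk
    have hm : ((N + m : ℕ) : ℝ) / 2 ≤ (m : ℝ) := by
      have : N ≤ m := by omega
      have : (N : ℝ) ≤ (m : ℝ) := by exact_mod_cast this
      push_cast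
      linarith
    calc A * ((N + m : ℕ) : ℝ) = (((N + m : ℕ) : ℝ) / 2) * ((α - 1) / β) := by
          rw [hA_def]; ring
      _ ≤ (m : ℝ) * ((α - 1) / β) := by
          apply mul_le_mul_of_nonneg_right hm
          exact le_of_lt (div_pos (by linarith) hβ)
      _ ≤ r (N + m) ^ (1 - α) := hsum m
  have hAk : 0 < A * k := by positivity
  have hinv : (r k ^ (1 - α)) ^ (1 / (1 - α)) = r k := by
    rw [one_div, Real.rpow_rpow_inv (hpos k).le (by linarith)]
  calc r k = (r k ^ (1 - α)) ^ (1 / (1 - α)) := hinv.symm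
    _ ≤ (A * k) ^ (1 / (1 - α)) := by
        apply Real.rpow_le_rpow_of_nonpos hAk hlow
        apply div_nonpos_of_nonneg_of_nonpos
        · norm_num
        · linarith
    _ = A ^ (1 / (1 - α)) * (k : ℝ) ^ (1 / (1 - α)) := Real.mul_rpow hA.le hkpos.le
end

section
/- Let (r_k) be a non-increasing sequence of non-negative real numbers converging to 0, let a > 0, c > 0 and b ≥ 1, and suppose there exists N ∈ ℕ such that r_k ≤ c(r_{k−1} − r_k) + a(r_k − r_{k+1})^b for all k ≥ N. Then (r_k) converges linearly to 0: there exist q ∈ (0, 1), a constant C > 0 and N′ ∈ ℕ such that r_k ≤ C·q^k for all k ≥ N′. -/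
/-!
Once `r_k < 1`, the increments `r_k - r_{k+1}` lie in `[0, 1]`, so `(r_k - r_{k+1})^b` is at most
`r_k - r_{k+1}` and the recursion becomes linear. For the linear recursion the quantity
`u_k = c r_k + a r_{k+1}` satisfies `r_{k+1} ≤ u_k - u_{k+1}` and `u_{k+1} ≤ (c + a) r_{k+1}`, so it
contracts by the factor `q = (c + a) / (1 + c + a)`; finally `c r_k ≤ u_k`.
-/

open Filter Topology

theorem le_div_pow_mul_pow_of_succ_le_mul {u : ℕ → ℝ} {q : ℝ} {M : ℕ} (hq : 0 < q)
    (h : ∀ k, M ≤ k → u (k + 1) ≤ q * u k) (k : ℕ) (hk : M ≤ k) :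
    u k ≤ u M / q ^ M * q ^ k := by
  obtain ⟨n, rfl⟩ := Nat.exists_eq_add_of_le hk
  have hgeom : u (M + n) ≤ q ^ n * u M :=
    le_geom (u := fun n ↦ u (M + n)) hq.le n fun k _ ↦ h (M + k) (Nat.le_add_right M k)
  calc u (M + n) ≤ q ^ n * u M := hgeom
    _ = u M / q ^ M * q ^ (M + n) := by field_simp; ring

theorem lyapunov_succ_le_mul {r₀ r₁ r₂ a c : ℝ} (ha : 0 ≤ a) (hc : 0 ≤ c) (h₂₁ : r₂ ≤ r₁)
    (h : r₁ ≤ c * (r₀ - r₁) + a * (r₁ - r₂)) :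
    c * r₁ + a * r₂ ≤ (c + a) / (1 + c + a) * (c * r₀ + a * r₁) := by
  rw [div_mul_eq_mul_div, le_div_iff₀ (by positivity)]
  nlinarith [mul_le_mul_of_nonneg_left h₂₁ ha, mul_le_mul_of_nonneg_left h (add_nonneg hc ha)]

theorem eventually_linear_recursion_of_rpow_recursion {r : ℕ → ℝ} {a c b : ℝ} {N : ℕ}
    (hmono : ∀ k, r (k + 1) ≤ r k) (hnonneg : ∀ k, 0 ≤ r k) (hto0 : Tendsto r atTop (𝓝 0))
    (ha : 0 ≤ a) (hb : 1 ≤ b)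
    (hrec : ∀ k, N ≤ k →
      r (k + 1) ≤ c * (r k - r (k + 1)) + a * (r (k + 1) - r (k + 2)) ^ b) :
    ∀ᶠ k in atTop, r (k + 1) ≤ c * (r k - r (k + 1)) + a * (r (k + 1) - r (k + 2)) := by
  have hsmall : ∀ᶠ k in atTop, r (k + 1) ≤ 1 :=
    (tendsto_add_atTop_iff_nat 1).2 hto0 |>.eventually (ge_mem_nhds one_pos)
  filter_upwards [hsmall, eventually_ge_atTop N] with k hk₁ hkN
  have hdiff : (r (k + 1) - r (k + 2)) ^ b ≤ r (k + 1) - r (k + 2) :=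
    Real.rpow_le_self_of_le_one (sub_nonneg.2 (hmono _)) (by linarith [hnonneg (k + 2)]) hb
  linarith [hrec k hkN, mul_le_mul_of_nonneg_left hdiff ha]

/-- Lemma on convergence rates for
`r_k ≤ c(r_{k−1} − r_k) + a(r_k − r_{k+1})^b`, case `b ≥ 1`: linear convergence.
(The recursion is stated with shifted index `k+1` to avoid natural subtraction.) -/
theorem stmt_14
    (r : ℕ → ℝ) (hmono : ∀ k, r (k + 1) ≤ r k) (hnonneg : ∀ k, 0 ≤ r k)
    (hto0 : Tendsto r atTop (𝓝 0))
    (a c b : ℝ) (ha : 0 < a) (hc : 0 < c) (hb : 1 ≤ b)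
    (N : ℕ)
    (hrec : ∀ k, N ≤ k →
      r (k + 1) ≤ c * (r k - r (k + 1)) + a * (r (k + 1) - r (k + 2)) ^ b) :
    ∃ q ∈ Set.Ioo (0 : ℝ) 1, ∃ C > 0, ∃ N' : ℕ, ∀ k, N' ≤ k → r k ≤ C * q ^ k := by
  set q : ℝ := (c + a) / (1 + c + a)
  have hq : q ∈ Set.Ioo (0 : ℝ) 1 := ⟨by positivity, (div_lt_one (by positivity)).2 (by linarith)⟩
  set u : ℕ → ℝ := fun k ↦ c * r k + a * r (k + 1)
  obtain ⟨M, hlin⟩ := eventually_atTop.1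
    (eventually_linear_recursion_of_rpow_recursion hmono hnonneg hto0 ha.le hb hrec)
  have hgeom : ∀ k, M ≤ k → u k ≤ u M / q ^ M * q ^ k :=
    le_div_pow_mul_pow_of_succ_le_mul hq.1 fun k hk ↦
      lyapunov_succ_le_mul ha.le hc.le (hmono _) (hlin k hk)
  refine ⟨q, hq, max (u M / q ^ M / c) 1, by positivity, M, fun k hk ↦ ?_⟩
  calc r k ≤ u k / c := (le_div_iff₀ hc).2 (by nlinarith [hnonneg (k + 1)])
    _ ≤ u M / q ^ M * q ^ k / c := by gcongr; exact hgeom k hk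
    _ = u M / q ^ M / c * q ^ k := by ring
    _ ≤ max (u M / q ^ M / c) 1 * q ^ k := by gcongr; exact le_max_left _ _
end

section
/- Let (r_k) be a non-increasing sequence of non-negative real numbers converging to 0, let a > 0, c > 0 and b ∈ (0, 1), and suppose there exists N ∈ ℕ such that r_k ≤ c(r_{k−1} − r_k) + a(r_k − r_{k+1})^b for all k ≥ N. Then (r_k) converges sublinearly to 0 with rate O(k^{b/(b−1)}): there exist a constant C > 0 and N′ ∈ ℕ such that r_k ≤ C·k^{b/(b−1)} for all k ≥ N′. -/
open Real Filter Topology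

/-- Key polynomial inequality from Bernoulli. -/
lemma aux_key {q x y : ℝ} (hq : 0 < q) (hx : 0 < x) (hxy : x ≤ y) :
    q * x ^ q * (y - x) ≤ (y ^ q - x ^ q) * y := by
  have hy : 0 < y := hx.trans_le hxy
  have hxq : (0:ℝ) < x ^ q := Real.rpow_pos_of_pos hx q
  have hyq : (0:ℝ) < y ^ q := Real.rpow_pos_of_pos hy q
  have hxyq : x ^ q ≤ y ^ q := Real.rpow_le_rpow hx.le hxy hq.le
  rcases le_total q 1 with hq1 | hq1
  · have hs : (-1:ℝ) ≤ x / y - 1 := by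
      have : (0:ℝ) ≤ x / y := by positivity
      linarith
    have hber := rpow_one_add_le_one_add_mul_self hs hq.le hq1
    have hrw : 1 + (x / y - 1) = x / y := by ring
    rw [hrw, Real.div_rpow hx.le hy.le] at hber
    -- x^q / y^q ≤ 1 + q * (x/y - 1)
    have h1 : x ^ q * y ≤ y ^ q * (y + q * (x - y)) := by
      have := mul_le_mul_of_nonneg_left hber hyq.le
      rw [mul_div_cancel₀ _ hyq.ne'] at this
      calc x ^ q * y ≤ y ^ q * (1 + q * (x / y - 1)) * y := by
            exact mul_le_mul_of_nonneg_right this hy.le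
        _ = y ^ q * (y + q * (x - y)) := by field_simp
    nlinarith [mul_nonneg (mul_nonneg hq.le (sub_nonneg.mpr hxyq)) (sub_nonneg.mpr hxy)]
  · have hs : (-1:ℝ) ≤ y / x - 1 := by
      have : (0:ℝ) ≤ y / x := by positivity
      linarith
    have hber := one_add_mul_self_le_rpow_one_add hs hq1
    have hrw : 1 + (y / x - 1) = y / x := by ring
    rw [hrw, Real.div_rpow hy.le hx.le] at hber
    -- 1 + q * (y/x - 1) ≤ y^q / x^q
    have h1 : x ^ q * (x + q * (y - x)) ≤ y ^ q * x := by
      have := mul_le_mul_of_nonneg_left hber hxq.le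
      rw [mul_div_cancel₀ _ hxq.ne'] at this
      calc x ^ q * (x + q * (y - x)) = x ^ q * (1 + q * (y / x - 1)) * x := by
            field_simp
        _ ≤ y ^ q * x := mul_le_mul_of_nonneg_right this hx.le
    nlinarith [mul_nonneg (mul_nonneg hq.le hxq.le) (sub_nonneg.mpr hxy)]

/-- Tangent-line inequality for `t ↦ t ^ (-q)`. -/
lemma aux_tangent {q x y : ℝ} (hq : 0 < q) (hx : 0 < x) (hxy : x ≤ y) :
    q * (y - x) * y ^ (-(q+1)) ≤ x ^ (-q) - y ^ (-q) := by
  have hy : 0 < y := hx.trans_le hxy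
  have hxq : (0:ℝ) < x ^ q := Real.rpow_pos_of_pos hx q
  have hyq : (0:ℝ) < y ^ q := Real.rpow_pos_of_pos hy q
  have hkey := aux_key hq hx hxy
  have e1 : x ^ (-q) = (x ^ q)⁻¹ := by rw [Real.rpow_neg hx.le]
  have e2 : y ^ (-q) = (y ^ q)⁻¹ := by rw [Real.rpow_neg hy.le]
  have e3 : y ^ (-(q+1)) = (y ^ q * y)⁻¹ := by
    rw [Real.rpow_neg hy.le, Real.rpow_add hy, Real.rpow_one]
  rw [e1, e2, e3]
  rw [mul_inv, ← mul_assoc, inv_eq_one_div, inv_eq_one_div, inv_eq_one_div,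
    div_sub_div _ _ hxq.ne' hyq.ne', mul_one_div, mul_one_div,
    div_le_div_iff₀ (by positivity) (by positivity)]
  calc q * (y - x) / y ^ q * (x ^ q * y ^ q)
      = (q * x ^ q * (y - x)) := by field_simp
    _ ≤ (y ^ q - x ^ q) * y := hkey
    _ = (1 * y ^ q - x ^ q * 1) * y := by ring

lemma aux_step {b q M x y : ℝ} (hb0 : 0 < b) (hb1 : b < 1) (hq : q = (1-b)/b) (hM : 0 < M)
    (hx : 0 < x) (hxy : x ≤ y) (hy1 : y ≤ 1) (hrec : x ≤ M * (y - x) ^ b) :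
    y ^ (-q) + min (2 ^ q - 1) (q * (2*M) ^ (-b⁻¹)) ≤ x ^ (-q) := by
  have hy : 0 < y := hx.trans_le hxy
  have hqpos : 0 < q := by rw [hq]; exact div_pos (by linarith) hb0
  have hq1 : q + 1 = b⁻¹ := by rw [hq]; field_simp; ring
  rcases le_or_gt (2*x) y with hcase | hcase
  · -- easy case: x ≤ y/2
    have h1 : (y/2) ^ (-q) ≤ x ^ (-q) :=
      Real.rpow_le_rpow_of_nonpos hx (by linarith) (by linarith)
    have h2 : (y/2) ^ (-q) = y ^ (-q) * 2 ^ q := by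
      rw [Real.div_rpow hy.le (by norm_num), Real.rpow_neg (by norm_num : (0:ℝ) ≤ 2)]
      field_simp
    have h3 : 1 ≤ y ^ (-q) :=
      Real.one_le_rpow_of_pos_of_le_one_of_nonpos hy hy1 (by linarith)
    have h4 : (1:ℝ) ≤ 2 ^ q := by
      have := Real.rpow_le_rpow_of_exponent_le (by norm_num : (1:ℝ) ≤ 2) hqpos.le
      simpa using this
    have h5 : min (2 ^ q - 1) (q * (2*M) ^ (-b⁻¹)) ≤ 2 ^ q - 1 := min_le_left _ _
    rw [h2] at h1
    have h6 : (0:ℝ) ≤ (y ^ (-q) - 1) * (2 ^ q - 1) :=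
      mul_nonneg (by linarith) (by linarith)
    linarith
  · -- hard case: y < 2x, use tangent inequality
    have hd : 0 ≤ y - x := by linarith
    have hdlow : (x/M) ^ (b⁻¹) ≤ y - x := by
      have hxm : x / M ≤ (y - x) ^ b := (div_le_iff₀ hM).mpr (by linarith [mul_comm M ((y-x)^b)])
      have h := Real.rpow_le_rpow (div_nonneg hx.le hM.le) hxm (inv_nonneg.mpr hb0.le)
      rwa [Real.rpow_rpow_inv hd hb0.ne'] at h
    have htan := aux_tangent hqpos hx hxy
    rw [show -(q+1) = -b⁻¹ by rw [hq1]] at htan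
    have h2 : (2*x) ^ (-b⁻¹) ≤ y ^ (-b⁻¹) :=
      Real.rpow_le_rpow_of_nonpos hy hcase.le (neg_nonpos.mpr (inv_nonneg.mpr hb0.le))
    have hprod : (2*M) ^ (-b⁻¹) ≤ (y - x) * y ^ (-b⁻¹) := by
      have hcalc : (2*M) ^ (-b⁻¹) = (x/M) ^ (b⁻¹) * (2*x) ^ (-b⁻¹) := by
        rw [Real.rpow_neg (mul_pos two_pos hM).le, Real.rpow_neg (mul_pos two_pos hx).le,
          ← Real.inv_rpow (mul_pos two_pos hx).le,
          ← Real.mul_rpow (div_nonneg hx.le hM.le) (inv_nonneg.mpr (mul_pos two_pos hx).le),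
          ← Real.inv_rpow (mul_pos two_pos hM).le]
        congr 1
        field_simp
      rw [hcalc]
      exact mul_le_mul hdlow h2 (by positivity) hd
    have h6 : min (2 ^ q - 1) (q * (2*M) ^ (-b⁻¹)) ≤ q * (2*M) ^ (-b⁻¹) := min_le_right _ _
    have h7 : q * (2*M) ^ (-b⁻¹) ≤ q * ((y - x) * y ^ (-b⁻¹)) :=
      mul_le_mul_of_nonneg_left hprod hqpos.le
    nlinarith [htan]

/-- Lemma on convergence rates for
`r_k ≤ c(r_{k−1} − r_k) + a(r_k − r_{k+1})^b`, case `b ∈ (0,1)`: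
sublinear convergence `O(k^{b/(b−1)})`.
(The recursion is stated with shifted index `k+1` to avoid natural subtraction.) -/
theorem stmt_15
    (r : ℕ → ℝ) (hmono : ∀ k, r (k + 1) ≤ r k) (hnonneg : ∀ k, 0 ≤ r k)
    (hto0 : Tendsto r atTop (𝓝 0))
    (a c b : ℝ) (ha : 0 < a) (hc : 0 < c) (hb : b ∈ Set.Ioo (0 : ℝ) 1)
    (N : ℕ)
    (hrec : ∀ k, N ≤ k →
      r (k + 1) ≤ c * (r k - r (k + 1)) + a * (r (k + 1) - r (k + 2)) ^ b) :
    ∃ C > 0, ∃ N' : ℕ, ∀ k, N' ≤ k → r k ≤ C * (k : ℝ) ^ (b / (b - 1)) := by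
  obtain ⟨hb0, hb1⟩ := hb
  have hA : Antitone r := antitone_nat_of_succ_le hmono
  obtain ⟨K0, hK0⟩ := Filter.eventually_atTop.mp (hto0.eventually_lt_const one_pos)
  set K := max K0 N with hKdef
  have hrK : r K < 1 := hK0 K (le_max_left _ _)
  have hKN : N ≤ K := le_max_right _ _
  set M := c + a with hMdef
  have hMpos : 0 < M := by positivity
  set q : ℝ := (1-b)/b with hqdef
  have hqpos : 0 < q := div_pos (by linarith) hb0
  set δ : ℝ := min (2 ^ q - 1) (q * (2*M) ^ (-b⁻¹)) with hδdef
  have hδpos : 0 < δ := by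
    apply lt_min
    · have h := Real.rpow_lt_rpow_of_exponent_lt (by norm_num : (1:ℝ) < 2) hqpos
      simp only [Real.rpow_zero] at h
      linarith
    · exact mul_pos hqpos (Real.rpow_pos_of_pos (by positivity) _)
  -- derived recursion
  have hrec2 : ∀ k, K ≤ k → r (k+2) ≤ M * (r k - r (k+2)) ^ b := by
    intro k hk
    have h1 := hrec k (hKN.trans hk)
    have d1 : 0 ≤ r k - r (k+1) := sub_nonneg.mpr (hmono k)
    have d2 : 0 ≤ r (k+1) - r (k+2) := sub_nonneg.mpr (hmono (k+1))
    have dt : 0 ≤ r k - r (k+2) := by linarith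
    have dt1 : r k - r (k+2) ≤ 1 := by
      have h2 : r k ≤ r K := hA hk
      have h3 := hnonneg (k+2)
      linarith
    have hself : (r k - r (k+2)) ≤ (r k - r (k+2)) ^ b := by
      rcases eq_or_lt_of_le dt with h0 | h0
      · rw [← h0, Real.zero_rpow hb0.ne']
      · have h := Real.rpow_le_rpow_of_exponent_ge h0 dt1 hb1.le
        rwa [Real.rpow_one] at h
    have hAb : r k - r (k+1) ≤ (r k - r (k+2)) ^ b := by linarith
    have hBb : (r (k+1) - r (k+2)) ^ b ≤ (r k - r (k+2)) ^ b :=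
      Real.rpow_le_rpow d2 (by linarith) hb0.le
    have hc1 : c * (r k - r (k+1)) ≤ c * (r k - r (k+2)) ^ b :=
      mul_le_mul_of_nonneg_left hAb hc.le
    have ha1 : a * (r (k+1) - r (k+2)) ^ b ≤ a * (r k - r (k+2)) ^ b :=
      mul_le_mul_of_nonneg_left hBb ha.le
    have h4 : r (k+2) ≤ r (k+1) := hmono (k+1)
    have hMeq : M = c + a := hMdef
    nlinarith [hc1, ha1, h1, h4]
  -- the invariant
  have hclaim : ∀ j : ℕ, δ * j * (r (K + 2*j)) ^ q ≤ 1 := by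
    intro j
    induction j with
    | zero => simp
    | succ j ih =>
      have hxy : r (K + 2*(j+1)) ≤ r (K + 2*j) := hA (by omega)
      have hx0 : 0 ≤ r (K + 2*(j+1)) := hnonneg _
      rcases eq_or_lt_of_le hx0 with h0 | h0
      · rw [← h0, Real.zero_rpow hqpos.ne']
        simp
      · have hy0 : 0 < r (K + 2*j) := lt_of_lt_of_le h0 hxy
        have hy1 : r (K + 2*j) ≤ 1 := by
          have h2 : r (K + 2*j) ≤ r K := hA (by omega)
          linarith
        have hidx : K + 2*(j+1) = (K + 2*j) + 2 := by omega
        have hr2 : r (K + 2*(j+1)) ≤ M * (r (K + 2*j) - r (K + 2*(j+1))) ^ b := by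
          rw [hidx]; exact hrec2 (K + 2*j) (by omega)
        have hst := aux_step hb0 hb1 hqdef hMpos h0 hxy hy1 hr2
        have hyq : (0:ℝ) < r (K + 2*j) ^ q := Real.rpow_pos_of_pos hy0 q
        have hxq : (0:ℝ) < r (K + 2*(j+1)) ^ q := Real.rpow_pos_of_pos h0 q
        have ih' : δ * j ≤ (r (K + 2*j)) ^ (-q) := by
          rw [Real.rpow_neg hy0.le, ← one_div]
          exact (le_div_iff₀ hyq).mpr ih
        have hfin : δ * ((j:ℝ)+1) ≤ (r (K + 2*(j+1))) ^ (-q) := by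
          rw [← hδdef] at hst
          linarith
        rw [Real.rpow_neg h0.le, ← one_div] at hfin
        have h5 := (le_div_iff₀ hxq).mp hfin
        push_cast
        linarith
  -- final assembly
  have hbne : b - 1 ≠ 0 := by linarith
  have hbne' : (1:ℝ) - b ≠ 0 := by linarith
  have hqexp : -q⁻¹ = b/(b-1) := by
    rw [hqdef]
    field_simp
    ring
  refine ⟨(δ/4) ^ (b/(b-1)), Real.rpow_pos_of_pos (by positivity) _, 2*K + 2, ?_⟩
  intro k hk
  have hkpos : (0:ℝ) < k := by exact_mod_cast Nat.pos_of_ne_zero (by omega)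
  set j := (k - K)/2 with hjdef
  have hj1 : 1 ≤ j := by omega
  have hle : K + 2*j ≤ k := by omega
  have hk4j : k ≤ 4*j := by omega
  have hjk : (k:ℝ)/4 ≤ j := by
    have : (k:ℝ) ≤ 4*j := by exact_mod_cast hk4j
    linarith
  have hjpos : (0:ℝ) < j := by exact_mod_cast hj1
  have hrk : r k ≤ r (K + 2*j) := hA hle
  have hCpos : (0:ℝ) < (δ/4) ^ (b/(b-1)) := Real.rpow_pos_of_pos (by positivity) _
  have hkb : (0:ℝ) < (k:ℝ) ^ (b/(b-1)) := Real.rpow_pos_of_pos hkpos _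
  rcases eq_or_lt_of_le (hnonneg (K + 2*j)) with h0 | h0
  · nlinarith [hrk, h0, mul_pos hCpos hkb]
  · have hclaimj := hclaim j
    have hδj : (0:ℝ) < δ * j := mul_pos hδpos hjpos
    have h1 : (r (K + 2*j)) ^ q ≤ (δ * j)⁻¹ := by
      rw [← one_div]
      rw [le_div_iff₀ hδj]
      nlinarith [hclaimj]
    have h2 : r (K + 2*j) ≤ (δ * j) ^ (-q⁻¹) := by
      have h3 := Real.rpow_le_rpow (Real.rpow_nonneg h0.le q) h1 (inv_nonneg.mpr hqpos.le)
      rw [Real.rpow_rpow_inv h0.le hqpos.ne'] at h3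
      rwa [Real.inv_rpow hδj.le, ← Real.rpow_neg hδj.le] at h3
    have h4 : (δ*j) ^ (-q⁻¹) ≤ (δ*((k:ℝ)/4)) ^ (-q⁻¹) := by
      apply Real.rpow_le_rpow_of_nonpos (by positivity)
      · nlinarith [hjk]
      · rw [hqexp]
        apply div_nonpos_of_nonneg_of_nonpos hb0.le
        linarith
    have h5 : (δ*((k:ℝ)/4)) ^ (-q⁻¹) = (δ/4) ^ (-q⁻¹) * (k:ℝ) ^ (-q⁻¹) := by
      rw [show δ*((k:ℝ)/4) = (δ/4)*k by ring,
        Real.mul_rpow (by positivity) (Nat.cast_nonneg k)]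
    rw [hqexp] at h2 h4 h5
    calc r k ≤ r (K + 2*j) := hrk
      _ ≤ (δ*j) ^ (b/(b-1)) := h2
      _ ≤ (δ*((k:ℝ)/4)) ^ (b/(b-1)) := h4
      _ = (δ/4) ^ (b/(b-1)) * (k:ℝ) ^ (b/(b-1)) := h5
end

section
/- Let (x^k) be a sequence in E and (Ψ_k) a non-increasing sequence of non-negative real numbers converging to 0 (standing for Ψ_k = f(x^k) − f*). Let θ ∈ (0, 1), and suppose there exist constants D > 0 (D = ρ_g + ρ_h), M > 0, L > 0 and N ∈ ℕ such that for all k ≥ N: Ψ_{k−1} − Ψ_k ≥ (D/2)‖x^{k−1} − x^k‖² (sufficient descent) and Ψ_k^θ ≤ M·L·(1−θ)·‖x^{k−1} − x^k‖ (Łojasiewicz inequality along the DCA sequence with exponent θ). Then: (ii) if θ ∈ (0, 1/2], there exist q ∈ (0, 1) and c > 0 such that Ψ_k ≤ c·q^k for all k, i.e., (Ψ_k) converges linearly to 0; (iii) if θ ∈ (1/2, 1), there exist c > 0 and N′ such that Ψ_k ≤ c·k^{1/(1−2θ)} for all k ≥ N′, i.e., (Ψ_k) converges sublinearly to 0. 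-/
open Filter Topology

/-- Bernoulli-type inequality for negative exponents: `t^{-s} ≥ 1 + s(1-t)`. -/
lemma aux_bern {s t : ℝ} (hs0 : 0 ≤ s) (hs1 : s ≤ 1) (ht0 : 0 < t) (ht1 : t ≤ 1) :
    1 + s * (1 - t) ≤ t ^ (-s) := by
  have hgm : t ^ s * 1 ^ (1 - s) ≤ s * t + (1 - s) * 1 :=
    Real.geom_mean_le_arith_mean2_weighted hs0 (by linarith) ht0.le zero_le_one (by ring)
  rw [Real.one_rpow, mul_one, mul_one] at hgm
  have hts : 0 < t ^ s := Real.rpow_pos_of_pos ht0 s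
  rw [Real.rpow_neg ht0.le, inv_eq_one_div, le_div_iff₀ hts]
  nlinarith [sq_nonneg (s * (1 - t))]

/-- One-step decrease of `Ψ^{-s}`. -/
lemma aux_step_s16 {s C a b : ℝ} (hs0 : 0 < s) (hs1 : s ≤ 1) (hC : 0 < C)
    (hb : 0 < b) (hba : b ≤ a) (hkey : C * b ^ (s + 1) ≤ a - b) :
    a ^ (-s) + min (s * C / 4) ((2 ^ s - 1) * a ^ (-s)) ≤ b ^ (-s) := by
  have ha : 0 < a := hb.trans_le hba
  set t : ℝ := b / a with htdef
  have ht0 : 0 < t := div_pos hb ha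
  have ht1 : t ≤ 1 := (div_le_one ha).2 hba
  have hts : b ^ (-s) = a ^ (-s) * t ^ (-s) := by
    rw [htdef, Real.div_rpow hb.le ha.le, Real.rpow_neg hb.le, Real.rpow_neg ha.le]
    field_simp
  have has : 0 < a ^ (-s) := Real.rpow_pos_of_pos ha _
  rcases le_or_gt (a / 2) b with hhalf | hhalf
  · -- case b ≥ a/2
    have ht2 : 1 / 2 ≤ t := by rw [htdef, le_div_iff₀ ha]; linarith
    have hbern := aux_bern hs0.le hs1 ht0 ht1
    -- b^{-s} ≥ a^{-s} + s * a^{-s} * (1-t)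
    have h1 : a ^ (-s) + s * (a ^ (-s) * (1 - t)) ≤ b ^ (-s) := by
      rw [hts]; nlinarith
    -- a^{-s}*(1-t) = (a - b) * a^{-(s+1)}
    have h2 : a ^ (-s) * (1 - t) = (a - b) * a ^ (-(s+1)) := by
      have : a ^ (-(s+1)) = a ^ (-s) * a⁻¹ := by
        rw [show -(s+1) = -s + (-1) by ring, Real.rpow_add ha, Real.rpow_neg_one]
      rw [this, htdef]; field_simp
    -- (a-b) * a^{-(s+1)} ≥ C * b^{s+1} * a^{-(s+1)} = C * t^{s+1}
    have h3 : C * t ^ (s+1) ≤ (a - b) * a ^ (-(s+1)) := by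
      have hpos : 0 < a ^ (-(s+1)) := Real.rpow_pos_of_pos ha _
      have : C * (b ^ (s+1) * a ^ (-(s+1))) ≤ (a - b) * a ^ (-(s+1)) := by
        rw [← mul_assoc]
        exact mul_le_mul_of_nonneg_right hkey hpos.le
      have ht : b ^ (s+1) * a ^ (-(s+1)) = t ^ (s+1) := by
        rw [htdef, Real.div_rpow hb.le ha.le, Real.rpow_neg ha.le, div_eq_mul_inv]
      rwa [ht] at this
    -- t^{s+1} ≥ (1/2)^{s+1} ≥ 1/4
    have h4 : (1/4 : ℝ) ≤ t ^ (s+1) := by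
      have i1 : ((1:ℝ)/2) ^ (s+1) ≤ t ^ (s+1) :=
        Real.rpow_le_rpow (by norm_num) ht2 (by linarith)
      have i2 : ((1:ℝ)/2) ^ (2:ℝ) ≤ ((1:ℝ)/2) ^ (s+1) :=
        Real.rpow_le_rpow_of_exponent_ge (by norm_num) (by norm_num) (by linarith)
      have i3 : ((1:ℝ)/2) ^ (2:ℝ) = 1/4 := by
        rw [show (2:ℝ) = ((2:ℕ):ℝ) by norm_num, Real.rpow_natCast]; norm_num
      linarith
    rw [h2] at h1
    have : a ^ (-s) + s * C / 4 ≤ b ^ (-s) := by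
      nlinarith [mul_le_mul_of_nonneg_left h3 hs0.le,
        mul_le_mul_of_nonneg_left h4 (by positivity : (0:ℝ) ≤ s * C)]
    have hmin : min (s * C / 4) ((2 ^ s - 1) * a ^ (-s)) ≤ s * C / 4 := min_le_left _ _
    linarith
  · -- case b < a/2 : t < 1/2, so t^{-s} ≥ 2^s
    have h2s : (2:ℝ) ^ s ≤ t ^ (-s) := by
      rw [Real.rpow_neg ht0.le, ← Real.inv_rpow ht0.le]
      apply Real.rpow_le_rpow (by norm_num) _ hs0.le
      rw [le_inv_comm₀ (by norm_num) ht0, htdef]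
      rw [div_le_iff₀ ha] <;> linarith
    have : a ^ (-s) + (2 ^ s - 1) * a ^ (-s) ≤ b ^ (-s) := by
      rw [hts]; nlinarith
    have hmin : min (s * C / 4) ((2 ^ s - 1) * a ^ (-s)) ≤ (2 ^ s - 1) * a ^ (-s) :=
      min_le_right _ _
    linarith

set_option maxHeartbeats 1000000 in
/-- convergence rate of the objective values `Ψ_k = f(xᵏ) − f*` of DCA
under the Kurdyka–Łojasiewicz property with exponent `θ`.
(The two recursive hypotheses are stated with shifted index `k+1` instead of `k−1`.) -/
theorem stmt_16
    {E : Type*} [NormedAddCommGroup E] [InnerProductSpace ℝ E] [FiniteDimensional ℝ E]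
    (x : ℕ → E) (Ψ : ℕ → ℝ)
    (hmono : ∀ k, Ψ (k + 1) ≤ Ψ k) (hnonneg : ∀ k, 0 ≤ Ψ k)
    (hto0 : Tendsto Ψ atTop (𝓝 0))
    (θ : ℝ) (hθ : θ ∈ Set.Ioo (0 : ℝ) 1)
    (D M L : ℝ) (hD : 0 < D) (hM : 0 < M) (hL : 0 < L)
    (N : ℕ)
    (hdesc : ∀ k, N ≤ k → Ψ k - Ψ (k + 1) ≥ D / 2 * ‖x k - x (k + 1)‖ ^ 2)
    (hKL : ∀ k, N ≤ k → Ψ (k + 1) ^ θ ≤ M * L * (1 - θ) * ‖x k - x (k + 1)‖) :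
    (θ ≤ 1 / 2 →
      ∃ q ∈ Set.Ioo (0 : ℝ) 1, ∃ c > 0, ∀ k : ℕ, Ψ k ≤ c * q ^ k) ∧
    (1 / 2 < θ →
      ∃ c > 0, ∃ N' : ℕ, ∀ k, N' ≤ k → Ψ k ≤ c * (k : ℝ) ^ (1 / (1 - 2 * θ))) := by
  obtain ⟨hθ0, hθ1⟩ := hθ
  have hAnt : Antitone Ψ := antitone_nat_of_succ_le hmono
  set A : ℝ := M * L * (1 - θ) with hAdef
  have hA : 0 < A := by rw [hAdef]; exact mul_pos (mul_pos hM hL) (by linarith)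
  set C : ℝ := D / (2 * A ^ 2) with hCdef
  have hC : 0 < C := by rw [hCdef]; exact div_pos hD (by nlinarith)
  -- key recursive inequality
  have key : ∀ k, N ≤ k → C * Ψ (k + 1) ^ (2 * θ) ≤ Ψ k - Ψ (k + 1) := by
    intro k hk
    set n : ℝ := ‖x k - x (k + 1)‖ with hndef
    have hn0 : 0 ≤ n := norm_nonneg _
    have h1 : Ψ (k + 1) ^ θ ≤ A * n := hKL k hk
    have hsq : Ψ (k + 1) ^ (2 * θ) ≤ A ^ 2 * n ^ 2 := by
      have h2 : (Ψ (k + 1) ^ θ) ^ 2 ≤ (A * n) ^ 2 :=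
        pow_le_pow_left₀ (Real.rpow_nonneg (hnonneg _) θ) h1 2
      calc Ψ (k + 1) ^ (2 * θ) = (Ψ (k + 1) ^ θ) ^ 2 := by
            rw [← Real.rpow_natCast (Ψ (k + 1) ^ θ) 2, ← Real.rpow_mul (hnonneg _)]
            norm_num; ring_nf
        _ ≤ (A * n) ^ 2 := h2
        _ = A ^ 2 * n ^ 2 := by ring
    have hd := hdesc k hk
    have hA2 : 0 < A ^ 2 := by positivity
    rw [hCdef]
    rw [div_mul_eq_mul_div, div_le_iff₀ (by positivity)]
    nlinarith
  constructor
  · -- linear rate for θ ≤ 1/2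
    intro hθhalf
    obtain ⟨N₂, hN₂⟩ := (hto0.eventually_lt_const (by norm_num : (0:ℝ) < 1)).exists_forall_of_atTop
    set N₁ : ℕ := max N N₂ with hN₁def
    set q : ℝ := 1 / (1 + C) with hqdef
    have hq0 : 0 < q := by rw [hqdef]; exact div_pos one_pos (by linarith)
    have hq1 : q < 1 := by
      rw [hqdef, div_lt_one (by linarith)]; linarith
    have step : ∀ k, N₁ ≤ k → Ψ (k + 1) ≤ q * Ψ k := by
      intro k hk
      have hkN : N ≤ k := le_trans (le_max_left _ _) hk
      have hkey := key k hkN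
      have hle1 : Ψ (k + 1) ≤ 1 :=
        le_of_lt (hN₂ (k + 1) (le_trans (le_max_right N N₂) (le_trans hk (Nat.le_succ k))))
      have hself : Ψ (k + 1) ≤ Ψ (k + 1) ^ (2 * θ) := by
        rcases eq_or_lt_of_le (hnonneg (k + 1)) with h0 | h0
        · rw [← h0, Real.zero_rpow (by positivity)]
        · calc Ψ (k + 1) = Ψ (k + 1) ^ (1:ℝ) := (Real.rpow_one _).symm
            _ ≤ Ψ (k + 1) ^ (2 * θ) :=
              Real.rpow_le_rpow_of_exponent_ge h0 hle1 (by linarith)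
      have h2 : (1 + C) * Ψ (k + 1) ≤ Ψ k := by nlinarith
      rw [hqdef]
      rw [div_mul_eq_mul_div, le_div_iff₀ (by linarith)]
      linarith
    have geom : ∀ m : ℕ, Ψ (N₁ + m) ≤ Ψ N₁ * q ^ m := by
      intro m
      induction m with
      | zero => simp
      | succ m ih =>
        have := step (N₁ + m) (Nat.le_add_right _ _)
        calc Ψ (N₁ + (m + 1)) = Ψ ((N₁ + m) + 1) := by ring_nf
          _ ≤ q * Ψ (N₁ + m) := this
          _ ≤ q * (Ψ N₁ * q ^ m) := by nlinarith [hnonneg (N₁ + m)]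
          _ = Ψ N₁ * q ^ (m + 1) := by ring
    have hqN : (0:ℝ) < q ^ N₁ := by positivity
    refine ⟨q, ⟨hq0, hq1⟩, (Ψ 0 + 1) / q ^ N₁,
      div_pos (by linarith [hnonneg 0]) hqN, ?_⟩
    intro k
    rcases le_or_gt N₁ k with hk | hk
    · obtain ⟨m, rfl⟩ := Nat.exists_eq_add_of_le hk
      have h1 : Ψ (N₁ + m) ≤ Ψ N₁ * q ^ m := geom m
      have h2 : Ψ N₁ ≤ Ψ 0 := hAnt (Nat.zero_le _)
      have h3 : (Ψ 0 + 1) / q ^ N₁ * q ^ (N₁ + m) = (Ψ 0 + 1) * q ^ m := by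
        rw [pow_add]; field_simp
      rw [h3]
      nlinarith [pow_pos hq0 m]
    · have h1 : Ψ k ≤ Ψ 0 := hAnt (Nat.zero_le _)
      have h2 : q ^ N₁ ≤ q ^ k := pow_le_pow_of_le_one hq0.le hq1.le hk.le
      have h3 : (0:ℝ) < q ^ k := by positivity
      rw [div_mul_eq_mul_div, le_div_iff₀ hqN]
      nlinarith [hnonneg k]
  · -- sublinear rate for θ > 1/2
    intro hθhalf
    set e : ℝ := 1 / (1 - 2 * θ) with hedef
    by_cases hzero : Ψ N = 0
    · refine ⟨1, one_pos, N, fun k hk => ?_⟩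
      have h1 : Ψ k = 0 := le_antisymm (hzero ▸ hAnt hk) (hnonneg k)
      rw [h1, one_mul]
      exact Real.rpow_nonneg (Nat.cast_nonneg k) e
    · have hΨN : 0 < Ψ N := lt_of_le_of_ne (hnonneg N) (Ne.symm hzero)
      set s : ℝ := 2 * θ - 1 with hsdef
      have hs0 : 0 < s := by rw [hsdef]; linarith
      have hs1 : s ≤ 1 := by rw [hsdef]; linarith
      set μ : ℝ := min (s * C / 4) ((2 ^ s - 1) * Ψ N ^ (-s)) with hμdef
      have h2s : (1:ℝ) < 2 ^ s := Real.one_lt_rpow_iff_of_pos (by norm_num) |>.2 (Or.inl ⟨by norm_num, hs0⟩)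
      have hΨNs : 0 < Ψ N ^ (-s) := Real.rpow_pos_of_pos hΨN _
      have hμ : 0 < μ := lt_min (by positivity) (mul_pos (by linarith) hΨNs)
      -- one-step estimate
      have step : ∀ k, N ≤ k → 0 < Ψ (k + 1) → Ψ k ^ (-s) + μ ≤ Ψ (k + 1) ^ (-s) := by
        intro k hk hb
        have hba : Ψ (k + 1) ≤ Ψ k := hmono k
        have ha : 0 < Ψ k := hb.trans_le hba
        have hkey : C * Ψ (k + 1) ^ (s + 1) ≤ Ψ k - Ψ (k + 1) := by
          have : s + 1 = 2 * θ := by rw [hsdef]; ring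
          rw [this]; exact key k hk
        have := aux_step_s16 hs0 hs1 hC hb hba hkey
        have hmono2 : Ψ N ^ (-s) ≤ Ψ k ^ (-s) :=
          Real.rpow_le_rpow_of_nonpos ha (hAnt hk) (by linarith)
        have hμle : μ ≤ min (s * C / 4) ((2 ^ s - 1) * Ψ k ^ (-s)) := by
          apply le_min (min_le_left _ _)
          refine le_trans (min_le_right _ _) ?_
          nlinarith
        linarith
      -- telescoping
      have tel : ∀ m : ℕ, 0 < Ψ (N + m) → Ψ N ^ (-s) + μ * m ≤ Ψ (N + m) ^ (-s) := by
        intro m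
        induction m with
        | zero => intro _; simp
        | succ m ih =>
          intro hpos
          have hpos' : 0 < Ψ (N + m) :=
            lt_of_lt_of_le hpos (by rw [show N + (m+1) = (N + m) + 1 from rfl]; exact hmono _)
          have h1 := ih hpos'
          have h2 := step (N + m) (Nat.le_add_right _ _) (by rwa [show N + (m+1) = (N + m) + 1 from rfl] at hpos)
          rw [show N + (m+1) = (N + m) + 1 from rfl]
          push_cast
          push_cast at h1
          linarith
      refine ⟨(μ / 2) ^ e, Real.rpow_pos_of_pos (by positivity) e, max (2 * N) 1, ?_⟩
      intro k hk
      have hk1 : 1 ≤ k := le_trans (le_max_right _ _) hk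
      have hk2N : 2 * N ≤ k := le_trans (le_max_left _ _) hk
      have hkN : N ≤ k := le_trans (Nat.le_mul_of_pos_left N (by norm_num)) hk2N
      have hkpos : (0:ℝ) < (k:ℝ) := by exact_mod_cast hk1
      rcases eq_or_lt_of_le (hnonneg k) with h0 | h0
      · rw [← h0]
        have : (0:ℝ) ≤ (k:ℝ) ^ e := Real.rpow_nonneg (Nat.cast_nonneg k) e
        positivity
      · obtain ⟨m, rfl⟩ := Nat.exists_eq_add_of_le hkN
        have htel := tel m h0
        have hcastNM : ((N + m : ℕ):ℝ) = (N:ℝ) + (m:ℝ) := by push_cast; ring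
        have hYpos : (0:ℝ) < μ / 2 * ((N + m : ℕ):ℝ) := mul_pos (half_pos hμ) hkpos
        have hNm : (N:ℝ) ≤ (m:ℝ) := by exact_mod_cast (by omega : N ≤ m)
        have hμN : μ * (N:ℝ) ≤ μ * (m:ℝ) := mul_le_mul_of_nonneg_left hNm hμ.le
        have hY : μ / 2 * ((N + m : ℕ):ℝ) ≤ Ψ (N + m) ^ (-s) := by
          rw [hcastNM]
          linarith [hΨNs.le]
        have he0 : e ≤ 0 := by
          rw [hedef]
          apply le_of_lt
          apply div_neg_of_pos_of_neg one_pos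
          linarith
       -- apply antitone rpow with negative exponent
        have hmain : (Ψ (N + m) ^ (-s)) ^ e ≤ (μ / 2 * ((N + m : ℕ):ℝ)) ^ e :=
          Real.rpow_le_rpow_of_nonpos hYpos hY he0
        have hleft : (Ψ (N + m) ^ (-s)) ^ e = Ψ (N + m) := by
          rw [← Real.rpow_mul (hnonneg _)]
          have hne : 1 - 2 * θ ≠ 0 := ne_of_lt (by linarith : 1 - 2 * θ < 0)
          have hse : -s * e = 1 := by
            have h1 : -s = 1 - 2 * θ := by rw [hsdef]; ring
            rw [h1, hedef, mul_one_div, div_self hne]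
          rw [hse, Real.rpow_one]
        have hright : (μ / 2 * ((N + m : ℕ):ℝ)) ^ e = (μ / 2) ^ e * ((N + m : ℕ):ℝ) ^ e :=
          Real.mul_rpow (half_pos hμ).le (Nat.cast_nonneg _)
        rw [hleft, hright] at hmain
        exact hmain
end
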